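/- arXiv:1911.04837 — 12 statements merged into one kernel-verified Lean document; each statement's English description precedes it below -/
import Mathlib

section
/- Let (F,σ) be a difference field with constant field K, and let (F(t),σ) be a difference field extension with σ(t) = α·t + β (where either α = 1, or α ∈ F* and β = 0) such that const(F(t),σ) = const(F,σ). If a ∈ F(t) \ F and m ≥ 1, then the product a·σ(a)·σ²(a)···σ^m(a) does not lie in F. -/
/-!
Write `a = p / q` in lowest terms and let `τ` be the automorphism `p ↦ pᵟ(αX + β)` of `F[X]`
induced by `σ`. If `∏ σⁱ a ∈ F`, the products `∏_{i ≤ m} τⁱ p` and `∏_{i ≤ m} τⁱ q` are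
associated. Take an irreducible factor of `p q` and move along its `τ`-orbit to the last point `ρ`
still dividing `p q`, say `ρ ∣ p`: then `τᵐ ρ` divides some `τⁱ q`, so `τᵐ⁻ⁱ ρ ∣ q`, contradicting
coprimality (`i = m`) or the choice of `ρ` (`i < m`) — unless the orbit is periodic.
If `τᵏ π = w π`, then `r = π τ(π) ⋯ τᵏ⁻¹(π)` satisfies `τ r = w r`, and dividing `r` by its
leading coefficient (`α = 1`) or constant coefficient (`β = 0`) yields a non-constant constant of
`F(X)`; the only escape is `β = 0` and `X ∣ π`. Hence each of `p`, `q` is a unit or divisible by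
`X`, and as `p` is a unit exactly when `q` is, both are units and `a ∈ F`.
-/

open Finset

theorem RingAut.toMulAut_pow_apply {R : Type*} [Mul R] [Add R] (f : RingAut R) (n : ℕ) (x : R) :
    (RingAut.toMulAut R f ^ n) x = (f ^ n) x := by
  rw [← map_pow]
  rfl

namespace MulAut

section CommMonoid

variable {R : Type*} [CommMonoid R] (τ : MulAut R)

theorem isUnit_prod_range_pow_apply_iff (m : ℕ) (x : R) :
    IsUnit (∏ i ∈ range (m + 1), (τ ^ i) x) ↔ IsUnit x := by
  refine ⟨fun h => isUnit_of_dvd_unit ?_ h, fun hx => IsUnit.prod_iff.mpr fun i _ => hx.map _⟩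
  simpa using dvd_prod_of_mem (fun i => (τ ^ i) x) (mem_range.mpr m.succ_pos)

theorem not_associated_pow_apply_of_lt {π : R}
    (haper : ∀ k, 0 < k → ¬Associated ((τ ^ k) π) π) {i j : ℕ} (hij : i < j) :
    ¬Associated ((τ ^ i) π) ((τ ^ j) π) := by
  intro h
  have hj : (τ ^ j) π = (τ ^ i) ((τ ^ (j - i)) π) := by
    rw [← mul_apply, ← pow_add, Nat.add_sub_cancel' hij.le]
  rw [hj] at h
  refine haper (j - i) (Nat.sub_pos_of_lt hij) ?_
  simpa only [inv_apply_self] using h.symm.map (τ ^ i)⁻¹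

end CommMonoid

section CommMonoidWithZero

variable {R : Type*} [CommMonoidWithZero R] (τ : MulAut R)

theorem exists_pow_apply_dvd_of_prod_dvd_prod {p q ρ : R} (hpq : IsRelPrime p q) {m : ℕ}
    (h : ∏ i ∈ range (m + 1), (τ ^ i) p ∣ ∏ i ∈ range (m + 1), (τ ^ i) q)
    (hρ : Prime ρ) (hρp : ρ ∣ p) : ∃ k, 0 < k ∧ (τ ^ k) ρ ∣ q := by
  have hρm : (τ ^ m) ρ ∣ ∏ i ∈ range (m + 1), (τ ^ i) q :=
    ((map_dvd_iff _).mpr hρp).trans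
      ((dvd_prod_of_mem (fun i => (τ ^ i) p) (self_mem_range_succ m)).trans h)
  obtain ⟨i, hi, hdvd⟩ := ((MulEquiv.prime_iff (τ ^ m)).mpr hρ).exists_mem_finset_dvd hρm
  have hi : i ≤ m := Nat.lt_succ_iff.mp (mem_range.mp hi)
  rw [← Nat.add_sub_cancel' hi, pow_add, mul_apply, map_dvd_iff] at hdvd
  rcases Nat.eq_zero_or_pos (m - i) with h0 | hpos
  · rw [h0, pow_zero, one_apply] at hdvd
    exact (hρ.not_isUnit (hpq hρp hdvd)).elim
  · exact ⟨m - i, hpos, hdvd⟩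

end CommMonoidWithZero

section UniqueFactorizationMonoid

variable {R : Type*} [CommMonoidWithZero R] [UniqueFactorizationMonoid R] (τ : MulAut R)

theorem finite_setOf_pow_apply_dvd {π x : R} (hx : x ≠ 0) (hπ : Irreducible π)
    (haper : ∀ k, 0 < k → ¬Associated ((τ ^ k) π) π) :
    {n : ℕ | (τ ^ n) π ∣ x}.Finite := by
  refine ((UniqueFactorizationMonoid.factors x).finite_toSet.biUnion
    (t := fun g => {n : ℕ | Associated ((τ ^ n) π) g})
    fun g _ => Set.Subsingleton.finite ?_).subset fun n hn => ?_
  · intro i hi j hj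
    by_contra hne
    rcases Nat.lt_or_gt_of_ne hne with hij | hji
    · exact τ.not_associated_pow_apply_of_lt haper hij (hi.trans hj.symm)
    · exact τ.not_associated_pow_apply_of_lt haper hji (hj.trans hi.symm)
  · obtain ⟨g, hg, hassoc⟩ :=
      UniqueFactorizationMonoid.exists_mem_factors_of_dvd hx (hπ.map (τ ^ n)) hn
    exact Set.mem_biUnion hg hassoc

theorem exists_pow_apply_associated_of_prod_associated {p q : R} (hp : p ≠ 0) (hq : q ≠ 0)
    (hpq : IsRelPrime p q) {m : ℕ}
    (h : Associated (∏ i ∈ range (m + 1), (τ ^ i) p) (∏ i ∈ range (m + 1), (τ ^ i) q))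
    {π : R} (hπ : Irreducible π) (hπpq : π ∣ p * q) :
    ∃ k, 0 < k ∧ Associated ((τ ^ k) π) π := by
  by_contra! haper
  obtain ⟨J, hJ, hJmax⟩ := Set.exists_max_image _ id
    (τ.finite_setOf_pow_apply_dvd (mul_ne_zero hp hq) hπ haper) ⟨0, by simpa using hπpq⟩
  have hρ : Prime ((τ ^ J) π) :=
    UniqueFactorizationMonoid.irreducible_iff_prime.mp (hπ.map (τ ^ J))
  have hlast : ∀ k, 0 < k → ¬(τ ^ k) ((τ ^ J) π) ∣ p * q := fun k hk hdvd => by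
    have := hJmax (k + J) (by simpa [pow_add] using hdvd)
    simp only [id] at this
    omega
  rcases hρ.dvd_or_dvd hJ with hρp | hρq
  · obtain ⟨k, hk, hdvd⟩ := τ.exists_pow_apply_dvd_of_prod_dvd_prod hpq h.dvd hρ hρp
    exact hlast k hk (hdvd.mul_left p)
  · obtain ⟨k, hk, hdvd⟩ := τ.exists_pow_apply_dvd_of_prod_dvd_prod hpq.symm h.symm.dvd hρ hρq
    exact hlast k hk (hdvd.mul_right q)

end UniqueFactorizationMonoid

end MulAut

namespace Polynomial

variable {F : Type*} [Field F]

/-- The restriction to `F[X]` of a difference operator with `σ X = α X + β`. -/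
noncomputable def twistedAffineSubst (σ : F ≃+* F) {α : F} (hα : α ≠ 0) (β : F) : RingAut F[X] :=
  letI := invertibleOfNonzero hα
  (mapEquiv σ).trans (algEquivCMulXAddC α β).toRingEquiv

variable {σ : F ≃+* F} {α β : F} {hα : α ≠ 0}

theorem twistedAffineSubst_apply (p : F[X]) :
    twistedAffineSubst σ hα β p = (p.map (σ : F →+* F)).comp (C α * X + C β) := by
  simp [twistedAffineSubst, comp_eq_aeval]

theorem twistedAffineSubst_C (c : F) : twistedAffineSubst σ hα β (C c) = C (σ c) := by
  simp [twistedAffineSubst_apply]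

theorem twistedAffineSubst_X : twistedAffineSubst σ hα β X = C α * X + C β := by
  simp [twistedAffineSubst_apply]

theorem leadingCoeff_twistedAffineSubst_one (p : F[X]) :
    (twistedAffineSubst σ one_ne_zero β p).leadingCoeff = σ p.leadingCoeff := by
  rw [twistedAffineSubst_apply, C_1, one_mul,
    leadingCoeff_comp (by rw [natDegree_X_add_C]; exact one_ne_zero), leadingCoeff_X_add_C,
    one_pow, mul_one, leadingCoeff_map]
  rfl

theorem eval_zero_twistedAffineSubst_zero (p : F[X]) :
    (twistedAffineSubst σ hα 0 p).eval 0 = σ (p.eval 0) := by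
  simp [twistedAffineSubst_apply, eval_comp, eval_zero_map]

variable {σ' : RatFunc F ≃+* RatFunc F}

theorem semiconj_algebraMap_twistedAffineSubst
    (hC : ∀ c : F, σ' (algebraMap F (RatFunc F) c) = algebraMap F (RatFunc F) (σ c))
    (hX : σ' RatFunc.X = algebraMap F (RatFunc F) α * RatFunc.X + algebraMap F (RatFunc F) β) :
    Function.Semiconj (algebraMap F[X] (RatFunc F)) (twistedAffineSubst σ hα β) σ' := by
  have h : (algebraMap F[X] (RatFunc F)).comp (twistedAffineSubst σ hα β : F[X] →+* F[X]) =
      (σ' : RatFunc F →+* RatFunc F).comp (algebraMap F[X] (RatFunc F)) := by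
    refine ringHom_ext (fun c => ?_) ?_
    · simpa [twistedAffineSubst_C, RatFunc.algebraMap_eq_C] using (hC c).symm
    · simpa [twistedAffineSubst_X, RatFunc.algebraMap_eq_C] using hX.symm
  exact fun p => DFunLike.congr_fun h p

theorem exists_eq_C_of_twistedAffineSubst_eq_self
    (hsemi : Function.Semiconj (algebraMap F[X] (RatFunc F)) (twistedAffineSubst σ hα β) σ')
    (hconst : ∀ f : RatFunc F, σ' f = f → ∃ c : F, f = algebraMap F (RatFunc F) c)
    {s : F[X]} (hs : twistedAffineSubst σ hα β s = s) : ∃ c, s = C c := by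
  obtain ⟨c, hc⟩ := hconst _ ((hsemi s).symm.trans (congrArg _ hs))
  refine ⟨c, RatFunc.algebraMap_injective F ?_⟩
  rw [hc, RatFunc.algebraMap_C, RatFunc.algebraMap_eq_C]

theorem exists_eq_C_of_twistedAffineSubst_eq_C_mul
    (hsemi : Function.Semiconj (algebraMap F[X] (RatFunc F)) (twistedAffineSubst σ hα β) σ')
    (hconst : ∀ f : RatFunc F, σ' f = f → ∃ c : F, f = algebraMap F (RatFunc F) c)
    {r : F[X]} {v e : F} (hr : twistedAffineSubst σ hα β r = C v * r) (he : e ≠ 0)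
    (hσe : σ e = v * e) : ∃ c, r = C c := by
  have hv : v ≠ 0 := by
    rintro rfl
    exact he (σ.injective (by rw [hσe, zero_mul, map_zero]))
  obtain ⟨c, hc⟩ := exists_eq_C_of_twistedAffineSubst_eq_self hsemi hconst
    (s := C e⁻¹ * r) (by
      rw [map_mul, twistedAffineSubst_C, hr, map_inv₀, hσe, ← mul_assoc, ← C_mul]
      congr 2
      field_simp)
  refine ⟨e * c, ?_⟩
  rw [C_mul, ← hc, ← mul_assoc, ← C_mul, mul_inv_cancel₀ he, C_1, one_mul]

/-- `χ` is a coefficient that `τ` twists by `σ`: the leading coefficient when `α = 1`, the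
constant coefficient when `β = 0`. -/
theorem not_associated_twistedAffineSubst_pow_apply_self
    (hsemi : Function.Semiconj (algebraMap F[X] (RatFunc F)) (twistedAffineSubst σ hα β) σ')
    (hconst : ∀ f : RatFunc F, σ' f = f → ∃ c : F, f = algebraMap F (RatFunc F) c)
    (χ : F[X] →* F) (hχτ : ∀ p, χ (twistedAffineSubst σ hα β p) = σ (χ p))
    (hχC : ∀ c, χ (C c) = c) {π : F[X]} (hπ : Irreducible π) (hχπ : χ π ≠ 0) {k : ℕ}
    (hk : 0 < k) : ¬Associated ((twistedAffineSubst σ hα β ^ k) π) π := by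
  set τ := twistedAffineSubst σ hα β
  intro hassoc
  obtain ⟨u, hu⟩ := hassoc.symm
  obtain ⟨w, -, hwu⟩ := Polynomial.isUnit_iff.mp u.isUnit
  have hkey : (τ ^ k) π = C w * π := by rw [← hu, ← hwu, mul_comm]
  set r := ∏ i ∈ range k, (τ ^ i) π
  have hτr : τ r = C w * r := by
    refine mul_right_cancel₀ hπ.ne_zero ?_
    calc τ r * π = ∏ i ∈ range (k + 1), (τ ^ i) π := by
          rw [map_prod, prod_range_succ']
          simp [pow_succ', RingAut.mul_apply]
      _ = C w * r * π := by
          rw [prod_range_succ, hkey, mul_left_comm, mul_assoc]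
  have hχr : χ r ≠ 0 := by
    have hχ_pow : ∀ i, χ ((τ ^ i) π) ≠ 0 := fun i => by
      induction i with
      | zero => simpa using hχπ
      | succ i ih => rwa [pow_succ', RingAut.mul_apply, hχτ, map_ne_zero_iff _ σ.injective]
    rw [map_prod]
    exact prod_ne_zero_iff.mpr fun i _ => hχ_pow i
  obtain ⟨c, hc⟩ := exists_eq_C_of_twistedAffineSubst_eq_C_mul hsemi hconst hτr hχr
    (by rw [← hχτ, hτr, map_mul, hχC])
  have hπr : π ∣ r := by
    simpa only [pow_zero, RingAut.one_apply] using
      dvd_prod_of_mem (fun i => (τ ^ i) π) (mem_range.mpr hk)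
  have hc0 : c ≠ 0 := by
    rw [hc, hχC] at hχr
    exact hχr
  exact hπ.not_isUnit (isUnit_of_dvd_unit (hc ▸ hπr) (isUnit_C.mpr hc0.isUnit))

theorem X_dvd_of_associated_twistedAffineSubst_pow_apply_self (hαβ : α = 1 ∨ β = 0)
    (hsemi : Function.Semiconj (algebraMap F[X] (RatFunc F)) (twistedAffineSubst σ hα β) σ')
    (hconst : ∀ f : RatFunc F, σ' f = f → ∃ c : F, f = algebraMap F (RatFunc F) c)
    {π : F[X]} (hπ : Irreducible π) {k : ℕ} (hk : 0 < k)
    (hper : Associated ((twistedAffineSubst σ hα β ^ k) π) π) : X ∣ π := by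
  rcases hαβ with rfl | rfl
  · exact (not_associated_twistedAffineSubst_pow_apply_self hsemi hconst leadingCoeffHom
      leadingCoeff_twistedAffineSubst_one leadingCoeff_C hπ (leadingCoeff_ne_zero.mpr hπ.ne_zero)
      hk hper).elim
  · by_contra hXπ
    rw [X_dvd_iff, coeff_zero_eq_eval_zero] at hXπ
    exact not_associated_twistedAffineSubst_pow_apply_self hsemi hconst (evalRingHom (0 : F))
      eval_zero_twistedAffineSubst_zero (fun _ => eval_C) hπ hXπ hk hper

end Polynomial

namespace RatFunc

open Polynomial

variable {F : Type*} [Field F] {τ : RingAut F[X]} {σ' : RatFunc F ≃+* RatFunc F}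

theorem associated_prod_num_prod_denom_of_prod_eq_algebraMap
    (hsemi : Function.Semiconj (algebraMap F[X] (RatFunc F)) τ σ') {a : RatFunc F} (ha : a ≠ 0)
    {m : ℕ} {c : F} (hc : ∏ i ∈ range (m + 1), (⇑σ')^[i] a = algebraMap F (RatFunc F) c) :
    Associated (∏ i ∈ range (m + 1), (τ ^ i) a.num) (∏ i ∈ range (m + 1), (τ ^ i) a.denom) := by
  set P := ∏ i ∈ range (m + 1), (τ ^ i) a.num
  set Q := ∏ i ∈ range (m + 1), (τ ^ i) a.denom
  have hσ'_pow : ∀ i, (⇑σ')^[i] a =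
      algebraMap F[X] (RatFunc F) ((τ ^ i) a.num) / algebraMap F[X] (RatFunc F) ((τ ^ i) a.denom) :=
    fun i => by
      conv_lhs => rw [← a.num_div_denom]
      rw [← RingAut.coe_pow, map_div₀, RingAut.coe_pow, RingAut.coe_pow,
        ← (hsemi.iterate_right i) a.num, ← (hsemi.iterate_right i) a.denom]
  have hPQ : P = Polynomial.C c * Q := by
    have hQ : algebraMap F[X] (RatFunc F) Q ≠ 0 := RatFunc.algebraMap_ne_zero <|
      prod_ne_zero_iff.mpr fun i _ => (map_ne_zero_iff _ (τ ^ i).injective).mpr a.denom_ne_zero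
    refine RatFunc.algebraMap_injective F ?_
    rw [map_mul, RatFunc.algebraMap_C, ← RatFunc.algebraMap_eq_C, ← hc, ← div_eq_iff hQ]
    simp only [P, Q, map_prod, hσ'_pow, prod_div_distrib]
  have hc0 : c ≠ 0 := by
    rintro rfl
    rw [map_zero, zero_mul] at hPQ
    obtain ⟨i, -, hi⟩ := prod_eq_zero_iff.mp hPQ
    exact num_ne_zero ha ((map_eq_zero_iff _ (τ ^ i).injective).mp hi)
  rw [hPQ]
  exact associated_unit_mul_left Q (Polynomial.C c) (Polynomial.isUnit_C.mpr hc0.isUnit)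

theorem exists_eq_algebraMap_of_isUnit {a : RatFunc F} (hnum : IsUnit a.num)
    (hdenom : IsUnit a.denom) : ∃ c, a = algebraMap F (RatFunc F) c := by
  rw [algebraMap_eq_C]
  exact (eq_C_iff a).mpr ⟨natDegree_eq_zero_of_isUnit hnum, natDegree_eq_zero_of_isUnit hdenom⟩

end RatFunc

open Polynomial in
theorem stmt_3_general (F : Type*) [Field F] (σ : F ≃+* F)
    (σ' : RatFunc F ≃+* RatFunc F) (α β : F)
    (hαβ : α = 1 ∨ (α ≠ 0 ∧ β = 0))
    (hC : ∀ c : F, σ' (algebraMap F (RatFunc F) c) = algebraMap F (RatFunc F) (σ c))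
    (hX : σ' RatFunc.X = algebraMap F (RatFunc F) α * RatFunc.X + algebraMap F (RatFunc F) β)
    (hconst : ∀ f : RatFunc F, σ' f = f → ∃ c : F, σ c = c ∧ f = algebraMap F (RatFunc F) c)
    (a : RatFunc F) (ha : ¬ ∃ c : F, a = algebraMap F (RatFunc F) c)
    (m : ℕ) :
    ¬ ∃ c : F, (∏ i ∈ Finset.range (m + 1), (⇑σ')^[i] a) = algebraMap F (RatFunc F) c := by
  rintro ⟨c, hc⟩
  have hα : α ≠ 0 := hαβ.elim (fun h => h ▸ one_ne_zero) And.left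
  have hsemi := semiconj_algebraMap_twistedAffineSubst (hα := hα) hC hX
  have hconst' := fun f hf => (hconst f hf).imp fun _ => And.right
  have ha0 : a ≠ 0 := fun h => ha ⟨0, by rw [h, map_zero]⟩
  set τ := RingAut.toMulAut F[X] (twistedAffineSubst σ hα β)
  have hassoc : Associated (∏ i ∈ range (m + 1), (τ ^ i) a.num)
      (∏ i ∈ range (m + 1), (τ ^ i) a.denom) := by
    simpa only [τ, RingAut.toMulAut_pow_apply] using
      RatFunc.associated_prod_num_prod_denom_of_prod_eq_algebraMap hsemi ha0 hc
  have hcop : IsRelPrime a.num a.denom := a.isCoprime_num_denom.isRelPrime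
  have hX_dvd : ∀ x, x ≠ 0 → x ∣ a.num * a.denom → ¬IsUnit x → X ∣ x := by
    intro x hx hxd hxu
    obtain ⟨π, hπ, hπx⟩ := WfDvdMonoid.exists_irreducible_factor hxu hx
    obtain ⟨k, hk, hper⟩ := τ.exists_pow_apply_associated_of_prod_associated
      (RatFunc.num_ne_zero ha0) a.denom_ne_zero hcop hassoc hπ (hπx.trans hxd)
    rw [RingAut.toMulAut_pow_apply] at hper
    exact (X_dvd_of_associated_twistedAffineSubst_pow_apply_self (hαβ.imp_right And.right)
      hsemi hconst' hπ hk hper).trans hπx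
  have hunit : IsUnit a.num ↔ IsUnit a.denom := by
    simpa only [τ.isUnit_prod_range_pow_apply_iff] using hassoc.isUnit_iff
  have hnum : IsUnit a.num := by
    by_contra h
    exact not_isUnit_X (hcop (hX_dvd _ (RatFunc.num_ne_zero ha0) (dvd_mul_right _ _) h)
      (hX_dvd _ a.denom_ne_zero (dvd_mul_left _ _) (hunit.not.mp h)))
  exact ha (RatFunc.exists_eq_algebraMap_of_isUnit hnum (hunit.mp hnum))

/-- In a ΠΣ-field extension `F(t)` of a difference field `F` (with unchanged constants),
for `a ∈ F(t) \ F` and `m ≥ 1`, the product `a·σ(a)···σ^m(a)` does not lie in `F`. -/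
theorem stmt_3 (F : Type*) [Field F] [CharZero F] (σ : F ≃+* F)
    (σ' : RatFunc F ≃+* RatFunc F) (α β : F)
    (hαβ : α = 1 ∨ (α ≠ 0 ∧ β = 0))
    (hC : ∀ c : F, σ' (algebraMap F (RatFunc F) c) = algebraMap F (RatFunc F) (σ c))
    (hX : σ' RatFunc.X = algebraMap F (RatFunc F) α * RatFunc.X + algebraMap F (RatFunc F) β)
    (hconst : ∀ f : RatFunc F, σ' f = f → ∃ c : F, σ c = c ∧ f = algebraMap F (RatFunc F) c)
    (a : RatFunc F) (ha : ¬ ∃ c : F, a = algebraMap F (RatFunc F) c)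
    (m : ℕ) (hm : 1 ≤ m) :
    ¬ ∃ c : F, (∏ i ∈ Finset.range (m + 1), (⇑σ')^[i] a) = algebraMap F (RatFunc F) c :=
  stmt_3_general F σ σ' α β hαβ hC hX hconst a ha m
end

section
/- Let (F,σ) be a difference field and (F(t),σ) a ΠΣ-field extension (i.e., σ(t) = α·t + β with α = 1 or (α ∈ F*, β = 0), and const(F(t),σ) = const(F,σ)). If (F,σ) is constant-stable, then (F(t),σ) is constant-stable. -/
/-!
If `σ'^[k] f = f`, the monic polynomial `∏_{i<k} (X - σ'^[i] f)` is invariant under `σ'`,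
so its coefficients are constants of `F(t)` and hence lie in `F`. Thus `f` is algebraic over `F`;
as `F` is algebraically closed in `F(t)`, `f ∈ F`, and constant-stability of `F` gives `σ f = f`.
-/

open Polynomial Function

section OrbitPolynomial

variable {L : Type*} [CommRing L] (τ : L →+* L)

theorem map_prod_X_sub_C_iterate_of_isPeriodicPt {f : L} {k : ℕ} (hf : IsPeriodicPt τ k f) :
    (∏ i ∈ Finset.range k, (X - C (τ^[i] f))).map τ =
      ∏ i ∈ Finset.range k, (X - C (τ^[i] f)) := by
  cases k with
  | zero => simp
  | succ m =>
    simp only [Polynomial.map_prod, Polynomial.map_sub, map_X, map_C, ← iterate_succ_apply' τ]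
    rw [Finset.prod_range_succ, hf.eq, Finset.prod_range_succ' _ m, iterate_zero_apply]

theorem isIntegral_of_isPeriodicPt [Nontrivial L] {R : Type*} [CommRing R] [Algebra R L]
    (hfix : ∀ x, τ x = x → x ∈ Set.range (algebraMap R L)) {f : L} {k : ℕ} (hk : 0 < k)
    (hf : IsPeriodicPt τ k f) : IsIntegral R f := by
  set Q := ∏ i ∈ Finset.range k, (X - C (τ^[i] f))
  have hQ_monic : Q.Monic := monic_prod_of_monic _ _ fun i _ ↦ monic_X_sub_C _
  have hQ_map : Q.map τ = Q := map_prod_X_sub_C_iterate_of_isPeriodicPt τ hf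
  have hQ_coeff : ∀ n, Q.coeff n ∈ Set.range (algebraMap R L) := fun n ↦
    hfix _ (by rw [← coeff_map, hQ_map])
  obtain ⟨q, hq_map, -, hq_monic⟩ :=
    lifts_and_degree_eq_and_monic ((lifts_iff_coeff_lifts Q).mpr hQ_coeff) hQ_monic
  refine ⟨q, hq_monic, ?_⟩
  rw [← eval_map, hq_map, eval_prod]
  exact Finset.prod_eq_zero (Finset.mem_range.mpr hk) (by simp)

end OrbitPolynomial

theorem RatFunc.mem_range_algebraMap_of_isAlgebraic {K : Type*} [Field K] {f : RatFunc K}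
    (hf : IsAlgebraic K f) : f ∈ (algebraMap K (RatFunc K)).range := by
  by_contra hf'
  refine transcendental_of_ne_C f (fun ⟨c, hc⟩ ↦ hf' ⟨c, ?_⟩) hf
  rw [hc, algebraMap_eq_C]

theorem stmt_4_general (F : Type*) [Field F] (σ : F ≃+* F)
    (σ' : RatFunc F ≃+* RatFunc F)
    (hC : ∀ c : F, σ' (algebraMap F (RatFunc F) c) = algebraMap F (RatFunc F) (σ c))
    (hconst : ∀ f : RatFunc F, σ' f = f → ∃ c : F, σ c = c ∧ f = algebraMap F (RatFunc F) c)
    (hcs : ∀ k : ℕ, 1 ≤ k → ∀ c : F, (⇑σ)^[k] c = c → σ c = c) :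
    ∀ k : ℕ, 1 ≤ k → ∀ f : RatFunc F, (⇑σ')^[k] f = f → σ' f = f := by
  intro k hk f hf
  have hfix : ∀ x, σ' x = x → x ∈ Set.range (algebraMap F (RatFunc F)) := fun x hx ↦
    let ⟨c, _, hc⟩ := hconst x hx
    ⟨c, hc.symm⟩
  have hf_int : IsIntegral F f :=
    isIntegral_of_isPeriodicPt (σ' : RatFunc F →+* RatFunc F) hfix hk hf
  obtain ⟨a, rfl⟩ := RatFunc.mem_range_algebraMap_of_isAlgebraic hf_int.isAlgebraic
  have hsemi : Semiconj (algebraMap F (RatFunc F)) σ σ' := fun c ↦ (hC c).symm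
  have ha : σ^[k] a = a := (algebraMap F (RatFunc F)).injective <| by
    rw [(hsemi.iterate_right k) a, hf]
  rw [hC, hcs k hk a ha]

/-- A ΠΣ-field extension `F(t)` of a constant-stable difference field `F` is
constant-stable. -/
theorem stmt_4 (F : Type*) [Field F] [CharZero F] (σ : F ≃+* F)
    (σ' : RatFunc F ≃+* RatFunc F) (α β : F)
    (hαβ : α = 1 ∨ (α ≠ 0 ∧ β = 0))
    (hC : ∀ c : F, σ' (algebraMap F (RatFunc F) c) = algebraMap F (RatFunc F) (σ c))
    (hX : σ' RatFunc.X = algebraMap F (RatFunc F) α * RatFunc.X + algebraMap F (RatFunc F) β)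
    (hconst : ∀ f : RatFunc F, σ' f = f → ∃ c : F, σ c = c ∧ f = algebraMap F (RatFunc F) c)
    (hcs : ∀ k : ℕ, 1 ≤ k → ∀ c : F, (⇑σ)^[k] c = c → σ c = c) :
    ∀ k : ℕ, 1 ≤ k → ∀ f : RatFunc F, (⇑σ')^[k] f = f → σ' f = f :=
  stmt_4_general F σ σ' hC hconst hcs
end

section
/- A ΠΣ-field (F,σ) over a constant field K is constant-stable, i.e., const(F,σ^k) = const(F,σ) = K for all positive integers k. -/
namespace StmtAux5
open Polynomial
set_option linter.unusedSectionVars false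
set_option maxHeartbeats 1000000

lemma comp_C_mul_X_coeff {R : Type*} [CommRing R] (P : Polynomial R) (a : R) (j : ℕ) :
    (P.comp (C a * X)).coeff j = P.coeff j * a ^ j := by
  induction P using Polynomial.induction_on' with
  | add p q hp hq => simp [add_comp, hp, hq, add_mul]
  | monomial n c =>
    rw [monomial_comp]
    simp only [mul_pow, ← C_pow, coeff_monomial]
    rw [← mul_assoc, ← C_mul, coeff_C_mul, coeff_X_pow]
    split_ifs with h1 h2 h3
    · subst h1; ring
    · omega
    · omega
    · ring

section
variable {F : Type*} [Field F] [CharZero F]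

lemma pow_apply' (σ : F ≃+* F) (m : ℕ) (x : F) : (⇑σ)^[m] x = (σ ^ m : F ≃+* F) x := by
  induction m generalizing x with
  | zero => rfl
  | succ n ih => rw [Function.iterate_succ_apply, pow_succ, ih (σ x)]; rfl

lemma iter_comm (σ : F ≃+* F) (m : ℕ) (x : F) : (⇑σ)^[m] (σ x) = σ ((⇑σ)^[m] x) := by
  rw [← Function.iterate_succ_apply, Function.iterate_succ_apply']

variable (K : Subfield F) (t : F)

lemma iter_mem (σ : F ≃+* F) (hKinv : ∀ c ∈ K, σ c ∈ K) (m : ℕ) {c : F} (hc : c ∈ K) :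
    (⇑σ)^[m] c ∈ K := by
  induction m with
  | zero => exact hc
  | succ n ih => rw [Function.iterate_succ_apply']; exact hKinv _ ih

noncomputable def phi : Polynomial ↥K →+* F := eval₂RingHom K.subtype t

def res (τ : F →+* F) (hτ : ∀ c ∈ K, τ c ∈ K) : ↥K →+* ↥K :=
  (τ.comp K.subtype).codRestrict K.toSubring (fun x => hτ _ x.2)

@[simp] lemma res_apply (τ : F →+* F) (hτ : ∀ c ∈ K, τ c ∈ K) (c : ↥K) :
    (res K τ hτ c : F) = τ c := rfl

noncomputable def act (τ : F →+* F) (hτ : ∀ c ∈ K, τ c ∈ K) (a b : ↥K)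
    (P : Polynomial ↥K) : Polynomial ↥K :=
  (P.map (res K τ hτ)).comp (C a * X + C b)

lemma act_derivative (τ : F →+* F) (hτ : ∀ c ∈ K, τ c ∈ K) (a b : ↥K)
    (P : Polynomial ↥K) :
    derivative (act K τ hτ a b P) = C a * act K τ hτ a b (derivative P) := by
  rw [act, act, derivative_comp, derivative_map]
  congr 1
  rw [derivative_add, derivative_C, add_zero, derivative_C_mul, derivative_X, mul_one]

lemma t_pow_not_mem (htr : ∀ p : Polynomial F, (∀ n, p.coeff n ∈ K) → p.eval t = 0 → p = 0)
    (N : ℕ) (hN : 1 ≤ N) : t ^ N ∉ K := by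
  intro hmem
  have h0 : ((X : Polynomial F) ^ N - C (t ^ N)).eval t = 0 := by simp
  have hco : ∀ n, ((X : Polynomial F) ^ N - C (t ^ N)).coeff n ∈ K := by
    intro n
    rw [coeff_sub, coeff_X_pow, coeff_C]
    split_ifs with h1 h2
    · exfalso; omega
    · simpa using K.one_mem
    · simpa using K.neg_mem hmem
    · simpa using K.zero_mem
  have := htr _ hco h0
  have hc := congrArg (fun p => Polynomial.coeff p N) this
  simp only [coeff_sub, coeff_X_pow, if_pos rfl, coeff_C, if_neg (by omega : ¬ N = 0),
    coeff_zero] at hc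
  simp at hc

lemma t_not_mem (htr : ∀ p : Polynomial F, (∀ n, p.coeff n ∈ K) → p.eval t = 0 → p = 0) :
    t ∉ K := by
  have := t_pow_not_mem K t htr 1 le_rfl
  simpa using this

lemma natdeg_iter_deriv {R : Type*} [Field R] [CharZero R] (P : Polynomial R) :
    ∀ j, j ≤ P.natDegree → (derivative^[j] P).natDegree = P.natDegree - j := by
  intro j
  induction j with
  | zero => simp
  | succ n ih =>
    intro hj
    rw [Function.iterate_succ_apply']
    have h1 : (derivative^[n] P).natDegree = P.natDegree - n := ih (by omega)
    have h2 : 0 < (derivative^[n] P).natDegree := by omega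
    have := degree_derivative_eq (derivative^[n] P) h2
    have h3 := natDegree_eq_of_degree_eq_some this
    omega

lemma tele_add (σ : F ≃+* F) (z y : F) (hy : σ y = y) (hz : σ z = z + y) (m : ℕ) :
    (⇑σ)^[m] z = z + m • y := by
  induction m with
  | zero => simp
  | succ n ih =>
    rw [Function.iterate_succ_apply, hz]
    have : (⇑σ)^[n] (z + y) = (⇑σ)^[n] z + (⇑σ)^[n] y := by
      rw [pow_apply', pow_apply', pow_apply', map_add]
    rw [this, Function.iterate_fixed hy, ih, succ_nsmul]
    ring

lemma tele_mul (σ : F ≃+* F) (z y : F) (hy : σ y = y) (hz : σ z = y * z) (m : ℕ) :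
    (⇑σ)^[m] z = y ^ m * z := by
  induction m with
  | zero => simp
  | succ n ih =>
    rw [Function.iterate_succ_apply, hz]
    have : (⇑σ)^[n] (y * z) = (⇑σ)^[n] y * (⇑σ)^[n] z := by
      rw [pow_apply', pow_apply', pow_apply', map_mul]
    rw [this, Function.iterate_fixed hy, ih, pow_succ]
    ring

lemma phi_inj (htr : ∀ p : Polynomial F, (∀ n, p.coeff n ∈ K) → p.eval t = 0 → p = 0) :
    Function.Injective (phi K t) := by
  refine (injective_iff_map_eq_zero _).2 fun P hP => ?_
  have h1 : (P.map K.subtype).eval t = 0 := by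
    rwa [eval_map]
  have h2 : P.map K.subtype = 0 := by
    refine htr _ (fun n => ?_) h1
    rw [coeff_map]; exact (P.coeff n).2
  exact Polynomial.map_injective K.subtype K.subtype_injective (by simpa using h2)

lemma rep_exists {f : F} (hf : f ∈ K ⊔ Subfield.closure {t}) :
    ∃ p q : Polynomial ↥K, phi K t q ≠ 0 ∧ f = phi K t p / phi K t q := by
  let S : Subfield F :=
    { carrier := {x | ∃ p q : Polynomial ↥K, phi K t q ≠ 0 ∧ x = phi K t p / phi K t q}
      zero_mem' := ⟨0, 1, by simp, by simp⟩
      one_mem' := ⟨1, 1, by simp, by simp⟩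
      add_mem' := by
        rintro x y ⟨p1, q1, hq1, rfl⟩ ⟨p2, q2, hq2, rfl⟩
        exact ⟨p1 * q2 + p2 * q1, q1 * q2, by simp [mul_ne_zero hq1 hq2],
          by rw [map_add, map_mul, map_mul, map_mul]; field_simp⟩
      mul_mem' := by
        rintro x y ⟨p1, q1, hq1, rfl⟩ ⟨p2, q2, hq2, rfl⟩
        exact ⟨p1 * p2, q1 * q2, by simp [mul_ne_zero hq1 hq2], by rw [map_mul, map_mul, div_mul_div_comm]⟩
      neg_mem' := by
        rintro x ⟨p, q, hq, rfl⟩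
        exact ⟨-p, q, hq, by simp [neg_div]⟩
      inv_mem' := by
        rintro x ⟨p, q, hq, rfl⟩
        by_cases hp : phi K t p = 0
        · exact ⟨0, 1, by simp, by simp [hp]⟩
        · exact ⟨q, p, hp, by rw [inv_div]⟩ }
  have hKS : K ≤ S := fun c hc => ⟨C ⟨c, hc⟩, 1, by simp, by simp [phi]⟩
  have htS : Subfield.closure {t} ≤ S := by
    rw [Subfield.closure_le]
    rintro x rfl
    exact ⟨X, 1, by simp, by simp [phi]⟩
  exact sup_le hKS htS hf

lemma phi_act (τ : F →+* F) (hτ : ∀ c ∈ K, τ c ∈ K) (a b : ↥K)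
    (hτt : τ t = a * t + b) (P : Polynomial ↥K) :
    phi K t (act K τ hτ a b P) = τ (phi K t P) := by
  have hcomp : (K.subtype).comp (res K τ hτ) = τ.comp K.subtype := by
    ext c; rfl
  rw [phi, act, coe_eval₂RingHom, eval₂_comp, eval₂_map, hcomp, hom_eval₂, hτt]
  congr 1
  simp [eval₂_mul, eval₂_add]

lemma act_natDegree (τ : F →+* F) (hτ : ∀ c ∈ K, τ c ∈ K) (a b : ↥K) (ha : a ≠ 0)
    (P : Polynomial ↥K) : (act K τ hτ a b P).natDegree = P.natDegree := by
  rw [act, natDegree_comp, natDegree_map, natDegree_linear ha, mul_one]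

lemma act_leadingCoeff (τ : F →+* F) (hτ : ∀ c ∈ K, τ c ∈ K) (a b : ↥K) (ha : a ≠ 0)
    (P : Polynomial ↥K) :
    (act K τ hτ a b P).leadingCoeff = res K τ hτ P.leadingCoeff * a ^ P.natDegree := by
  by_cases h0 : P.natDegree = 0
  · rw [eq_C_of_natDegree_eq_zero h0]
    simp [act, leadingCoeff_C]
  · rw [act, leadingCoeff_comp (by rw [natDegree_linear ha]; omega), leadingCoeff_map,
      natDegree_map, leadingCoeff_linear ha]

lemma sigma_contra (σ : F ≃+* F) (k : ℕ) (hk : 1 ≤ k)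
    (hKinv : ∀ c ∈ K, σ c ∈ K)
    (hfix : ∀ c, σ c = c → c ∈ K)
    (hIH : ∀ c ∈ K, (⇑σ)^[k] c = c → σ c = c)
    (htr : ∀ p : Polynomial F, (∀ n, p.coeff n ∈ K) → p.eval t = 0 → p = 0)
    (β : F) (hβ : β ∈ K) (hσt : σ t = t + β)
    (τ : F →+* F) (hτeq : ∀ x, τ x = (⇑σ)^[k] x)
    (hτK : ∀ c ∈ K, τ c ∈ K)
    (b : ↥K) (hτt : τ t = t + b)
    (P : Polynomial ↥K) (hTP : act K τ hτK 1 b P = P) (hd : 1 ≤ P.natDegree) : False := by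
  set ρ := res K τ hτK with hρ
  -- act fixes all iterated derivatives
  have hcomm : ∀ Q, derivative (act K τ hτK 1 b Q) = act K τ hτK 1 b (derivative Q) := by
    intro Q; rw [act_derivative, map_one, one_mul]
  have hiter : ∀ j, act K τ hτK 1 b (derivative^[j] P) = derivative^[j] P := by
    intro j
    induction j with
    | zero => exact hTP
    | succ n ih => rw [Function.iterate_succ_apply', ← hcomm, ih]
  set D := derivative^[P.natDegree - 1] P with hDdef
  have hDdeg : D.natDegree = 1 := by
    rw [hDdef, natdeg_iter_deriv P (P.natDegree - 1) (by omega)]; omega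
  set u := D.coeff 1 with hu_def
  set v := D.coeff 0 with hv_def
  have hD0 : D ≠ 0 := fun h => by simp [h] at hDdeg
  have hu : u ≠ 0 := by
    have := leadingCoeff_ne_zero.2 hD0
    rwa [leadingCoeff, hDdeg] at this
  have hD : D = C u * X + C v := eq_X_add_C_of_natDegree_le_one hDdeg.le
  have hact : C (ρ u) * (C 1 * X + C b) + C (ρ v) = C u * X + C v := by
    have h1 := hiter (P.natDegree - 1)
    rw [← hDdef] at h1
    calc C (ρ u) * (C 1 * X + C b) + C (ρ v)
        = act K τ hτK 1 b D := by
          rw [act, hD]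
          simp only [Polynomial.map_add, Polynomial.map_mul, map_C, map_X, add_comp,
            mul_comp, C_comp, X_comp]
          rfl
      _ = D := h1
      _ = C u * X + C v := hD
  have hact' : C (ρ u) * X + C (ρ u * b + ρ v) = C u * X + C v := by
    rw [← hact, C_add, C_mul, C_1]; ring
  have e1 : ρ u = u := by
    have h := congrArg (fun Q : Polynomial ↥K => Q.coeff 1) hact'
    simp only [coeff_add, coeff_C_mul, coeff_X_one, mul_one, coeff_C,
      if_neg (Nat.one_ne_zero), add_zero] at h
    exact h
  have e0 : ρ u * b + ρ v = v := by
    have h := congrArg (fun Q : Polynomial ↥K => Q.coeff 0) hact'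
    simp only [coeff_add, coeff_C_mul, coeff_X_zero, mul_zero, zero_add, coeff_C,
      if_pos rfl] at h
    exact h
  -- move to F
  have hτu : τ (u : F) = u := congrArg Subtype.val e1
  have hτv : τ (v : F) = v - u * b := by
    have := congrArg Subtype.val e0
    push_cast at this
    rw [res_apply, res_apply] at this
    rw [hτu] at this
    linear_combination this
  set w : F := (v : F) / (u : F) with hw
  have huF : (u : F) ≠ 0 := fun h => hu (Subtype.ext h)
  have hwK : w ∈ K := K.div_mem v.2 u.2
  set z := t + w with hz
  have hτz : τ z = z := by
    rw [hz, map_add, hτt, hw, map_div₀, hτu, hτv]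
    field_simp
    ring
  set y := β + σ w - w with hy
  have hσz : σ z = z + y := by rw [hz, hy, map_add, hσt]; ring
  have hyK : y ∈ K := K.sub_mem (K.add_mem hβ (hKinv w hwK)) hwK
  have hyfix : (⇑σ)^[k] y = y := by
    have h1 : y = σ z - z := by rw [hσz]; ring
    have h2 : (⇑σ)^[k] z = z := by rw [← hτeq, hτz]
    rw [h1, pow_apply', map_sub, ← pow_apply', ← pow_apply', iter_comm, h2]
  have hσy : σ y = y := hIH y hyK hyfix
  have htele := tele_add σ z y hσy hσz k
  rw [← hτeq, hτz] at htele
  have hy0 : y = 0 := by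
    have hky : (k : F) * y = 0 := by
      rw [nsmul_eq_mul] at htele
      linear_combination -htele
    have hk0 : (k : F) ≠ 0 := Nat.cast_ne_zero.2 (by omega)
    exact (mul_eq_zero.1 hky).resolve_left hk0
  have hzK : z ∈ K := hfix z (by rw [hσz, hy0, add_zero])
  have : t ∈ K := by
    have := K.sub_mem hzK hwK
    simpa [hz] using this
  exact t_not_mem K t htr this
lemma pi_contra (σ : F ≃+* F) (k : ℕ) (hk : 1 ≤ k)
    (hKinv : ∀ c ∈ K, σ c ∈ K)
    (hfix : ∀ c, σ c = c → c ∈ K)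
    (hIH : ∀ c ∈ K, (⇑σ)^[k] c = c → σ c = c)
    (htr : ∀ p : Polynomial F, (∀ n, p.coeff n ∈ K) → p.eval t = 0 → p = 0)
    (α : F) (hα : α ∈ K) (hα0 : α ≠ 0) (hσt : σ t = α * t)
    (τ : F →+* F) (hτeq : ∀ x, τ x = (⇑σ)^[k] x)
    (a : ↥K) (ha : (a : F) ≠ 0) (hτt : τ t = a * t)
    (u : ↥K) (hu : (u : F) ≠ 0) (j m : ℕ) (hjm : j ≠ m)
    (hrel : τ (u : F) * (a : F) ^ j = (a : F) ^ m * (u : F)) : False := by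
  have ht0 : t ≠ 0 := fun h => t_not_mem K t htr (h ▸ K.zero_mem)
  set z := (u : F) * t ^ j / t ^ m with hzdef
  have hz0 : z ≠ 0 :=
    div_ne_zero (mul_ne_zero hu (pow_ne_zero _ ht0)) (pow_ne_zero _ ht0)
  have hτz : τ z = z := by
    rw [hzdef, map_div₀, map_mul, map_pow, map_pow, hτt, mul_pow, mul_pow]
    rw [div_eq_div_iff (mul_ne_zero (pow_ne_zero _ ha) (pow_ne_zero _ ht0))
      (pow_ne_zero _ ht0)]
    linear_combination t ^ j * t ^ m * hrel
  set y := σ (u : F) * α ^ j / ((u : F) * α ^ m) with hydef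
  have hyz : σ z = y * z := by
    rw [hzdef, hydef, map_div₀, map_mul, map_pow, map_pow, hσt, mul_pow, mul_pow,
      div_mul_div_comm]
    rw [div_eq_div_iff (mul_ne_zero (pow_ne_zero _ hα0) (pow_ne_zero _ ht0))
      (mul_ne_zero (mul_ne_zero hu (pow_ne_zero _ hα0)) (pow_ne_zero _ ht0))]
    ring
  have hyK : y ∈ K := K.div_mem (K.mul_mem (hKinv _ u.2) (pow_mem hα j))
    (K.mul_mem u.2 (pow_mem hα m))
  have hy_eq : y = σ z / z := by
    rw [hyz, mul_div_assoc, div_self hz0, mul_one]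
  have hikz : (⇑σ)^[k] z = z := by rw [← hτeq, hτz]
  have hyfix : (⇑σ)^[k] y = y := by
    rw [hy_eq, pow_apply', map_div₀, ← pow_apply', ← pow_apply', iter_comm, hikz]
  have hσy : σ y = y := hIH y hyK hyfix
  have htele := tele_mul σ z y hσy hyz k
  rw [hikz] at htele
  have hyk : y ^ k = 1 := by
    have h1 : (y ^ k - 1) * z = 0 := by linear_combination -htele
    rcases mul_eq_zero.1 h1 with h | h
    · linear_combination h
    · exact absurd h hz0
  have hzkK : (z ^ k) ∈ K := by
    apply hfix
    rw [map_pow, hyz, mul_pow, hyk, one_mul]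
  have hz_k : z ^ k * t ^ (m * k) = (u : F) ^ k * t ^ (j * k) := by
    rw [hzdef, div_pow, mul_pow, ← pow_mul, ← pow_mul]
    exact div_mul_cancel₀ _ (pow_ne_zero _ ht0)
  rcases Nat.lt_or_ge j m with hlt | hge
  · set N := (m - j) * k with hN
    have hNpos : 1 ≤ N := Nat.mul_pos (by omega) (by omega)
    have hsplit : t ^ (m * k) = t ^ (j * k) * t ^ N := by
      rw [← pow_add, hN, ← Nat.add_mul, Nat.add_sub_cancel' (le_of_lt hlt)]
    have h2 : z ^ k * (t ^ (j * k) * t ^ N) = (u : F) ^ k * t ^ (j * k) := by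
      rw [← hsplit]; exact hz_k
    have h3 : t ^ N * z ^ k = (u : F) ^ k := by
      apply mul_left_cancel₀ (pow_ne_zero (j * k) ht0)
      linear_combination h2
    have hmem : t ^ N ∈ K := by
      rw [show t ^ N = (u : F) ^ k / z ^ k by
        rw [eq_div_iff (pow_ne_zero _ hz0)]; exact h3]
      exact K.div_mem (pow_mem u.2 k) hzkK
    exact t_pow_not_mem K t htr N hNpos hmem
  · have hgt : m < j := by omega
    set N := (j - m) * k with hN
    have hNpos : 1 ≤ N := Nat.mul_pos (by omega) (by omega)
    have hsplit : t ^ (j * k) = t ^ (m * k) * t ^ N := by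
      rw [← pow_add, hN, ← Nat.add_mul, Nat.add_sub_cancel' (le_of_lt hgt)]
    have h2 : z ^ k * t ^ (m * k) = (u : F) ^ k * (t ^ (m * k) * t ^ N) := by
      rw [← hsplit]; exact hz_k
    have h3 : t ^ N * (u : F) ^ k = z ^ k := by
      apply mul_left_cancel₀ (pow_ne_zero (m * k) ht0)
      linear_combination -h2
    have hmem : t ^ N ∈ K := by
      rw [show t ^ N = z ^ k / (u : F) ^ k by
        rw [eq_div_iff (pow_ne_zero _ hu)]; exact h3]
      exact K.div_mem hzkK (pow_mem u.2 k)
    exact t_pow_not_mem K t htr N hNpos hmem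
lemma coprime_monic_rep
    (htr : ∀ p : Polynomial F, (∀ n, p.coeff n ∈ K) → p.eval t = 0 → p = 0)
    {f : F} (hf0 : f ≠ 0)
    (hrep : ∃ p q : Polynomial ↥K, phi K t q ≠ 0 ∧ f = phi K t p / phi K t q) :
    ∃ p q : Polynomial ↥K, q.Monic ∧ IsCoprime p q ∧ p ≠ 0 ∧ phi K t q ≠ 0 ∧
      f = phi K t p / phi K t q := by
  classical
  letI : GCDMonoid (Polynomial ↥K) := EuclideanDomain.gcdMonoid _
  obtain ⟨p₀, q₀, hq₀, hfeq⟩ := hrep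
  have hq0' : q₀ ≠ 0 := fun h => hq₀ (by rw [h, map_zero])
  have hp0' : p₀ ≠ 0 := fun h => hf0 (by rw [hfeq, h, map_zero, zero_div])
  set g := GCDMonoid.gcd p₀ q₀ with hg
  have hgn : g ≠ 0 := gcd_ne_zero_of_right hq0'
  set p₁ := p₀ / g with hp₁
  set q₁ := q₀ / g with hq₁
  have hcop1 : IsCoprime p₁ q₁ := isCoprime_div_gcd_div_gcd hq0'
  have hgp : g * p₁ = p₀ := EuclideanDomain.mul_div_cancel' hgn (gcd_dvd_left p₀ q₀)
  have hgq : g * q₁ = q₀ := EuclideanDomain.mul_div_cancel' hgn (gcd_dvd_right p₀ q₀)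
  have hq₁0 : q₁ ≠ 0 := fun h => hq0' (by rw [← hgq, h, mul_zero])
  have hp₁0 : p₁ ≠ 0 := fun h => hp0' (by rw [← hgp, h, mul_zero])
  have hφinj := phi_inj K t htr
  have hφne : ∀ P : Polynomial ↥K, P ≠ 0 → phi K t P ≠ 0 := by
    intro P hP h
    exact hP (hφinj (by rw [h, map_zero]))
  set c₀ := q₁.leadingCoeff with hc₀
  have hc₀0 : c₀ ≠ 0 := leadingCoeff_ne_zero.2 hq₁0
  refine ⟨p₁ * C c₀⁻¹, q₁ * C c₀⁻¹, monic_mul_leadingCoeff_inv hq₁0, ?_, ?_, ?_, ?_⟩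
  · obtain ⟨x, y, hxy⟩ := hcop1
    refine ⟨C c₀ * x, C c₀ * y, ?_⟩
    have hCC : C c₀ * C c₀⁻¹ = 1 := by
      rw [← C_mul, mul_inv_cancel₀ hc₀0, C_1]
    calc C c₀ * x * (p₁ * C c₀⁻¹) + C c₀ * y * (q₁ * C c₀⁻¹)
        = (x * p₁ + y * q₁) * (C c₀ * C c₀⁻¹) := by ring
      _ = 1 := by rw [hxy, hCC, one_mul]
  · exact mul_ne_zero hp₁0 (fun h => by simpa [hc₀0] using (C_eq_zero.1 h))
  · exact hφne _ (mul_ne_zero hq₁0 (fun h => by simpa [hc₀0] using (C_eq_zero.1 h)))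
  · have hg0 := hφne g hgn
    have hq₁ne := hφne q₁ hq₁0
    have hc : phi K t (C c₀⁻¹) ≠ 0 := by
      have : phi K t (C c₀⁻¹) = ((c₀⁻¹ : ↥K) : F) := eval₂_C _ _
      rw [this]
      exact fun h => hc₀0 (inv_eq_zero.1 (by exact_mod_cast h))
    rw [hfeq, ← hgp, ← hgq, map_mul, map_mul, map_mul, map_mul,
      mul_div_mul_left _ _ hg0, mul_div_mul_right _ _ hc]
lemma reduce (τ : F →+* F) (hτinj : Function.Injective τ)
    (hτK : ∀ c ∈ K, τ c ∈ K)
    (htr : ∀ p : Polynomial F, (∀ n, p.coeff n ∈ K) → p.eval t = 0 → p = 0)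
    (a b : ↥K) (ha : (a : F) ≠ 0) (hτt : τ t = a * t + b)
    {f : F} (hf0 : f ≠ 0) (hτf : τ f = f)
    (hrep : ∃ p q : Polynomial ↥K, phi K t q ≠ 0 ∧ f = phi K t p / phi K t q) :
    ∃ p q : Polynomial ↥K, q.Monic ∧ IsCoprime p q ∧ p ≠ 0 ∧ phi K t q ≠ 0 ∧
      f = phi K t p / phi K t q ∧
      act K τ hτK a b q = q * C (a ^ q.natDegree) ∧
      act K τ hτK a b p = p * C (a ^ q.natDegree) := by
  obtain ⟨p, q, hqm, hcop, hp0, hq0, hfeq⟩ := coprime_monic_rep K t htr hf0 hrep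
  have ha' : a ≠ 0 := fun h => ha (by rw [h]; rfl)
  have hφinj := phi_inj K t htr
  have hφne : ∀ P : Polynomial ↥K, P ≠ 0 → phi K t P ≠ 0 := by
    intro P hP h
    exact hP (hφinj (by rw [h, map_zero]))
  have hτne : ∀ x : F, x ≠ 0 → τ x ≠ 0 := by
    intro x hx h
    exact hx (hτinj (by rw [h, map_zero]))
  have hq0' : q ≠ 0 := fun h => hq0 (by rw [h, map_zero])
  set T := act K τ hτK a b with hT
  have hφT : ∀ P, phi K t (T P) = τ (phi K t P) := fun P => phi_act K t τ hτK a b hτt P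
  -- main equation
  have heq : T p * q = p * T q := by
    apply hφinj
    rw [map_mul, map_mul, hφT, hφT]
    have h1 : τ (phi K t p) / τ (phi K t q) = phi K t p / phi K t q := by
      rw [← map_div₀, ← hfeq, hτf, hfeq]
    rw [div_eq_div_iff (hτne _ hq0) hq0] at h1
    rw [h1]
  -- q divides T q
  have hdvd : q ∣ T q := by
    have h3 : q ∣ p * T q := ⟨T p, by rw [← heq]; ring⟩
    exact (hcop.symm).dvd_of_dvd_mul_left h3
  obtain ⟨h, hTq⟩ := hdvd
  have hTq0 : T q ≠ 0 := fun hh => (hτne _ hq0) (by rw [← hφT, hh, map_zero])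
  have hh0 : h ≠ 0 := fun hh => hTq0 (by rw [hTq, hh, mul_zero])
  have hdeg : (T q).natDegree = q.natDegree := act_natDegree K τ hτK a b ha' q
  have hhdeg : h.natDegree = 0 := by
    have := natDegree_mul hq0' hh0
    rw [← hTq] at this
    omega
  have hhC : h = C (h.coeff 0) := eq_C_of_natDegree_eq_zero hhdeg
  -- compute the constant via leading coefficients
  have hlc : (T q).leadingCoeff = a ^ q.natDegree := by
    rw [hT, act_leadingCoeff K τ hτK a b ha' q, hqm.leadingCoeff, map_one, one_mul]
  have hc_val : h.coeff 0 = a ^ q.natDegree := by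
    have h4 : (T q).leadingCoeff = q.leadingCoeff * h.leadingCoeff := by
      rw [hTq, leadingCoeff_mul]
    rw [hqm.leadingCoeff, one_mul, hlc] at h4
    rw [hhC] at h4 ⊢
    simpa using h4.symm
  have hTq' : T q = q * C (a ^ q.natDegree) := by rw [hTq, hhC, hc_val]
  have hTp' : T p = p * C (a ^ q.natDegree) := by
    apply mul_right_cancel₀ hq0'
    rw [heq, hTq']
    ring
  exact ⟨p, q, hqm, hcop, hp0, hq0, hfeq, hTq', hTp'⟩
lemma pi_pow_form (σ : F ≃+* F) (hKinv : ∀ c ∈ K, σ c ∈ K)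
    (α : F) (hα : α ∈ K) (hα0 : α ≠ 0) (hσt : σ t = α * t) (m : ℕ) :
    ∃ a : ↥K, (a : F) ≠ 0 ∧ (⇑σ)^[m] t = a * t := by
  induction m with
  | zero => exact ⟨1, by simp, by simp⟩
  | succ n ih =>
    obtain ⟨a, ha0, hat⟩ := ih
    refine ⟨⟨σ a * α, K.mul_mem (hKinv _ a.2) hα⟩, ?_, ?_⟩
    · exact mul_ne_zero (fun h => ha0 (σ.injective (by rw [h, map_zero]))) hα0
    · rw [Function.iterate_succ_apply', hat, map_mul, hσt]
      push_cast
      ring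

lemma sigma_pow_form (σ : F ≃+* F) (hKinv : ∀ c ∈ K, σ c ∈ K)
    (β : F) (hβ : β ∈ K) (hσt : σ t = t + β) (m : ℕ) :
    ∃ b : ↥K, (⇑σ)^[m] t = t + b := by
  induction m with
  | zero => exact ⟨0, by simp⟩
  | succ n ih =>
    obtain ⟨b, hbt⟩ := ih
    refine ⟨⟨β + σ b, K.add_mem hβ (hKinv _ b.2)⟩, ?_⟩
    rw [Function.iterate_succ_apply', hbt, map_add, hσt]
    push_cast
    ring

lemma key (σ : F ≃+* F) (k : ℕ) (hk : 1 ≤ k)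
    (hKinv : ∀ c ∈ K, σ c ∈ K)
    (hfix : ∀ c, σ c = c → c ∈ K)
    (hIH : ∀ c ∈ K, (⇑σ)^[k] c = c → σ c = c)
    (htr : ∀ p : Polynomial F, (∀ n, p.coeff n ∈ K) → p.eval t = 0 → p = 0)
    (hg : (∃ α ∈ K, α ≠ 0 ∧ σ t = α * t) ∨ (∃ β ∈ K, σ t = t + β))
    (f : F) (hf : f ∈ K ⊔ Subfield.closure {t}) (hfk : (⇑σ)^[k] f = f) :
    σ f = f := by
  by_cases hf0 : f = 0
  · rw [hf0, map_zero]
  set τ : F →+* F := ((σ ^ k : F ≃+* F) : F →+* F) with hτdef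
  have hτeq : ∀ x, τ x = (⇑σ)^[k] x := fun x => (pow_apply' σ k x).symm
  have hτinj : Function.Injective τ := (σ ^ k : F ≃+* F).injective
  have hτK : ∀ c ∈ K, τ c ∈ K := fun c hc => by
    rw [hτeq]; exact iter_mem K σ hKinv k hc
  have hτf : τ f = f := by rw [hτeq]; exact hfk
  rcases hg with ⟨α, hα, hα0, hσt⟩ | ⟨β, hβ, hσt⟩
  · -- Π case
    obtain ⟨a, ha0, hat⟩ := pi_pow_form K t σ hKinv α hα hα0 hσt k
    have hτt : τ t = (a : F) * t + ((0 : ↥K) : F) := by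
      rw [hτeq, hat]; push_cast; ring
    obtain ⟨p, q, hqm, hcop, hp0, hq0, hfeq, hTq, hTp⟩ :=
      reduce K t τ hτinj hτK htr a 0 ha0 hτt hf0 hτf (rep_exists K t hf)
    set m := q.natDegree with hm
    have hcoeff : ∀ P : Polynomial ↥K, act K τ hτK a 0 P = P * C (a ^ m) →
        ∀ jj, P.coeff jj ≠ 0 → jj = m := by
      intro P hTP jj hcjj
      by_contra hne
      have h1 : (act K τ hτK a 0 P).coeff jj = res K τ hτK (P.coeff jj) * a ^ jj := by
        rw [act, show C (0 : ↥K) = 0 from map_zero _, add_zero, comp_C_mul_X_coeff, coeff_map]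
      have h2 : (P * C (a ^ m)).coeff jj = P.coeff jj * a ^ m := coeff_mul_C _ _ _
      have h3 : res K τ hτK (P.coeff jj) * a ^ jj = P.coeff jj * a ^ m := by
        rw [← h1, ← h2, hTP]
      have h4 : τ ((P.coeff jj : F)) * (a : F) ^ jj = (a : F) ^ m * (P.coeff jj : F) := by
        have h5 := congrArg (Subtype.val) h3
        push_cast at h5
        rw [res_apply] at h5
        linear_combination h5
      exact pi_contra K t σ k hk hKinv hfix hIH htr α hα hα0 hσt τ hτeq a ha0
        (by rw [hτt]; push_cast; ring) (P.coeff jj)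
        (fun h => hcjj (by exact_mod_cast h)) jj m hne h4
    have hm0 : m = 0 := by
      by_contra hmne
      have hXq : (X : Polynomial ↥K) ∣ q := X_dvd_iff.2 (by
        by_contra hq00
        exact hmne ((hcoeff q hTq 0 hq00).symm))
      have hXp : (X : Polynomial ↥K) ∣ p := X_dvd_iff.2 (by
        by_contra hp00
        exact hmne ((hcoeff p hTp 0 hp00).symm))
      exact not_isUnit_X (hcop.isUnit_of_dvd' hXp hXq)
    have hq1 : q = 1 := hqm.natDegree_eq_zero.1 hm0
    have hpdeg : p.natDegree = 0 := by
      have := hcoeff p hTp p.natDegree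
        (by rw [← leadingCoeff]; exact leadingCoeff_ne_zero.2 hp0)
      omega
    have hfK : f ∈ K := by
      rw [hfeq, hq1, map_one, div_one, eq_C_of_natDegree_eq_zero hpdeg]
      have : phi K t (C (p.coeff 0)) = ((p.coeff 0 : ↥K) : F) := eval₂_C _ _
      rw [this]
      exact (p.coeff 0).2
    exact hIH f hfK hfk
  · -- Σ case
    obtain ⟨b, hbt⟩ := sigma_pow_form K t σ hKinv β hβ hσt k
    have hτt : τ t = ((1 : ↥K) : F) * t + (b : F) := by
      rw [hτeq, hbt]; push_cast; ring
    have h1ne : ((1 : ↥K) : F) ≠ 0 := by simp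
    obtain ⟨p, q, hqm, hcop, hp0, hq0, hfeq, hTq, hTp⟩ :=
      reduce K t τ hτinj hτK htr 1 b h1ne hτt hf0 hτf (rep_exists K t hf)
    have hτt' : τ t = t + (b : F) := by rw [hτt]; push_cast; ring
    have hTq' : act K τ hτK 1 b q = q := by rw [hTq, one_pow, C_1, mul_one]
    have hTp' : act K τ hτK 1 b p = p := by rw [hTp, one_pow, C_1, mul_one]
    have hqdeg : q.natDegree = 0 := by
      by_contra hdq
      exact sigma_contra K t σ k hk hKinv hfix hIH htr β hβ hσt τ hτeq hτK b hτt' q hTq'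
        (by omega)
    have hpdeg : p.natDegree = 0 := by
      by_contra hdp
      exact sigma_contra K t σ k hk hKinv hfix hIH htr β hβ hσt τ hτeq hτK b hτt' p hTp'
        (by omega)
    have hq1 : q = 1 := hqm.natDegree_eq_zero.1 hqdeg
    have hfK : f ∈ K := by
      rw [hfeq, hq1, map_one, div_one, eq_C_of_natDegree_eq_zero hpdeg]
      have : phi K t (C (p.coeff 0)) = ((p.coeff 0 : ↥K) : F) := eval₂_C _ _
      rw [this]
      exact (p.coeff 0).2
    exact hIH f hfK hfk
end
end StmtAux5

/-- A ΠΣ-field `F` over its constant field `K = Fc 0` (built as a tower of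
rational function field extensions) is constant-stable. -/
theorem stmt_5 (F : Type*) [Field F] [CharZero F] (σ : F ≃+* F)
    (e : ℕ) (t : ℕ → F) (Fc : ℕ → Subfield F)
    (hσK : ∀ c ∈ Fc 0, σ c = c)
    (hconst : ∀ c : F, σ c = c → c ∈ Fc 0)
    (htop : Fc e = ⊤)
    (hstep : ∀ i < e, Fc (i + 1) = Fc i ⊔ Subfield.closure {t i})
    (htrans : ∀ i < e, ∀ p : Polynomial F, (∀ n : ℕ, p.coeff n ∈ Fc i) →
        Polynomial.eval (t i) p = 0 → p = 0)
    (hinv : ∀ i ≤ e, ∀ c ∈ Fc i, σ c ∈ Fc i)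
    (hgen : ∀ i < e, (∃ α ∈ Fc i, α ≠ 0 ∧ σ (t i) = α * t i) ∨
      (∃ β ∈ Fc i, σ (t i) = t i + β)) :
    ∀ k : ℕ, 1 ≤ k → ∀ f : F, (⇑σ)^[k] f = f → σ f = f := by
  intro k hk
  have hmono : ∀ i, i ≤ e → Fc 0 ≤ Fc i := by
    intro i
    induction i with
    | zero => intro _; exact le_rfl
    | succ n ih =>
      intro hn
      have h1 : Fc 0 ≤ Fc n := ih (by omega)
      rw [hstep n (by omega)]
      exact h1.trans le_sup_left
  have main : ∀ i, i ≤ e → ∀ f ∈ Fc i, (⇑σ)^[k] f = f → σ f = f := by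
    intro i
    induction i with
    | zero => intro _ f hf _; exact hσK f hf
    | succ n ih =>
      intro hn f hf hfk
      have hne : n < e := by omega
      rw [hstep n hne] at hf
      exact StmtAux5.key (Fc n) (t n) σ k hk (fun c hc => hinv n (by omega) c hc)
        (fun c hc => hmono n (by omega) (hconst c hc))
        (fun c hc hck => ih (by omega) c hc hck)
        (htrans n hne) (hgen n hne) f hf hfk
  intro f hfk
  exact main e le_rfl f (htop ▸ Subfield.mem_top f) hfk
end

section
/- Let (F,σ) be a difference field with constant field K = const(F,σ), and suppose there exists a K-embedding τ : F → Seq(K), i.e., an injective difference ring homomorphism into the ring of K-sequences modulo eventual equality (with the shift automorphism), sending each c ∈ K to the constant sequence. Then (F,σ) is constant-stable. -/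
/-!
If `σ^[k] f = f`, the sequence representing `τ f` is eventually `k`-periodic, because `τ`
intertwines `σ` with the shift. It therefore eventually takes values in a finite set `S ⊆ K`,
so `τ` kills `∏_{c ∈ S} (f - c)`; injectivity and the absence of zero divisors in `F` force
`f = c` for some `c ∈ S`, and constants are fixed by `σ`.
-/

open Filter

theorem germ_iterate_eq_shift {F K : Type*} {φ : F → F} {T : F → Germ (atTop : Filter ℕ) K}
    (hshift : ∀ f : F, T (φ f) = (T f).compTendsto (fun n => n + 1) (tendsto_add_atTop_nat 1))
    {f : F} {a : ℕ → K} (ha : T f = ↑a) (k : ℕ) :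
    T (φ^[k] f) = ↑(fun n => a (n + k)) := by
  induction k with
  | zero => simpa using ha
  | succ k ih =>
    rw [Function.iterate_succ_apply', hshift, ih, Germ.coe_compTendsto]
    congr 1
    funext n
    simp only [Function.comp_apply, Nat.add_right_comm n 1 k, Nat.add_assoc]

theorem exists_finset_eventually_mem_of_eventually_periodic {β : Type*} {a : ℕ → β} {k : ℕ}
    (hk : 0 < k) (h : ∀ᶠ n in atTop, a (n + k) = a n) :
    ∃ S : Finset β, ∀ᶠ n in atTop, a n ∈ S := by
  classical
  obtain ⟨N, hN⟩ := eventually_atTop.mp h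
  have hper : Function.Periodic (fun m => a (N + m)) k := fun m => by
    simpa [Nat.add_assoc] using hN (N + m) (Nat.le_add_right N m)
  refine ⟨(Finset.range k).image fun j => a (N + j), eventually_atTop.mpr ⟨N, fun n hn => ?_⟩⟩
  obtain ⟨m, rfl⟩ := Nat.exists_eq_add_of_le hn
  exact Finset.mem_image.mpr ⟨m % k, Finset.mem_range.mpr (Nat.mod_lt m hk), hper.map_mod_nat m⟩

theorem exists_mem_finset_eq_of_germ_eventually_mem {α R K : Type*} [CommRing R] [IsDomain R]
    [CommRing K] {l : Filter α} (ι : K →+* R) (τ : R →+* Germ l K) (hinj : Function.Injective τ)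
    (hconst : ∀ c : K, τ (ι c) = ↑(fun _ : α => c)) {f : R} {a : α → K} (ha : τ f = ↑a)
    {S : Finset K} (hS : ∀ᶠ x in l, a x ∈ S) :
    ∃ c ∈ S, f = ι c := by
  have hτ : τ (∏ c ∈ S, (f - ι c)) = ↑(fun x => ∏ c ∈ S, (a x - c)) := by
    have hprod : (fun x => ∏ c ∈ S, (a x - c)) = ∏ c ∈ S, (a - fun _ => c) := by
      funext x
      simp [Finset.prod_apply]
    simp only [hprod, map_prod, map_sub, ha, hconst]
    exact (map_prod (Germ.coeRingHom l) _ S).symm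
  have hzero : τ (∏ c ∈ S, (f - ι c)) = τ 0 := by
    rw [hτ, map_zero]
    refine Germ.coe_eq.mpr (hS.mono fun x hx => ?_)
    exact Finset.prod_eq_zero hx (sub_self _)
  obtain ⟨c, hc, hfc⟩ := Finset.prod_eq_zero_iff.mp (hinj hzero)
  exact ⟨c, hc, sub_eq_zero.mp hfc⟩

theorem stmt_6_general (F K : Type*) [Field F] [Field K] (σ : F ≃+* F)
    (ι : K →+* F)
    (hιc : ∀ c : K, σ (ι c) = ι c)
    (τ : F →+* Filter.Germ (Filter.atTop : Filter ℕ) K)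
    (hinj : Function.Injective τ)
    (hshift : ∀ f : F, τ (σ f) = (τ f).compTendsto (fun n => n + 1)
        (Filter.tendsto_add_atTop_nat 1))
    (hconstmap : ∀ c : K, τ (ι c) = (↑(fun _ : ℕ => c) : Filter.Germ Filter.atTop K)) :
    ∀ k : ℕ, 1 ≤ k → ∀ f : F, (⇑σ)^[k] f = f → σ f = f := by
  intro k hk f hf
  obtain ⟨a, ha⟩ : ∃ a : ℕ → K, τ f = ↑a := ⟨(τ f).out, (τ f).out_eq.symm⟩
  have hper : (↑(fun n => a (n + k)) : Germ (atTop : Filter ℕ) K) = ↑a := by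
    rw [← germ_iterate_eq_shift hshift ha k, hf, ha]
  obtain ⟨S, hS⟩ := exists_finset_eventually_mem_of_eventually_periodic hk (Germ.coe_eq.mp hper)
  obtain ⟨c, -, rfl⟩ := exists_mem_finset_eq_of_germ_eventually_mem ι τ hinj hconstmap ha hS
  exact hιc c

/-- If a difference field `(F,σ)` with constant field `K` admits a `K`-embedding into the
ring of sequences `Seq(K)` (germs at infinity with the shift), then `(F,σ)` is
constant-stable. -/
theorem stmt_6 (F K : Type*) [Field F] [CharZero F] [Field K] (σ : F ≃+* F)
    (ι : K →+* F)
    (hιc : ∀ c : K, σ (ι c) = ι c)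
    (hconst : ∀ f : F, σ f = f → ∃ c : K, f = ι c)
    (τ : F →+* Filter.Germ (Filter.atTop : Filter ℕ) K)
    (hinj : Function.Injective τ)
    (hshift : ∀ f : F, τ (σ f) = (τ f).compTendsto (fun n => n + 1)
        (Filter.tendsto_add_atTop_nat 1))
    (hconstmap : ∀ c : K, τ (ι c) = (↑(fun _ : ℕ => c) : Filter.Germ Filter.atTop K)) :
    ∀ k : ℕ, 1 ≤ k → ∀ f : F, (⇑σ)^[k] f = f → σ f = f :=
  stmt_6_general F K σ ι hιc τ hinj hshift hconstmap
end

section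
/- Let (A[z],σ) be an A-extension of order λ of a constant-stable difference ring (A,σ) whose constant set K = const(A,σ) is a field, with σ(z) = a·z where a ∈ K* is a primitive λ-th root of unity. Then const(A[z],σ) = const(A,σ), i.e., z is an R-monomial. -/
/-!
Write a constant `f` in the basis `1, z, …, z^(λ-1)`. Since `σ z = a z`, comparing coefficients of
`σ f = f` gives `σ(cᵢ) aⁱ = cᵢ`. Iterating `λ` times and using `a^λ = 1` shows that each `cᵢ` is a
constant of `σ^λ`, hence of `σ` by constant-stability. Then `cᵢ (aⁱ - 1) = 0`, and for `0 < i < λ`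
the constant `aⁱ - 1` is nonzero, hence invertible in the constant field, so `cᵢ = 0` and
`f = c₀` lies in `A`.
-/

section DifferenceRing

variable {A : Type*} [CommRing A] (σ : A ≃+* A)

theorem iterate_mul_pow_eq_of_apply_mul_eq {b c : A} (hb : σ b = b) (hc : σ c * b = c) (k : ℕ) :
    σ^[k] c * b ^ k = c := by
  induction k with
  | zero => simp
  | succ k ih =>
    calc σ^[k + 1] c * b ^ (k + 1) = σ (σ^[k] c * b ^ k) * b := by
          rw [Function.iterate_succ_apply', map_mul, map_pow, hb, pow_succ, mul_assoc]
      _ = c := by rw [ih, hc]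

theorem eq_zero_of_mul_eq_self_of_const
    (hK : ∀ c : A, σ c = c → c ≠ 0 → ∃ d : A, σ d = d ∧ c * d = 1)
    {b c : A} (hb : σ b = b) (hb1 : b ≠ 1) (hc : c * b = c) : c = 0 := by
  obtain ⟨d, -, hd⟩ := hK (b - 1) (by rw [map_sub, map_one, hb]) (sub_ne_zero.mpr hb1)
  calc c = (c * b - c) * d := by linear_combination (-c) * hd
    _ = 0 := by rw [hc, sub_self, zero_mul]

end DifferenceRing

theorem map_sum_mul_pow_of_apply_eq_mul {A E : Type*} [CommRing A] [CommRing E]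
    (σA : A ≃+* A) (σE : E ≃+* E) (ι : A →+* E) (hcomm : ∀ c : A, σE (ι c) = ι (σA c))
    {z : E} {a : A} (hσz : σE z = ι a * z) {n : ℕ} (c : Fin n → A) :
    σE (∑ i : Fin n, ι (c i) * z ^ (i : ℕ)) = ∑ i : Fin n, ι (σA (c i) * a ^ (i : ℕ)) * z ^ (i : ℕ) := by
  simp only [map_sum, map_mul, map_pow, hcomm, hσz, mul_pow]
  exact Finset.sum_congr rfl fun i _ => by ring

theorem stmt_8_general (A E : Type*) [CommRing A] [CommRing E]
    (σA : A ≃+* A) (σE : E ≃+* E) (ι : A →+* E)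
    (hcomm : ∀ c : A, σE (ι c) = ι (σA c))
    (hcs : ∀ k : ℕ, 1 ≤ k → ∀ c : A, (⇑σA)^[k] c = c → σA c = c)
    (hK : ∀ c : A, σA c = c → c ≠ 0 → ∃ d : A, σA d = d ∧ c * d = 1)
    (lam : ℕ) (hlam : 1 < lam) (z : E) (a : A)
    (haconst : σA a = a)
    (haprim : a ^ lam = 1 ∧ ∀ j : ℕ, 1 ≤ j → j < lam → a ^ j ≠ 1)
    (hσz : σE z = ι a * z)
    (hbasis : ∀ f : E, ∃! c : Fin lam → A, f = ∑ i : Fin lam, ι (c i) * z ^ (i : ℕ)) :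
    ∀ f : E, σE f = f → ∃ c : A, σA c = c ∧ f = ι c := by
  intro f hf
  obtain ⟨c, hc, huniq⟩ := hbasis f
  have hcoeff (i : Fin lam) : σA (c i) * a ^ (i : ℕ) = c i := by
    refine congrFun (huniq (fun j => σA (c j) * a ^ (j : ℕ)) ?_) i
    show f = _
    rw [← map_sum_mul_pow_of_apply_eq_mul σA σE ι hcomm hσz, ← hc, hf]
  have hconst (i : Fin lam) : σA (c i) = c i := by
    refine hcs lam (by omega) _ ?_
    have hiter := iterate_mul_pow_eq_of_apply_mul_eq σA (by rw [map_pow, haconst]) (hcoeff i) lam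
    rwa [← pow_mul, mul_comm (i : ℕ), pow_mul, haprim.1, one_pow, mul_one] at hiter
  have hzero (i : Fin lam) (hi : (i : ℕ) ≠ 0) : c i = 0 :=
    eq_zero_of_mul_eq_self_of_const σA hK (by rw [map_pow, haconst])
      (haprim.2 i (by omega) i.isLt) (by simpa only [hconst i] using hcoeff i)
  obtain ⟨n, rfl⟩ : ∃ n, lam = n + 1 := ⟨lam - 1, by omega⟩
  refine ⟨c 0, hconst 0, ?_⟩
  rw [hc, Fin.sum_univ_succ]
  simp [fun i : Fin n => hzero i.succ (Nat.succ_ne_zero _)]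

/-- For an A-extension `A[z]` of order `lam` of a constant-stable difference ring whose
constants form a field, with `σ z = a·z` for a primitive `lam`-th root of unity
`a` among the constants, the constants do not grow (`z` is an R-monomial). -/
theorem stmt_8 (A E : Type*) [CommRing A] [CharZero A] [CommRing E]
    (σA : A ≃+* A) (σE : E ≃+* E) (ι : A →+* E)
    (hinj : Function.Injective ι)
    (hcomm : ∀ c : A, σE (ι c) = ι (σA c))
    (hcs : ∀ k : ℕ, 1 ≤ k → ∀ c : A, (⇑σA)^[k] c = c → σA c = c)
    (hK : ∀ c : A, σA c = c → c ≠ 0 → ∃ d : A, σA d = d ∧ c * d = 1)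
    (lam : ℕ) (hlam : 1 < lam) (z : E) (a : A)
    (haconst : σA a = a)
    (haprim : a ^ lam = 1 ∧ ∀ j : ℕ, 1 ≤ j → j < lam → a ^ j ≠ 1)
    (hz : z ^ lam = 1) (hσz : σE z = ι a * z)
    (hbasis : ∀ f : E, ∃! c : Fin lam → A, f = ∑ i : Fin lam, ι (c i) * z ^ (i : ℕ)) :
    ∀ f : E, σE f = f → ∃ c : A, σA c = c ∧ f = ι c :=
  stmt_8_general A E σA σE ι hcomm hcs hK lam hlam z a haconst haprim hσz hbasis
end

section
/- Let (A[z],σ) be an R-extension of a difference ring (A,σ) of order λ with σ(z) = a·z (so const(A[z],σ) = const(A,σ), z^λ = 1). Then a is a primitive λ-th root of unity and ord(z^k) = ord(a^k) for all 0 ≤ k ≤ λ. -/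
/-!
Applying `σ` to `z ^ λ = 1` gives `a ^ λ = 1`. If `a ^ j = 1` for some `0 < j < λ`, then
`σ (z ^ j) = a ^ j z ^ j = z ^ j`, so `z ^ j` is a constant, hence lies in `A`; but the powers
`1, z, …, z ^ (λ - 1)` form an `A`-basis of `A[z]`, so no `z ^ j` with `0 < j < λ` lies in `A`.
The same fact shows that `z` has order exactly `λ`, so `z` and `a` are primitive `λ`-th roots of
unity and their powers have equal orders.
-/

theorem orderOf_pow_eq_orderOf_pow {M N : Type*} [Monoid M] [Monoid N] {x : M} {y : N}
    (h : orderOf x = orderOf y) (k : ℕ) : orderOf (x ^ k) = orderOf (y ^ k) :=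
  orderOf_eq_orderOf_iff.2 fun n => by
    simp only [← pow_mul]
    exact orderOf_eq_orderOf_iff.1 h _

theorem pow_eq_one_of_map_eq_mul {M : Type*} [CommMonoid M] (σ : M →* M) {z b : M} {n : ℕ}
    (hz : z ^ n = 1) (hσz : σ z = b * z) : b ^ n = 1 := by
  have := congrArg σ hz
  rwa [map_pow, hσz, mul_pow, hz, mul_one, map_one] at this

section PowerBasis

variable {A E : Type*} [CommRing A] [CommRing E] (ι : A →+* E) (z : E) {lam : ℕ}

theorem sum_pi_single_mul_pow (j : Fin lam) (c : A) :
    ∑ i : Fin lam, ι ((Pi.single j c : Fin lam → A) i) * z ^ (i : ℕ) =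
      ι c * z ^ (j : ℕ) := by
  simp [Pi.single_apply, apply_ite ι, ite_mul]

theorem pow_notMem_range_of_existsUnique_repr [Nontrivial A]
    (hbasis : ∀ f : E, ∃! c : Fin lam → A, f = ∑ i : Fin lam, ι (c i) * z ^ (i : ℕ))
    {j : ℕ} (hj : 0 < j) (hjlam : j < lam) : z ^ j ∉ Set.range ι := by
  rintro ⟨c, hc⟩
  have hz_repr := sum_pi_single_mul_pow ι z ⟨j, hjlam⟩ 1
  have hc_repr := sum_pi_single_mul_pow ι z ⟨0, hj.trans hjlam⟩ c
  rw [map_one, one_mul] at hz_repr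
  rw [pow_zero, mul_one] at hc_repr
  have hsingle :
      Pi.single (⟨j, hjlam⟩ : Fin lam) (1 : A) = Pi.single ⟨0, hj.trans hjlam⟩ c :=
    (hbasis (z ^ j)).unique hz_repr.symm (hc_repr.trans hc).symm
  have := congrFun hsingle ⟨j, hjlam⟩
  simp [Fin.ext_iff, hj.ne'] at this

end PowerBasis

theorem stmt_9_general (A E : Type*) [CommRing A] [CharZero A] [CommRing E]
    (σA : A ≃+* A) (σE : E ≃+* E) (ι : A →+* E)
    (hinj : Function.Injective ι)
    (lam : ℕ) (z : E) (a : A)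
    (hz : z ^ lam = 1) (hσz : σE z = ι a * z)
    (hbasis : ∀ f : E, ∃! c : Fin lam → A, f = ∑ i : Fin lam, ι (c i) * z ^ (i : ℕ))
    (hconst : ∀ f : E, σE f = f → ∃ c : A, σA c = c ∧ f = ι c) :
    (a ^ lam = 1 ∧ ∀ j : ℕ, 1 ≤ j → j < lam → a ^ j ≠ 1) ∧
      ∀ k : ℕ, k ≤ lam → orderOf (z ^ k) = orderOf (a ^ k) := by
  obtain rfl | hlam := lam.eq_zero_or_pos
  · simp
  have hnotMem {j : ℕ} : 0 < j → j < lam → z ^ j ∉ Set.range ι :=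
    pow_notMem_range_of_existsUnique_repr ι z hbasis
  have ha : a ^ lam = 1 :=
    hinj <| by simpa using pow_eq_one_of_map_eq_mul σE.toMonoidHom hz hσz
  have hz_prim : IsPrimitiveRoot z lam :=
    .mk_of_lt z hlam hz fun j hj hjlam h => hnotMem hj hjlam ⟨1, by rw [map_one, h]⟩
  have ha_prim : IsPrimitiveRoot a lam := by
    refine .mk_of_lt a hlam ha fun j hj hjlam h => hnotMem hj hjlam ?_
    have hfixed : σE (z ^ j) = z ^ j := by
      rw [map_pow, hσz, mul_pow, ← map_pow, h, map_one, one_mul]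
    obtain ⟨c, -, hc⟩ := hconst (z ^ j) hfixed
    exact ⟨c, hc.symm⟩
  refine ⟨⟨ha, fun j hj hjlam => ha_prim.pow_ne_one_of_pos_of_lt (by omega) hjlam⟩,
    fun k _ => orderOf_pow_eq_orderOf_pow ?_ k⟩
  rw [← hz_prim.eq_orderOf, ← ha_prim.eq_orderOf]

/-- For an R-extension `A[z]` of order `lam` (`z^lam = 1`, `σ z = a·z`, constants
unchanged), `a` is a primitive `lam`-th root of unity and `ord(z^k) = ord(a^k)` for
all `0 ≤ k ≤ lam`. -/
theorem stmt_9 (A E : Type*) [CommRing A] [CharZero A] [CommRing E]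
    (σA : A ≃+* A) (σE : E ≃+* E) (ι : A →+* E)
    (hinj : Function.Injective ι)
    (hcomm : ∀ c : A, σE (ι c) = ι (σA c))
    (lam : ℕ) (hlam : 1 < lam) (z : E) (a : A) (ha : IsUnit a)
    (hz : z ^ lam = 1) (hσz : σE z = ι a * z)
    (hbasis : ∀ f : E, ∃! c : Fin lam → A, f = ∑ i : Fin lam, ι (c i) * z ^ (i : ℕ))
    (hconst : ∀ f : E, σE f = f → ∃ c : A, σA c = c ∧ f = ι c) :
    (a ^ lam = 1 ∧ ∀ j : ℕ, 1 ≤ j → j < lam → a ^ j ≠ 1) ∧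
      ∀ k : ℕ, k ≤ lam → orderOf (z ^ k) = orderOf (a ^ k) :=
  stmt_9_general A E σA σE ι hinj lam z a hz hσz hbasis hconst
end

section
/- Let (F,σ) be a constant-stable difference field with constant field K, and let (E,σ) with E = F[z₁]...[z_l] be an A-extension where σ(z_i) = a_i·z_i with a_i ∈ K* of order λ_i for each i. Then const(E,σ) = K if and only if each a_i is a primitive λ_i-th root of unity and gcd(λ_i, λ_j) = 1 for all i ≠ j. -/
/-!
The monomials `z^ν` (`0 ≤ ν i < λ i`) form an `F`-basis of `E` and `σ (z^ν) = a^ν z^ν`, so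
`f = ∑ c_ν z^ν` is a constant iff `σ (c_ν) a^ν = c_ν` for all `ν`. As `a^ν` is a constant root of
unity, of order `N` say, iterating gives `σ^N (c_ν) = c_ν`, and constant-stability turns this into
`σ (c_ν) = c_ν`; hence `c_ν = 0` unless `a^ν = 1`. Conversely, `a^δ = 1` with `δ ≠ 0` makes `z^δ` a
new constant. So `const(E) = K` iff the `a_i` satisfy no relations besides `a_i^{λ_i} = 1`.
That happens iff each `a_i` is a primitive `λ_i`-th root of unity and the `λ_i` are pairwise
coprime: if `g = gcd(λ_i, λ_j) > 1`, then `a_i^{λ_i/g}` and `a_j^{λ_j/g}` are primitive `g`-th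
roots of unity in the field `F`, so the first is a power of the second, a nontrivial relation;
if the orders are coprime, raising a relation to `∏_{k ≠ i} λ_k` isolates `a_i`.
-/

open Finset Function

section Relations

variable {κ M : Type*} [Fintype κ]

def OnlyTrivialRelations [CommMonoid M] (a : κ → M) (lam : κ → ℕ) : Prop :=
  ∀ ν : κ → ℕ, ∏ i, a i ^ ν i = 1 → ∀ i, lam i ∣ ν i

variable [DecidableEq κ]

theorem prod_pow_single [CommMonoid M] (a : κ → M) (i : κ) (n : ℕ) :
    ∏ k, a k ^ Pi.single i n k = a i ^ n := by
  simp [Pi.single_apply, pow_ite]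

theorem OnlyTrivialRelations.isPrimitiveRoot [CommMonoid M] {a : κ → M} {lam : κ → ℕ}
    (h : OnlyTrivialRelations a lam) (hroot : ∀ i, a i ^ lam i = 1) (i : κ) :
    IsPrimitiveRoot (a i) (lam i) :=
  ⟨hroot i, fun m hm => by simpa using h (Pi.single i m) (by rwa [prod_pow_single]) i⟩

theorem OnlyTrivialRelations.coprime {R : Type*} [CommRing R] [IsDomain R] {a : κ → R}
    {lam : κ → ℕ} (h : OnlyTrivialRelations a lam) (hlam : ∀ i, 0 < lam i)
    (hroot : ∀ i, a i ^ lam i = 1) : Pairwise (Nat.Coprime on lam) := by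
  intro i j hij
  obtain ⟨p, hp⟩ := Nat.gcd_dvd_left (lam i) (lam j)
  obtain ⟨m, hm⟩ := Nat.gcd_dvd_right (lam i) (lam j)
  set g := Nat.gcd (lam i) (lam j)
  have hg : 0 < g := Nat.gcd_pos_of_pos_left _ (hlam i)
  have : NeZero g := ⟨hg.ne'⟩
  have hζi := (h.isPrimitiveRoot hroot i).pow (hlam i) (hp.trans (mul_comm _ _))
  have hζj := (h.isPrimitiveRoot hroot j).pow (hlam j) (hm.trans (mul_comm _ _))
  obtain ⟨q, -, hq⟩ := hζj.eq_pow_of_pow_eq_one (ξ := (a i ^ p) ^ (g - 1))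
    (by rw [pow_right_comm, hζi.pow_eq_one, one_pow])
  have hrel : ∏ k, a k ^ (Pi.single i p + Pi.single j (m * q) : κ → ℕ) k = 1 := by
    simp only [Pi.add_apply, pow_add, prod_mul_distrib, prod_pow_single]
    rw [pow_mul, hq, mul_pow_sub_one hg.ne', hζi.pow_eq_one]
  have hdvd : g * p ∣ 1 * p := by
    simpa [hp, Pi.single_eq_of_ne hij] using h _ hrel i
  have hp0 : 0 < p := Nat.pos_of_mul_pos_left (hp ▸ hlam i)
  exact Nat.dvd_one.1 (Nat.dvd_of_mul_dvd_mul_right hp0 hdvd)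

theorem OnlyTrivialRelations.of_isPrimitiveRoot [CommMonoid M] {a : κ → M} {lam : κ → ℕ}
    (ha : ∀ i, IsPrimitiveRoot (a i) (lam i)) (hcop : Pairwise (Nat.Coprime on lam)) :
    OnlyTrivialRelations a lam := by
  intro ν h i
  set Q := ∏ k ∈ univ.erase i, lam k
  have hQ : a i ^ (ν i * Q) = 1 := by
    have hrest : ∏ k ∈ univ.erase i, a k ^ (ν k * Q) = 1 :=
      prod_eq_one fun k hk =>
        ((ha k).pow_eq_one_iff_dvd _).2 (dvd_mul_of_dvd_right (dvd_prod_of_mem lam hk) _)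
    calc a i ^ (ν i * Q) = ∏ k, a k ^ (ν k * Q) := by
          rw [← mul_prod_erase _ _ (mem_univ i), hrest, mul_one]
      _ = (∏ k, a k ^ ν k) ^ Q := by simp only [pow_mul, prod_pow]
      _ = 1 := by rw [h, one_pow]
  have hcopQ : Nat.Coprime (lam i) Q :=
    Nat.Coprime.prod_right fun k hk => hcop (mem_erase.1 hk).1.symm
  exact hcopQ.dvd_of_dvd_mul_right (((ha i).pow_eq_one_iff_dvd _).1 hQ)

theorem onlyTrivialRelations_iff {R : Type*} [CommRing R] [IsDomain R] {a : κ → R}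
    {lam : κ → ℕ} (hlam : ∀ i, 0 < lam i) (hroot : ∀ i, a i ^ lam i = 1) :
    OnlyTrivialRelations a lam ↔
      (∀ i, IsPrimitiveRoot (a i) (lam i)) ∧ Pairwise (Nat.Coprime on lam) :=
  ⟨fun h => ⟨h.isPrimitiveRoot hroot, h.coprime hlam hroot⟩,
    fun h => .of_isPrimitiveRoot h.1 h.2⟩

end Relations

section MultiPow

variable {κ M : Type*} [Fintype κ] {lam : κ → ℕ}

def multiPow [CommMonoid M] (x : κ → M) (ν : ∀ i, Fin (lam i)) : M :=
  ∏ i, x i ^ (ν i : ℕ)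

@[simp]
theorem multiPow_zero [CommMonoid M] [∀ i, NeZero (lam i)] (x : κ → M) :
    multiPow x (0 : ∀ i, Fin (lam i)) = 1 := by
  simp [multiPow]

theorem isOfFinOrder_multiPow [CommMonoid M] {x : κ → M} (hx : ∀ i, IsOfFinOrder (x i))
    (ν : ∀ i, Fin (lam i)) : IsOfFinOrder (multiPow x ν) :=
  prod_induction _ _ (fun _ _ => IsOfFinOrder.mul) IsOfFinOrder.one fun i _ => (hx i).pow

theorem map_multiPow {N G : Type*} [CommMonoid M] [CommMonoid N] [FunLike G M N]
    [MonoidHomClass G M N] (f : G) (x : κ → M) (ν : ∀ i, Fin (lam i)) :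
    f (multiPow x ν) = multiPow (fun i => f (x i)) ν := by
  simp only [multiPow, map_prod, map_pow]

theorem multiPow_mul [CommMonoid M] (x y : κ → M) (ν : ∀ i, Fin (lam i)) :
    multiPow (fun i => x i * y i) ν = multiPow x ν * multiPow y ν := by
  simp only [multiPow, mul_pow, prod_mul_distrib]

theorem onlyTrivialRelations_iff_multiPow [DecidableEq κ] [CommMonoid M] [∀ i, NeZero (lam i)]
    {a : κ → M} (hroot : ∀ i, a i ^ lam i = 1) :
    OnlyTrivialRelations a lam ↔ ∀ δ : ∀ i, Fin (lam i), multiPow a δ = 1 → δ = 0 := by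
  refine ⟨fun h δ hδ => funext fun i => Fin.ext ?_, fun h ν hν i => ?_⟩
  · exact Nat.eq_zero_of_dvd_of_lt (h (fun i => δ i) hδ i) (δ i).isLt
  · let δ : ∀ i, Fin (lam i) := fun i => ⟨ν i % lam i, Nat.mod_lt _ (NeZero.pos _)⟩
    have hδ : multiPow a δ = 1 := by
      simpa only [multiPow, δ, ← pow_eq_pow_mod _ (hroot _)] using hν
    exact Nat.dvd_of_mod_eq_zero (congrArg Fin.val (congrFun (h δ hδ) i))

end MultiPow

def IsConstantStable {R : Type*} [Semiring R] (σ : R ≃+* R) : Prop :=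
  ∀ k : ℕ, 1 ≤ k → ∀ c : R, σ^[k] c = c → σ c = c

theorem IsConstantStable.apply_eq_of_apply_mul_eq {R : Type*} [CommSemiring R] {σ : R ≃+* R}
    (hσ : IsConstantStable σ) {A c : R} (hA : σ A = A) (hfin : IsOfFinOrder A)
    (h : σ c * A = c) : σ c = c := by
  have hiter : ∀ k, σ^[k] c * A ^ k = c := by
    intro k
    induction k with
    | zero => simp
    | succ k ih =>
      calc σ^[k + 1] c * A ^ (k + 1) = σ (σ^[k] c * A ^ k) * A := by
            rw [iterate_succ_apply', map_mul, map_pow, hA, pow_succ, mul_assoc]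
        _ = c := by rw [ih, h]
  exact hσ _ hfin.orderOf_pos c (by simpa [pow_orderOf_eq_one] using hiter (orderOf A))

section AExtension

variable {F E κ : Type*} [CommRing F] [CommRing E] [Fintype κ] {lam : κ → ℕ}
  {σF : F ≃+* F} {σE : E ≃+* E} {ι : F →+* E} {z : κ → E} {a : κ → F}

theorem apply_multiPow (hσz : ∀ i, σE (z i) = ι (a i) * z i) (ν : ∀ i, Fin (lam i)) :
    σE (multiPow z ν) = ι (multiPow a ν) * multiPow z ν := by
  rw [map_multiPow, map_multiPow, ← multiPow_mul]
  simp only [hσz]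

variable [DecidableEq κ]

def monomialCombination (lam : κ → ℕ) (ι : F →+* E) (z : κ → E)
    (c : (∀ i, Fin (lam i)) → F) : E :=
  ∑ ν, ι (c ν) * multiPow z ν

theorem monomialCombination_single (δ : ∀ i, Fin (lam i)) (x : F) :
    monomialCombination lam ι z (Pi.single δ x) = ι x * multiPow z δ := by
  simp [monomialCombination, Pi.single_apply, apply_ite ι, ite_mul]

theorem apply_monomialCombination (hcomm : ∀ c, σE (ι c) = ι (σF c))
    (hσz : ∀ i, σE (z i) = ι (a i) * z i) (c : (∀ i, Fin (lam i)) → F) :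
    σE (monomialCombination lam ι z c) =
      monomialCombination lam ι z (fun ν => σF (c ν) * multiPow a ν) := by
  simp only [monomialCombination, map_sum, map_mul, hcomm, apply_multiPow hσz, mul_assoc]

theorem eq_zero_of_multiPow_eq_one [Nontrivial F] [∀ i, NeZero (lam i)]
    (hσz : ∀ i, σE (z i) = ι (a i) * z i) (hinj : Injective (monomialCombination lam ι z))
    (hconst : ∀ f, σE f = f → ∃ c, σF c = c ∧ f = ι c) {δ : ∀ i, Fin (lam i)}
    (hδ : multiPow a δ = 1) : δ = 0 := by
  obtain ⟨c, -, hc⟩ := hconst (multiPow z δ) (by rw [apply_multiPow hσz, hδ, map_one, one_mul])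
  have hsingle : Pi.single δ (1 : F) = Pi.single 0 c := hinj <| by
    rw [monomialCombination_single, monomialCombination_single, multiPow_zero, map_one, one_mul,
      mul_one, hc]
  by_contra hne
  simpa [hne] using congrFun hsingle δ

theorem exists_fixed_preimage_of_apply_eq_self [IsDomain F] [∀ i, NeZero (lam i)]
    (hσF : IsConstantStable σF)
    (hcomm : ∀ c, σE (ι c) = ι (σF c)) (hσz : ∀ i, σE (z i) = ι (a i) * z i)
    (hbij : Bijective (monomialCombination lam ι z)) (haσ : ∀ i, σF (a i) = a i)
    (hfin : ∀ i, IsOfFinOrder (a i)) (hind : ∀ δ : ∀ i, Fin (lam i), multiPow a δ = 1 → δ = 0)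
    {f : E} (hf : σE f = f) : ∃ c, σF c = c ∧ f = ι c := by
  obtain ⟨c, rfl⟩ := hbij.2 f
  have hcoeff : ∀ ν, σF (c ν) * multiPow a ν = c ν :=
    congrFun (hbij.1 (by rw [← apply_monomialCombination hcomm hσz, hf]))
  have hfix ν : σF (c ν) = c ν :=
    hσF.apply_eq_of_apply_mul_eq (by simp only [map_multiPow, haσ])
      (isOfFinOrder_multiPow hfin ν) (hcoeff ν)
  have hsupp : c = Pi.single 0 (c 0) := by
    funext ν
    by_cases hν : ν = 0
    · simp [hν]
    · rw [Pi.single_eq_of_ne hν]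
      by_contra hc
      exact hν (hind ν (mul_left_cancel₀ hc (by simpa only [hfix ν, mul_one] using hcoeff ν)))
  refine ⟨c 0, hfix 0, ?_⟩
  rw [hsupp, monomialCombination_single, multiPow_zero, mul_one, Pi.single_eq_same]

theorem forall_exists_fixed_preimage_iff [IsDomain F] [∀ i, NeZero (lam i)]
    (hσF : IsConstantStable σF)
    (hcomm : ∀ c, σE (ι c) = ι (σF c)) (hσz : ∀ i, σE (z i) = ι (a i) * z i)
    (hbij : Bijective (monomialCombination lam ι z)) (haσ : ∀ i, σF (a i) = a i)
    (hfin : ∀ i, IsOfFinOrder (a i)) :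
    (∀ f, σE f = f → ∃ c, σF c = c ∧ f = ι c) ↔
      ∀ δ : ∀ i, Fin (lam i), multiPow a δ = 1 → δ = 0 :=
  ⟨fun h _ => eq_zero_of_multiPow_eq_one hσz hbij.1 h,
    fun h _ => exists_fixed_preimage_of_apply_eq_self hσF hcomm hσz hbij haσ hfin h⟩

end AExtension

theorem stmt_10_general (F E : Type*) [Field F] [CommRing E]
    (σF : F ≃+* F) (σE : E ≃+* E) (ι : F →+* E)
    (hcomm : ∀ c : F, σE (ι c) = ι (σF c))
    (hcs : ∀ k : ℕ, 1 ≤ k → ∀ c : F, (⇑σF)^[k] c = c → σF c = c)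
    (l : ℕ) (lam : Fin l → ℕ) (hlam : ∀ i, 1 < lam i)
    (z : Fin l → E) (a : Fin l → F)
    (haK : ∀ i, σF (a i) = a i ∧ a i ≠ 0 ∧ (a i) ^ (lam i) = 1)
    (hσz : ∀ i, σE (z i) = ι (a i) * z i)
    (hbasis : ∀ f : E, ∃! c : (∀ i : Fin l, Fin (lam i)) → F,
      f = ∑ ν : (∀ i : Fin l, Fin (lam i)), ι (c ν) * ∏ i : Fin l, (z i) ^ ((ν i : ℕ))) :
    (∀ f : E, σE f = f → ∃ c : F, σF c = c ∧ f = ι c) ↔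
      ((∀ i, ∀ j : ℕ, 1 ≤ j → j < lam i → (a i) ^ j ≠ 1) ∧
        ∀ i j, i ≠ j → Nat.Coprime (lam i) (lam j)) := by
  have hpos i : 0 < lam i := Nat.zero_lt_of_lt (hlam i)
  have : ∀ i, NeZero (lam i) := fun i => ⟨(hpos i).ne'⟩
  have hroot i : a i ^ lam i = 1 := (haK i).2.2
  have hbij : Bijective (monomialCombination lam ι z) :=
    (bijective_iff_existsUnique _).2 fun f => by
      simpa only [monomialCombination, multiPow, eq_comm] using hbasis f
  rw [forall_exists_fixed_preimage_iff hcs hcomm hσz hbij (fun i => (haK i).1)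
      (fun i => isOfFinOrder_iff_pow_eq_one.2 ⟨_, hpos i, hroot i⟩),
    ← onlyTrivialRelations_iff_multiPow hroot, onlyTrivialRelations_iff hpos hroot]
  refine and_congr (forall_congr' fun i => ?_) Iff.rfl
  simp only [IsPrimitiveRoot.iff (hpos i), hroot, true_and, Nat.one_le_iff_ne_zero,
    Nat.pos_iff_ne_zero]

/-- For a tower of A-extensions `F[z₁]...[z_l]` of a constant-stable difference field
`F` with `σ z_i = a_i · z_i`, `a_i ∈ K*` roots of unity, the constants are unchanged
iff each `a_i` is a primitive `λ_i`-th root of unity and the orders `λ_i` are pairwise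
coprime. -/
theorem stmt_10 (F E : Type*) [Field F] [CharZero F] [CommRing E]
    (σF : F ≃+* F) (σE : E ≃+* E) (ι : F →+* E)
    (hinj : Function.Injective ι)
    (hcomm : ∀ c : F, σE (ι c) = ι (σF c))
    (hcs : ∀ k : ℕ, 1 ≤ k → ∀ c : F, (⇑σF)^[k] c = c → σF c = c)
    (l : ℕ) (lam : Fin l → ℕ) (hlam : ∀ i, 1 < lam i)
    (z : Fin l → E) (a : Fin l → F)
    (haK : ∀ i, σF (a i) = a i ∧ a i ≠ 0 ∧ (a i) ^ (lam i) = 1)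
    (hz : ∀ i, (z i) ^ (lam i) = 1) (hσz : ∀ i, σE (z i) = ι (a i) * z i)
    (hbasis : ∀ f : E, ∃! c : (∀ i : Fin l, Fin (lam i)) → F,
      f = ∑ ν : (∀ i : Fin l, Fin (lam i)), ι (c ν) * ∏ i : Fin l, (z i) ^ ((ν i : ℕ))) :
    (∀ f : E, σE f = f → ∃ c : F, σF c = c ∧ f = ι c) ↔
      ((∀ i, ∀ j : ℕ, 1 ≤ j → j < lam i → (a i) ^ j ≠ 1) ∧
        ∀ i j, i ≠ j → Nat.Coprime (lam i) (lam j)) :=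
  stmt_10_general F E σF σE ι hcomm hcs l lam hlam z a haK hσz hbasis
end

section
/- Let (F⟨x⟩,σ) be a P-extension of a difference field (F,σ) with σ(x) = α·x, K = const(F,σ). Let (H,σ) be a difference ring extension of (F,σ) with const(H,σ) = K, and λ : F⟨x⟩ → H a difference ring homomorphism with λ|_F = id. Then M((α),F) = {n ∈ ℤ : ∃ g ∈ F*, α^n = σ(g)/g} ≠ {0} if and only if ker(λ) ≠ {0}. -/
/-!
Since `σ' (C a * T n) = C (σ a * α ^ n) * T n`, the Laurent monomial `C g * T (-n)` is
`σ'`-invariant exactly when `α ^ n * g = σ g`. If such an `n ≠ 0` exists, the image of this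
monomial is a constant of `H`, hence equal to the image of some `C c`, and
`C g * T (-n) - C c` is a nonzero element of the kernel. Conversely, the kernel is a
proper ideal, so it contains no monomial (monomials are units). It is also `σ'`-stable, so for a
nonzero kernel element `f` of minimal support, with coefficients `a` at `i` and `b` at `j ≠ i`,
the combination `C (σ a * α ^ i) * f - C a * σ' f` lies in the kernel and has smaller support;
hence it vanishes, and comparing coefficients at `j` gives `α ^ (i - j) * (b / a) = σ (b / a)`.
-/

namespace LaurentPolynomial

section Coeff

variable {R : Type*} [Semiring R]

lemma coeff_C_mul (a : R) (f : R[T;T⁻¹]) (n : ℤ) : (C a * f).coeff n = a * f.coeff n := by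
  rw [← smul_eq_C_mul, AddMonoidAlgebra.coeff_smul, Finsupp.smul_apply, smul_eq_mul]

lemma coeff_C_mul_T (a : R) (k n : ℤ) : (C a * T k).coeff n = if k = n then a else 0 := by
  rw [← single_eq_C_mul_T, AddMonoidAlgebra.coeff_single, Finsupp.single_apply]

lemma C_mul_T_ne_C {a : R} (ha : a ≠ 0) {k : ℤ} (hk : k ≠ 0) (c : R) : C a * T k ≠ C c := by
  intro h
  have := congrArg (·.coeff k) h
  simp only [coeff_C_mul_T, C_apply, if_neg hk] at this
  exact ha this

end Coeff

section Shift

variable {F : Type*} [Field F] {σ : F ≃+* F} {σ' : F[T;T⁻¹] ≃+* F[T;T⁻¹]} {α : F}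

lemma shift_T (hα : α ≠ 0) (hT : σ' (T 1) = C α * T 1) (n : ℤ) :
    σ' (T n) = C (α ^ n) * T n := by
  have hstep (m : ℤ) : σ' (T (m + 1)) = σ' (T m) * (C α * T 1) := by rw [T_add, map_mul, hT]
  have hunit : IsUnit (C α * T 1 : F[T;T⁻¹]) := ((Ne.isUnit hα).map C).mul (isUnit_T 1)
  induction n using Int.induction_on with
  | zero => simp
  | succ k ih =>
    rw [hstep, ih, zpow_add_one₀ hα, map_mul, T_add]
    ring
  | pred k ih =>
    refine hunit.mul_right_cancel ?_
    rw [← hstep, sub_add_cancel, ih, mul_mul_mul_comm, ← map_mul, ← T_add, ← zpow_add_one₀ hα,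
      sub_add_cancel]

lemma coeff_shift (hα : α ≠ 0) (hC : ∀ c : F, σ' (C c) = C (σ c))
    (hT : σ' (T 1) = C α * T 1) (f : F[T;T⁻¹]) (n : ℤ) :
    (σ' f).coeff n = σ (f.coeff n) * α ^ n := by
  induction f using LaurentPolynomial.induction_on' with
  | add p q hp hq =>
    simp only [map_add, AddMonoidAlgebra.coeff_add, Finsupp.add_apply, hp, hq, add_mul]
  | C_mul_T k a =>
    rw [map_mul, hC, shift_T hα hT, ← mul_assoc, ← map_mul, coeff_C_mul_T, coeff_C_mul_T]
    split_ifs with hk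
    · rw [hk]
    · rw [map_zero, zero_mul]

end Shift

section Kernel

variable {F H : Type*} [Field F] [CommRing H] {σ : F ≃+* F} {σ' : F[T;T⁻¹] ≃+* F[T;T⁻¹]} {α : F}
  {σH : H ≃+* H} {ιH : F →+* H} {lam : F[T;T⁻¹] →+* H}

lemma shift_mem_ker (hlamσ : ∀ f, lam (σ' f) = σH (lam f)) {f : F[T;T⁻¹]}
    (hf : f ∈ RingHom.ker lam) : σ' f ∈ RingHom.ker lam := by
  rw [RingHom.mem_ker] at hf ⊢
  rw [hlamσ, hf, map_zero]

lemma exists_sub_C_mem_ker_of_shift_eq (hconst : ∀ h : H, σH h = h → h ∈ Set.range ιH)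
    (hlamC : ∀ c : F, lam (C c) = ιH c) (hlamσ : ∀ f, lam (σ' f) = σH (lam f))
    {p : F[T;T⁻¹]} (hp : σ' p = p) : ∃ c : F, p - C c ∈ RingHom.ker lam := by
  obtain ⟨c, hc⟩ := hconst (lam p) (by rw [← hlamσ, hp])
  exact ⟨c, by rw [RingHom.mem_ker, map_sub, hlamC, hc, sub_self]⟩

lemma one_lt_card_support_of_mem_ker [Nontrivial H] {f : F[T;T⁻¹]} (hf : f ∈ RingHom.ker lam)
    (hf0 : f ≠ 0) : 1 < f.coeff.support.card := by
  by_contra! hle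
  rcases Nat.le_one_iff_eq_zero_or_eq_one.mp hle with hcard | hcard
  · exact hf0 (AddMonoidAlgebra.coeff_eq_zero.mp (Finsupp.card_support_eq_zero.mp hcard))
  · obtain ⟨k, a, ha, hfa⟩ := Finsupp.card_support_eq_one'.mp hcard
    have hmonomial : f = C a * T k := by
      rw [← single_eq_C_mul_T, ← AddMonoidAlgebra.coeff_inj, AddMonoidAlgebra.coeff_single, hfa]
    have hunit : IsUnit f := hmonomial ▸ ((Ne.isUnit ha).map C).mul (isUnit_T k)
    exact RingHom.ker_ne_top lam (Ideal.eq_top_of_isUnit_mem _ hf hunit)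

theorem exists_zpow_mul_eq_of_mem_ker [Nontrivial H] (hα : α ≠ 0)
    (hC : ∀ c : F, σ' (C c) = C (σ c)) (hT : σ' (T 1) = C α * T 1)
    (hlamσ : ∀ f, lam (σ' f) = σH (lam f)) {f : F[T;T⁻¹]} (hf : f ∈ RingHom.ker lam)
    (hf0 : f ≠ 0) : ∃ n : ℤ, n ≠ 0 ∧ ∃ g : F, g ≠ 0 ∧ α ^ n * g = σ g := by
  induction hcard : f.coeff.support.card using Nat.strong_induction_on generalizing f with
  | _ N ih =>
  obtain ⟨i, hi, j, hj, hij⟩ := Finset.one_lt_card.mp (one_lt_card_support_of_mem_ker hf hf0)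
  rw [Finsupp.mem_support_iff] at hi hj
  set a := f.coeff i
  set g := C (σ a * α ^ i) * f - C a * σ' f
  have hg_coeff (n : ℤ) :
      g.coeff n = σ a * α ^ i * f.coeff n - a * (σ (f.coeff n) * α ^ n) := by
    rw [AddMonoidAlgebra.coeff_sub, Finsupp.sub_apply, coeff_C_mul, coeff_C_mul,
      coeff_shift hα hC hT]
  have hg_mem : g ∈ RingHom.ker lam :=
    sub_mem (Ideal.mul_mem_left _ _ hf) (Ideal.mul_mem_left _ _ (shift_mem_ker hlamσ hf))
  by_cases hg0 : g = 0
  · have hrel : σ a * α ^ i * f.coeff j = a * (σ (f.coeff j) * α ^ j) := by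
      rw [← sub_eq_zero, ← hg_coeff, hg0]
      rfl
    refine ⟨i - j, sub_ne_zero.mpr hij, f.coeff j / a, div_ne_zero hj hi, ?_⟩
    have hσa : σ a ≠ 0 := (map_ne_zero σ).mpr hi
    rw [map_div₀, zpow_sub₀ hα]
    field_simp
    linear_combination hrel
  · have hsub : g.coeff.support ⊆ f.coeff.support.erase i := by
      intro n hn
      rw [Finsupp.mem_support_iff] at hn
      refine Finset.mem_erase.mpr ⟨fun hni => hn ?_, Finsupp.mem_support_iff.mpr fun hfn => hn ?_⟩
      · rw [hni, hg_coeff]; ring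
      · rw [hg_coeff, hfn, map_zero]; ring
    have hlt : g.coeff.support.card < N := hcard ▸ (Finset.card_le_card hsub).trans_lt
      (Finset.card_erase_lt_of_mem (Finsupp.mem_support_iff.mpr hi))
    exact ih _ hlt hg_mem hg0 rfl

end Kernel

end LaurentPolynomial

open LaurentPolynomial in
theorem stmt_12_general (F H : Type*) [Field F] [CommRing H]
    (σ : F ≃+* F) (σ' : LaurentPolynomial F ≃+* LaurentPolynomial F)
    (α : F) (hα : α ≠ 0)
    (hC : ∀ c : F, σ' (C c) = C (σ c))
    (hT : σ' (T 1) = C α * T 1)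
    (σH : H ≃+* H) (ιH : F →+* H) (hinj : Function.Injective ιH)
    (hconstH : ∀ h : H, σH h = h → ∃ c : F, σ c = c ∧ h = ιH c)
    (lam : LaurentPolynomial F →+* H)
    (hlamC : ∀ c : F, lam (C c) = ιH c)
    (hlamσ : ∀ f, lam (σ' f) = σH (lam f)) :
    (∃ n : ℤ, n ≠ 0 ∧ ∃ g : F, g ≠ 0 ∧ α ^ n * g = σ g) ↔ RingHom.ker lam ≠ ⊥ := by
  have : Nontrivial H := hinj.nontrivial
  constructor
  · rintro ⟨n, hn, g, hg, hrel⟩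
    have hfixed : σ' (C g * T (-n)) = C g * T (-n) := by
      rw [map_mul, hC, shift_T hα hT, ← mul_assoc, ← map_mul, ← hrel, zpow_neg,
        ← div_eq_mul_inv, mul_div_cancel_left₀ g (zpow_ne_zero n hα)]
    have hconst (h : H) (hh : σH h = h) : h ∈ Set.range ιH :=
      let ⟨c, _, hc⟩ := hconstH h hh; ⟨c, hc.symm⟩
    obtain ⟨c, hc⟩ := exists_sub_C_mem_ker_of_shift_eq hconst hlamC hlamσ hfixed
    exact (Submodule.ne_bot_iff _).mpr
      ⟨_, hc, sub_ne_zero.mpr (C_mul_T_ne_C hg (neg_ne_zero.mpr hn) c)⟩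
  · intro hker
    obtain ⟨f, hf, hf0⟩ := (Submodule.ne_bot_iff _).mp hker
    exact exists_zpow_mul_eq_of_mem_ker hα hC hT hlamσ hf hf0

open LaurentPolynomial in
/-- For a P-extension `F⟨x⟩` (Laurent polynomials) of a difference field `F` with
`σ x = α·x`, and a difference ring homomorphism `λ : F⟨x⟩ → H` into an extension `H`
with unchanged constants, `M((α),F) ≠ {0}` iff `ker λ ≠ {0}`. -/
theorem stmt_12 (F H : Type*) [Field F] [CharZero F] [CommRing H]
    (σ : F ≃+* F) (σ' : LaurentPolynomial F ≃+* LaurentPolynomial F)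
    (α : F) (hα : α ≠ 0)
    (hC : ∀ c : F, σ' (C c) = C (σ c))
    (hT : σ' (T 1) = C α * T 1)
    (σH : H ≃+* H) (ιH : F →+* H) (hinj : Function.Injective ιH)
    (hcomm : ∀ c : F, σH (ιH c) = ιH (σ c))
    (hconstH : ∀ h : H, σH h = h → ∃ c : F, σ c = c ∧ h = ιH c)
    (lam : LaurentPolynomial F →+* H)
    (hlamC : ∀ c : F, lam (C c) = ιH c)
    (hlamσ : ∀ f, lam (σ' f) = σH (lam f)) :
    (∃ n : ℤ, n ≠ 0 ∧ ∃ g : F, g ≠ 0 ∧ α ^ n * g = σ g) ↔ RingHom.ker lam ≠ ⊥ :=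
  stmt_12_general F H σ σ' α hα hC hT σH ιH hinj hconstH lam hlamC hlamσ
end

section
/- Let (F⟨x⟩,σ) be a P-extension of a difference field (F,σ) with σ(x) = α·x, and suppose M((α),F) = mℤ with m > 0. Let (H,σ) be a difference ring extension of (F,σ) with const(H,σ) = const(F,σ) and λ : F⟨x⟩ → H a difference ring homomorphism with λ|_F = id and λ(x) invertible. Then ker(λ) is the ideal generated by a single element μ = x^m + g for some g ∈ F* with σ(g) = α^m·g. -/
open LaurentPolynomial in
private lemma stmt_13_coeffs {F : Type*} [Field F]
    (σ' : LaurentPolynomial F ≃+* LaurentPolynomial F)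
    (σ : F ≃+* F) (α : F)
    (hCT : ∀ (b : F) (a : ℤ), σ' (C b * T a) = C (σ b * α ^ a) * T a) :
    ∀ (f : LaurentPolynomial F) (n : ℤ), (σ' f).coeff n = σ (f.coeff n) * α ^ n := by
  have hcoe : ∀ (b : F) (a n : ℤ), (C b * T a : LaurentPolynomial F).coeff n
      = if a = n then b else 0 := by
    intro b a n; rw [← single_eq_C_mul_T]; exact AddMonoidAlgebra.coeff_single_apply
  intro f
  induction f using AddMonoidAlgebra.induction with
  | zero => intro n; simp
  | single_add a b f ha hb ih =>
      intro n
      have h1 : σ' (AddMonoidAlgebra.single a b + f) = σ' (AddMonoidAlgebra.single a b) + σ' f := map_add _ _ _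
      rw [h1, AddMonoidAlgebra.coeff_add, AddMonoidAlgebra.coeff_add, Finsupp.add_apply, Finsupp.add_apply, ih, map_add, add_mul]
      congr 1
      rw [single_eq_C_mul_T, hCT, hcoe, hcoe]
      split_ifs with h
      · subst h; rfl
      · simp

open LaurentPolynomial in
private lemma stmt_13_sigmaT {F : Type*} [Field F]
    (σ' : LaurentPolynomial F ≃+* LaurentPolynomial F)
    (α : F) (hα : α ≠ 0)
    (hT : σ' (T 1) = C α * T 1) :
    ∀ n : ℤ, σ' (T n) = C (α ^ n) * T n := by
  have hnat : ∀ k : ℕ, σ' (T (k:ℤ)) = C (α ^ (k:ℤ)) * T (k:ℤ) := by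
    intro k
    induction k with
    | zero => simp [T_zero]
    | succ k ih =>
        rw [show ((k+1:ℕ):ℤ) = (k:ℤ) + 1 by push_cast; ring, T_add, map_mul, ih, hT,
          zpow_add₀ hα, zpow_one, map_mul C]
        ring
  intro n
  rcases Int.eq_nat_or_neg n with ⟨k, rfl | rfl⟩
  · exact hnat k
  · have h1 : σ' (T (-(k:ℤ))) * σ' (T (k:ℤ)) = 1 := by
      rw [← map_mul, ← T_add]; simp [T_zero]
    have h2 : σ' (T (k:ℤ)) * (C (α ^ (-(k:ℤ))) * T (-(k:ℤ))) = 1 := by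
      rw [hnat k, mul_mul_mul_comm, ← T_add, ← map_mul C, ← zpow_add₀ hα]
      simp [T_zero]
    calc σ' (T (-(k:ℤ)))
        = σ' (T (-(k:ℤ))) * (σ' (T (k:ℤ)) * (C (α ^ (-(k:ℤ))) * T (-(k:ℤ)))) := by
          rw [h2, mul_one]
      _ = (σ' (T (-(k:ℤ))) * σ' (T (k:ℤ))) * (C (α ^ (-(k:ℤ))) * T (-(k:ℤ))) := by ring
      _ = C (α ^ (-(k:ℤ))) * T (-(k:ℤ)) := by rw [h1, one_mul]

open LaurentPolynomial in
/-- Linear independence over the kernel: a Laurent polynomial in the kernel whose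
support has pairwise differences not divisible by `m` (except trivially) is zero. -/
private lemma stmt_13_indep {F H : Type*} [Field F] [CommRing H]
    (σ : F ≃+* F) (σ' : LaurentPolynomial F ≃+* LaurentPolynomial F)
    (α : F) (hα : α ≠ 0) (m : ℕ)
    (hM : ∀ n : ℤ, (∃ g : F, g ≠ 0 ∧ α ^ n * g = σ g) ↔ (m : ℤ) ∣ n)
    (ιH : F →+* H) (hinj : Function.Injective ιH)
    (lam : LaurentPolynomial F →+* H)
    (hlamC : ∀ c : F, lam (C c) = ιH c)
    (hlam0 : ∀ f, lam f = 0 → lam (σ' f) = 0)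
    (hσc : ∀ (f : LaurentPolynomial F) (n : ℤ), (σ' f).coeff n = σ (f.coeff n) * α ^ n) :
    ∀ (k : ℕ) (r : LaurentPolynomial F), r.coeff.support.card ≤ k → lam r = 0 →
      (∀ i ∈ r.coeff.support, ∀ j ∈ r.coeff.support, (m:ℤ) ∣ (j - i) → i = j) → r = 0 := by
  have hCf : ∀ (a : F) (f : LaurentPolynomial F) (i : ℤ), (C a * f).coeff i = a * f.coeff i := by
    intro a f i; rw [← single_eq_C]; exact AddMonoidAlgebra.coeff_single_zero_mul f a i
  intro k
  induction k with
  | zero =>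
      intro r hcard _ _
      simpa using Finsupp.card_support_eq_zero.mp (Nat.le_zero.mp hcard)
  | succ k ih =>
      intro r hcard hker hpw
      by_cases hr : r = 0
      · exact hr
      exfalso
      have hne : r.coeff.support.Nonempty := Finsupp.support_nonempty_iff.mpr (mt AddMonoidAlgebra.coeff_eq_zero.mp hr)
      set j := r.coeff.support.max' hne with hj
      have hjmem : j ∈ r.coeff.support := r.coeff.support.max'_mem hne
      set c := r.coeff j with hcdef
      have hc0 : c ≠ 0 := Finsupp.mem_support_iff.mp hjmem
      set t : LaurentPolynomial F := C (σ c * α ^ (j:ℤ)) * r - C c * σ' r with ht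
      have htc : ∀ i : ℤ, t.coeff i = σ c * α ^ j * r.coeff i - c * (σ (r.coeff i) * α ^ i) := by
        intro i
        rw [ht, AddMonoidAlgebra.coeff_sub, Finsupp.sub_apply, hCf, hCf, hσc]
      have hts : t.coeff.support ⊆ r.coeff.support.erase j := by
        intro i hi
        have hi' : t.coeff i ≠ 0 := Finsupp.mem_support_iff.mp hi
        rw [Finset.mem_erase, Finsupp.mem_support_iff]
        constructor
        · rintro rfl; apply hi'; rw [htc]; ring
        · intro h; apply hi'; rw [htc, h]; simp
      have ht0 : t = 0 := by
        apply ih t _ _ _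
        · calc t.coeff.support.card ≤ (r.coeff.support.erase j).card := Finset.card_le_card hts
            _ = r.coeff.support.card - 1 := Finset.card_erase_of_mem hjmem
            _ ≤ k := by omega
        · rw [ht, map_sub, map_mul lam, map_mul lam, hker, hlam0 r hker, mul_zero, mul_zero,
            sub_zero]
        · intro i hi i' hi' hd
          exact hpw i (Finset.mem_of_mem_erase (hts hi)) i' (Finset.mem_of_mem_erase (hts hi')) hd
      have hsub : r.coeff.support ⊆ {j} := by
        intro i hi
        have hi0 : r.coeff i ≠ 0 := Finsupp.mem_support_iff.mp hi
        have he : σ c * α ^ (j:ℤ) * r.coeff i - c * (σ (r.coeff i) * α ^ (i:ℤ)) = 0 := by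
          rw [← htc, ht0]; rfl
        have hσc0 : σ c ≠ 0 := fun h => hc0 (by simpa using σ.injective (by simpa using h))
        have hαi : α ^ (i:ℤ) ≠ 0 := zpow_ne_zero _ hα
        have key : α ^ ((j:ℤ) - i) * (r.coeff i / c) = σ (r.coeff i / c) := by
          rw [map_div₀, zpow_sub₀ hα, div_mul_div_comm,
            div_eq_div_iff (mul_ne_zero hαi hc0) hσc0]
          linear_combination he
        have hdvd : (m:ℤ) ∣ (j - i) := (hM (j - i)).mp ⟨r.coeff i / c, div_ne_zero hi0 hc0, key⟩
        have : i = j := hpw i hi j hjmem (by simpa using hdvd)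
        simp [this]
      have hrs : r = C c * T j := by
        rw [← single_eq_C_mul_T]; exact AddMonoidAlgebra.ext (Finsupp.support_subset_singleton.mp hsub)
      rw [hrs, map_mul, hlamC] at hker
      have hu : IsUnit (lam (T j)) := (isUnit_T j).map lam
      have : ιH c = 0 := by
        rcases hu.exists_right_inv with ⟨v, hv⟩
        calc ιH c = ιH c * (lam (T j) * v) := by rw [hv, mul_one]
          _ = (ιH c * lam (T j)) * v := by ring
          _ = 0 := by rw [hker, zero_mul]
      exact hc0 (hinj (by simpa using this))

open LaurentPolynomial in
/-- Reduction: every kernel element of bounded support spread lies in the span. -/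
private lemma stmt_13_reduce {F H : Type*} [Field F] [CommRing H]
    (m : ℕ) (hm : 0 < m) (g : F)
    (lam : LaurentPolynomial F →+* H)
    (hμ : lam (T (m:ℤ) + C g) = 0)
    (hA : ∀ r : LaurentPolynomial F, lam r = 0 →
      (∀ i ∈ r.coeff.support, ∀ j ∈ r.coeff.support, (m:ℤ) ∣ (j - i) → i = j) → r = 0) :
    ∀ (d : ℕ) (f : LaurentPolynomial F), lam f = 0 →
      (∀ i ∈ f.coeff.support, ∀ j ∈ f.coeff.support, i - j ≤ (d:ℤ)) →
      f ∈ Ideal.span {T (m:ℤ) + C g} := by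
  intro d
  induction d using Nat.strong_induction_on with
  | _ d ih =>
    intro f hf hspread
    by_cases hf0 : f = 0
    · simp [hf0]
    by_cases hdm : (d:ℤ) < (m:ℤ)
    · have : f = 0 := by
        apply hA f hf
        intro i hi j hj hdvd
        have h1 : i - j ≤ (d:ℤ) := hspread i hi j hj
        have h2 : j - i ≤ (d:ℤ) := hspread j hj i hi
        by_cases h0 : j - i = 0
        · omega
        · have h3 : (m:ℤ) ≤ |j - i| := Int.le_of_dvd (abs_pos.mpr h0) ((dvd_abs _ _).mpr hdvd)
          have h4 : |j - i| ≤ (d:ℤ) := abs_le.mpr ⟨by omega, by omega⟩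
          omega
      exact absurd this hf0
    · push_neg at hdm
      have hne : f.coeff.support.Nonempty := Finsupp.support_nonempty_iff.mpr (mt AddMonoidAlgebra.coeff_eq_zero.mp hf0)
      set J := f.coeff.support.max' hne with hJ
      have hJmem : J ∈ f.coeff.support := f.coeff.support.max'_mem hne
      set c := f.coeff J with hc
      set μ : LaurentPolynomial F := T (m:ℤ) + C g with hμdef
      set f' : LaurentPolynomial F := f - C c * T (J - (m:ℤ)) * μ with hf'
      have hs : C c * T (J - (m:ℤ)) * μ
          = AddMonoidAlgebra.single J c + AddMonoidAlgebra.single (J - (m:ℤ)) (c * g) := by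
        rw [single_eq_C_mul_T, single_eq_C_mul_T, hμdef, mul_add]
        congr 1
        · rw [mul_T_assoc]
          norm_num
        · rw [map_mul C, mul_right_comm]
      have hcoeff : ∀ i : ℤ, f'.coeff i = f.coeff i - (if J = i then c else 0)
          - (if J - (m:ℤ) = i then c * g else 0) := by
        intro i
        rw [hf', AddMonoidAlgebra.coeff_sub, Finsupp.sub_apply, hs, AddMonoidAlgebra.coeff_add, Finsupp.add_apply, AddMonoidAlgebra.coeff_single_apply,
          AddMonoidAlgebra.coeff_single_apply]
        ring
      have hmem : ∀ i ∈ f'.coeff.support, i ∈ f.coeff.support ∧ i ≠ J ∨ i = J - (m:ℤ) := by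
        intro i hi
        have hi' : f'.coeff i ≠ 0 := Finsupp.mem_support_iff.mp hi
        rw [hcoeff] at hi'
        by_cases h2 : J - (m:ℤ) = i
        · right; omega
        by_cases h1 : J = i
        · exfalso; apply hi'; rw [if_pos h1, if_neg h2, ← h1, ← hc]; ring
        · left
          refine ⟨Finsupp.mem_support_iff.mpr fun h => hi' ?_, fun hh => h1 hh.symm⟩
          rw [if_neg h1, if_neg h2, h]; ring
      have hbounds : ∀ i ∈ f'.coeff.support, J - (d:ℤ) ≤ i ∧ i ≤ J - 1 := by
        intro i hi
        rcases hmem i hi with ⟨hif, hij⟩ | rfl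
        · have h1 : i ≤ J := f.coeff.support.le_max' i hif
          have h2 : J - i ≤ (d:ℤ) := hspread J hJmem i hif
          omega
        · omega
      have hf'0 : lam f' = 0 := by
        rw [hf', map_sub, map_mul, hμ, mul_zero, sub_zero, hf]
      by_cases hd0 : d = 0
      · exfalso; omega
      have hf'mem : f' ∈ Ideal.span {μ} := by
        apply ih (d-1) (by omega) f' hf'0
        intro i hi j hj
        have b1 := hbounds i hi
        have b2 := hbounds j hj
        have : ((d-1 : ℕ):ℤ) = (d:ℤ) - 1 := by omega
        omega
      have : f = f' + C c * T (J - (m:ℤ)) * μ := by rw [hf']; ring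
      rw [this]
      exact Ideal.add_mem _ hf'mem (Ideal.mul_mem_left _ _ (Ideal.subset_span rfl))

open LaurentPolynomial in
/-- For a P-extension `F⟨x⟩` with `σ x = α·x` and `M((α),F) = mℤ` (`m > 0`), the
kernel of a difference ring homomorphism `λ : F⟨x⟩ → H` into an extension with
unchanged constants is generated by a single element `x^m + g` with
`σ g = α^m · g`. -/
theorem stmt_13 (F H : Type*) [Field F] [CharZero F] [CommRing H]
    (σ : F ≃+* F) (σ' : LaurentPolynomial F ≃+* LaurentPolynomial F)
    (α : F) (hα : α ≠ 0)
    (hC : ∀ c : F, σ' (C c) = C (σ c))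
    (hT : σ' (T 1) = C α * T 1)
    (m : ℕ) (hm : 0 < m)
    (hM : ∀ n : ℤ, (∃ g : F, g ≠ 0 ∧ α ^ n * g = σ g) ↔ (m : ℤ) ∣ n)
    (σH : H ≃+* H) (ιH : F →+* H) (hinj : Function.Injective ιH)
    (hcomm : ∀ c : F, σH (ιH c) = ιH (σ c))
    (hconstH : ∀ h : H, σH h = h → ∃ c : F, σ c = c ∧ h = ιH c)
    (lam : LaurentPolynomial F →+* H)
    (hlamC : ∀ c : F, lam (C c) = ιH c)
    (hlamσ : ∀ f, lam (σ' f) = σH (lam f)) :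
    ∃ g : F, g ≠ 0 ∧ σ g = α ^ m * g ∧
      RingHom.ker lam = Ideal.span {T (m : ℤ) + C g} := by
  -- basic consequences
  have hσT : ∀ n : ℤ, σ' (T n) = C (α ^ n) * T n := stmt_13_sigmaT σ' α hα hT
  have hCT : ∀ (b : F) (a : ℤ), σ' (C b * T a) = C (σ b * α ^ a) * T a := by
    intro b a
    rw [map_mul, hC, hσT, ← mul_assoc, ← map_mul C]
  have hσc := stmt_13_coeffs σ' σ α hCT
  have hlam0 : ∀ f, lam f = 0 → lam (σ' f) = 0 := by
    intro f hf; rw [hlamσ, hf, map_zero]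
  -- construct g
  obtain ⟨g', hg'0, hg'⟩ : ∃ g' : F, g' ≠ 0 ∧ α ^ (-(m:ℤ)) * g' = σ g' :=
    (hM (-(m:ℤ))).mpr ⟨-1, by ring⟩
  have hTm : σ' (T (m:ℤ)) = C (α ^ ((m:ℤ))) * T (m:ℤ) := hσT (m:ℤ)
  have hfix : σH (lam (T (m:ℤ)) * ιH g') = lam (T (m:ℤ)) * ιH g' := by
    rw [map_mul, ← hlamσ, hTm, map_mul, hlamC, hcomm, ← hg', map_mul]
    calc ιH (α ^ ((m:ℤ))) * lam (T (m:ℤ)) * (ιH (α ^ (-(m:ℤ))) * ιH g')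
        = (ιH (α ^ ((m:ℤ))) * ιH (α ^ (-(m:ℤ)))) * (lam (T (m:ℤ)) * ιH g') := by ring
      _ = lam (T (m:ℤ)) * ιH g' := by
          rw [← map_mul, ← zpow_add₀ hα]
          simp
  obtain ⟨c, hσcc, hciH⟩ := hconstH _ hfix
  have huTm : IsUnit (lam (T (m:ℤ))) := (isUnit_T _).map lam
  rcases huTm.exists_right_inv with ⟨v, hv⟩
  have hc0 : c ≠ 0 := by
    rintro rfl
    rw [map_zero] at hciH
    have : ιH g' = 0 := by
      calc ιH g' = (lam (T (m:ℤ)) * v) * ιH g' := by rw [hv, one_mul]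
        _ = (lam (T (m:ℤ)) * ιH g') * v := by ring
        _ = 0 := by rw [hciH, zero_mul]
    exact hg'0 (hinj (by simpa using this))
  refine ⟨-(c / g'), by simp [hc0, hg'0], ?_, ?_⟩
  · -- σ g = α ^ m * g
    have hσg' : σ g' = α ^ (-(m:ℤ)) * g' := hg'.symm
    have hσg'0 : σ g' ≠ 0 := fun h => hg'0 (by simpa using σ.injective (by simpa using h))
    rw [map_neg, map_div₀, hσcc, hσg']
    rw [zpow_neg, zpow_natCast] at *
    field_simp
  · -- the kernel is the span
    have hlamTm : lam (T (m:ℤ)) = ιH (c / g') := by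
      have h1 : lam (T (m:ℤ)) * ιH g' = ιH c := hciH
      calc lam (T (m:ℤ)) = lam (T (m:ℤ)) * (ιH g' * ιH g'⁻¹) := by
            rw [← map_mul, mul_inv_cancel₀ hg'0, map_one, mul_one]
        _ = (lam (T (m:ℤ)) * ιH g') * ιH g'⁻¹ := by ring
        _ = ιH c * ιH g'⁻¹ := by rw [h1]
        _ = ιH (c / g') := by rw [← map_mul, div_eq_mul_inv]
    have hμ : lam (T (m:ℤ) + C (-(c / g'))) = 0 := by
      rw [map_add, hlamTm, hlamC, map_neg, add_neg_cancel]
    have hA : ∀ r : LaurentPolynomial F, lam r = 0 →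
        (∀ i ∈ r.coeff.support, ∀ j ∈ r.coeff.support, (m:ℤ) ∣ (j - i) → i = j) → r = 0 := by
      intro r hr hpw
      exact stmt_13_indep σ σ' α hα m hM ιH hinj lam hlamC hlam0 hσc r.coeff.support.card r le_rfl hr hpw
    apply le_antisymm
    · -- ker ⊆ span
      intro f hf
      have hf0 : lam f = 0 := hf
      by_cases hfz : f = 0
      · simp [hfz]
      have hne : f.coeff.support.Nonempty := Finsupp.support_nonempty_iff.mpr (mt AddMonoidAlgebra.coeff_eq_zero.mp hfz)
      set d : ℕ := (f.coeff.support.max' hne - f.coeff.support.min' hne).toNat with hd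
      apply stmt_13_reduce m hm (-(c / g')) lam hμ hA d f hf0
      intro i hi j hj
      have h1 : i ≤ f.coeff.support.max' hne := f.coeff.support.le_max' i hi
      have h2 : f.coeff.support.min' hne ≤ j := f.coeff.support.min'_le j hj
      have h3 : f.coeff.support.min' hne ≤ f.coeff.support.max' hne :=
        f.coeff.support.min'_le _ (f.coeff.support.max'_mem hne)
      have : ((d:ℕ):ℤ) = f.coeff.support.max' hne - f.coeff.support.min' hne := by
        rw [hd]; omega
      omega
    · -- span ⊆ ker
      rw [Ideal.span_le, Set.singleton_subset_iff]
      exact hμ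
end

section
/- Let (F(t),σ) be a ΠΣ-field extension of a difference field (F,σ) (σ(t) = α·t + β with α = 1 or β = 0, constants unchanged), and let a, g ∈ F(t)* and m ∈ ℕ \ {0} with σ(g)/g = a^m. Then there exist γ ∈ F(t)*, u ∈ F*, and n ∈ ℤ such that g = γ^m · u · t^n; moreover n = 0 if t is a Σ-monomial (β ≠ 0 case with α = 1). -/
open Polynomial UniqueFactorizationMonoid Multiset

namespace Stmt14

set_option linter.unusedSectionVars false

variable {F : Type*} [Field F] [DecidableEq F]

/-- The induced endomorphism `p(X) ↦ p^σ(αX+β)` on `F[X]`. -/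
noncomputable def tau (σ : F ≃+* F) (α β : F) : F[X] →+* F[X] :=
  eval₂RingHom (Polynomial.C.comp (σ : F →+* F)) (C α * X + C β)

variable (σ : F ≃+* F) (α β : F)

@[simp] lemma tau_C (c : F) : tau σ α β (C c) = C (σ c) := eval₂_C _ _
@[simp] lemma tau_X : tau σ α β X = C α * X + C β := eval₂_X _ _

lemma tau_eq (p : F[X]) : tau σ α β p = (p.map (σ : F →+* F)).comp (C α * X + C β) := by
  rw [Polynomial.comp, eval₂_map]; rfl

/-- The inverse endomorphism. -/
noncomputable def tauInv (σ : F ≃+* F) (α β : F) : F[X] →+* F[X] :=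
  eval₂RingHom (Polynomial.C.comp (σ.symm : F →+* F))
    (C (σ.symm α)⁻¹ * X - C (σ.symm α)⁻¹ * C (σ.symm β))

lemma tau_inv_comp (hα : α ≠ 0) :
    (tauInv σ α β).comp (tau σ α β) = RingHom.id F[X] := by
  apply Polynomial.ringHom_ext
  · intro c; simp [tau, tauInv]
  · have h : σ.symm α ≠ 0 := fun h => hα (by simpa using congrArg σ h)
    simp only [RingHom.comp_apply, tau_X, RingHom.id_apply]
    simp only [tauInv, coe_eval₂RingHom, eval₂_add, eval₂_mul, eval₂_C, eval₂_X,
      RingHom.comp_apply, RingEquiv.coe_toRingHom]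
    rw [mul_sub, ← mul_assoc, ← mul_assoc, ← C_mul, mul_inv_cancel₀ h, C_1, one_mul, one_mul]
    ring

lemma tau_comp_inv (hα : α ≠ 0) :
    (tau σ α β).comp (tauInv σ α β) = RingHom.id F[X] := by
  apply Polynomial.ringHom_ext
  · intro c; simp [tau, tauInv]
  · simp only [RingHom.comp_apply, RingHom.id_apply]
    simp only [tau, tauInv, coe_eval₂RingHom, eval₂_sub, eval₂_add, eval₂_mul, eval₂_C, eval₂_X,
      RingHom.comp_apply, RingEquiv.coe_toRingHom, RingEquiv.apply_symm_apply, map_inv₀]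
    rw [mul_add, ← mul_assoc, ← C_mul, inv_mul_cancel₀ hα, C_1, one_mul]
    ring

/-- `tau` as a ring equivalence (needs `α ≠ 0`). -/
noncomputable def tauEquiv (hα : α ≠ 0) : F[X] ≃+* F[X] :=
  RingEquiv.ofRingHom (tau σ α β) (tauInv σ α β)
    (tau_comp_inv σ α β hα) (tau_inv_comp σ α β hα)

lemma tauEquiv_apply (hα : α ≠ 0) (p : F[X]) : tauEquiv σ α β hα p = tau σ α β p := rfl

lemma tau_injective (hα : α ≠ 0) : Function.Injective (tau σ α β) :=
  (tauEquiv σ α β hα).injective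

lemma tau_ne_zero (hα : α ≠ 0) {p : F[X]} (hp : p ≠ 0) : tau σ α β p ≠ 0 := by
  intro h
  exact hp (tau_injective σ α β hα (by simpa using h))

lemma tau_irreducible (hα : α ≠ 0) {p : F[X]} (hp : Irreducible p) :
    Irreducible (tau σ α β p) :=
  (MulEquiv.irreducible_iff (tauEquiv σ α β hα).toMulEquiv).mpr hp

lemma tau_dvd_iff (hα : α ≠ 0) {p q : F[X]} :
    tau σ α β p ∣ tau σ α β q ↔ p ∣ q := by
  constructor
  · rintro ⟨c, hc⟩
    refine ⟨(tauEquiv σ α β hα).symm c, ?_⟩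
    apply tau_injective σ α β hα
    rw [map_mul, hc]
    congr 1
    exact ((tauEquiv σ α β hα).apply_symm_apply c).symm
  · exact fun h => _root_.map_dvd _ h

lemma tau_natDegree (hα : α ≠ 0) (p : F[X]) : (tau σ α β p).natDegree = p.natDegree := by
  rw [tau_eq, natDegree_comp, natDegree_linear hα,
    natDegree_map_eq_of_injective σ.injective, mul_one]

lemma tau_leadingCoeff (hα : α ≠ 0) {p : F[X]} (hp : p ≠ 0) :
    (tau σ α β p).leadingCoeff = σ p.leadingCoeff * α ^ p.natDegree := by
  by_cases h0 : p.natDegree = 0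
  · obtain ⟨c, rfl⟩ := natDegree_eq_zero.mp h0
    simp [leadingCoeff]
  · rw [tau_eq, leadingCoeff_comp (by simp [natDegree_linear hα]), leadingCoeff_linear hα,
      leadingCoeff_map_of_injective σ.injective, natDegree_map_eq_of_injective σ.injective]
    rfl

/-- the normalized version of tau : maps monic irreducibles to monic irreducibles -/
noncomputable def ntau (σ : F ≃+* F) (α β : F) : F[X] → F[X] :=
  fun q => normalize (tau σ α β q)

/-- normalized primes -/
def NPrime (q : F[X]) : Prop := Irreducible q ∧ normalize q = q

lemma ntau_nprime (hα : α ≠ 0) {q : F[X]} (hq : NPrime q) : NPrime (ntau σ α β q) := by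
  refine ⟨?_, normalize_idem _⟩
  exact (normalize_associated (tau σ α β q)).symm.irreducible (tau_irreducible σ α β hα hq.1)

lemma ntau_inj (hα : α ≠ 0) {q q' : F[X]} (hq : NPrime q) (hq' : NPrime q')
    (h : ntau σ α β q = ntau σ α β q') : q = q' := by
  have h1 : Associated (tau σ α β q) (tau σ α β q') :=
    (associated_normalize _).trans
      (by rw [show normalize (tau σ α β q) = normalize (tau σ α β q') from h]
          exact normalize_associated _)
  have h2 : Associated q q' := by
    have h3 := h1.map (tauEquiv σ α β hα).symm.toRingHom.toMonoidHom
    have e1 : (tauEquiv σ α β hα).symm.toRingHom.toMonoidHom (tau σ α β q) = q :=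
      (tauEquiv σ α β hα).symm_apply_apply q
    have e2 : (tauEquiv σ α β hα).symm.toRingHom.toMonoidHom (tau σ α β q') = q' :=
      (tauEquiv σ α β hα).symm_apply_apply q'
    rwa [e1, e2] at h3
  rw [← hq.2, ← hq'.2]
  exact normalize_eq_normalize h2.dvd h2.symm.dvd

section Ord

/-- order of vanishing of a rational function at the prime `q` -/
noncomputable def ordP (q : F[X]) (f : RatFunc F) : ℤ :=
  (Multiset.count q (normalizedFactors f.num) : ℤ) -
    Multiset.count q (normalizedFactors f.denom)

lemma count_nf_mul {p r : F[X]} (hp : p ≠ 0) (hr : r ≠ 0) (q : F[X]) :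
    Multiset.count q (normalizedFactors (p * r)) =
      Multiset.count q (normalizedFactors p) + Multiset.count q (normalizedFactors r) := by
  rw [normalizedFactors_mul hp hr, Multiset.count_add]

lemma ordP_div (q p r : F[X]) (hp : p ≠ 0) (hr : r ≠ 0) :
    ordP q (algebraMap F[X] (RatFunc F) p / algebraMap F[X] (RatFunc F) r) =
      (Multiset.count q (normalizedFactors p) : ℤ) -
        Multiset.count q (normalizedFactors r) := by
  set f := algebraMap F[X] (RatFunc F) p / algebraMap F[X] (RatFunc F) r with hf
  have hf0 : f ≠ 0 := div_ne_zero (RatFunc.algebraMap_ne_zero hp) (RatFunc.algebraMap_ne_zero hr)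
  have hnum : f.num ≠ 0 := RatFunc.num_ne_zero hf0
  have hden : f.denom ≠ 0 := f.denom_ne_zero
  have key : f.num * r = p * f.denom := by
    apply RatFunc.algebraMap_injective F
    have h1 : algebraMap F[X] (RatFunc F) f.num / algebraMap F[X] (RatFunc F) f.denom
        = algebraMap F[X] (RatFunc F) p / algebraMap F[X] (RatFunc F) r :=
      (RatFunc.num_div_denom f).trans hf
    rw [div_eq_div_iff (RatFunc.algebraMap_ne_zero hden) (RatFunc.algebraMap_ne_zero hr)] at h1
    rw [map_mul, map_mul]
    exact h1
  have hc := congrArg (fun x => (Multiset.count q (normalizedFactors x) : ℤ)) key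
  simp only [count_nf_mul hnum hr, count_nf_mul hp hden] at hc
  push_cast at hc
  simp only [ordP]
  omega

lemma ordP_eq_num_denom (q : F[X]) (f : RatFunc F) (hf : f ≠ 0) :
    ordP q f = (Multiset.count q (normalizedFactors f.num) : ℤ) -
      Multiset.count q (normalizedFactors f.denom) := rfl

lemma ordP_mul (q : F[X]) {f g : RatFunc F} (hf : f ≠ 0) (hg : g ≠ 0) :
    ordP q (f * g) = ordP q f + ordP q g := by
  have h : f * g = algebraMap F[X] (RatFunc F) (f.num * g.num) /
      algebraMap F[X] (RatFunc F) (f.denom * g.denom) := by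
    conv_lhs => rw [← RatFunc.num_div_denom f, ← RatFunc.num_div_denom g]
    rw [map_mul, map_mul, div_mul_div_comm]
  rw [h, ordP_div q _ _ (mul_ne_zero (RatFunc.num_ne_zero hf) (RatFunc.num_ne_zero hg))
    (mul_ne_zero f.denom_ne_zero g.denom_ne_zero),
    count_nf_mul (RatFunc.num_ne_zero hf) (RatFunc.num_ne_zero hg),
    count_nf_mul f.denom_ne_zero g.denom_ne_zero]
  simp only [ordP]
  push_cast
  ring

lemma ordP_one (q : F[X]) : ordP q (1 : RatFunc F) = 0 := by
  simp [ordP, RatFunc.num_one, RatFunc.denom_one, normalizedFactors_one]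

lemma ordP_inv (q : F[X]) {f : RatFunc F} (hf : f ≠ 0) : ordP q f⁻¹ = -ordP q f := by
  have := ordP_mul q hf (inv_ne_zero hf)
  rw [mul_inv_cancel₀ hf, ordP_one] at this
  omega

lemma ordP_pow (q : F[X]) {f : RatFunc F} (hf : f ≠ 0) (k : ℕ) :
    ordP q (f ^ k) = k * ordP q f := by
  induction k with
  | zero => simpa using ordP_one q
  | succ n ih =>
    rw [pow_succ, ordP_mul q (pow_ne_zero n hf) hf, ih]
    push_cast; ring

lemma ordP_zpow (q : F[X]) {f : RatFunc F} (hf : f ≠ 0) (k : ℤ) :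
    ordP q (f ^ k) = k * ordP q f := by
  cases k with
  | ofNat n => simpa using ordP_pow q hf n
  | negSucc n =>
    rw [zpow_negSucc, ordP_inv q (pow_ne_zero _ hf), ordP_pow q hf, Int.negSucc_eq]
    push_cast; ring

lemma ordP_algebraMap (q p : F[X]) (hp : p ≠ 0) :
    ordP q (algebraMap F[X] (RatFunc F) p) = Multiset.count q (normalizedFactors p) := by
  have h : algebraMap F[X] (RatFunc F) p =
      algebraMap F[X] (RatFunc F) p / algebraMap F[X] (RatFunc F) 1 := by simp
  rw [h, ordP_div q p 1 hp one_ne_zero, normalizedFactors_one]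
  simp

lemma ordP_irreducible {q : F[X]} (p : F[X]) (hq : Irreducible p) :
    ordP q (algebraMap F[X] (RatFunc F) p) = if q = normalize p then 1 else 0 := by
  rw [ordP_algebraMap q p hq.ne_zero, normalizedFactors_irreducible hq]
  simp [Multiset.count_singleton]

lemma ordP_C (q : F[X]) {c : F} (hc : c ≠ 0) :
    ordP q (algebraMap F (RatFunc F) c) = 0 := by
  have h : algebraMap F (RatFunc F) c = algebraMap F[X] (RatFunc F) (C c) := by
    rw [RatFunc.algebraMap_C]; rfl
  rw [h, ordP_algebraMap q _ (by simpa using hc)]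
  have hu : IsUnit (C c) := isUnit_C.mpr (isUnit_iff_ne_zero.mpr hc)
  have h0 : normalizedFactors (C c) = 0 := by
    by_contra hne
    have hpos : 0 < normalizedFactors (C c) :=
      lt_of_le_of_ne (Multiset.zero_le _) (Ne.symm hne)
    exact (normalizedFactors_pos _ (by simpa using hc)).mp hpos hu
  simp [h0]

lemma ordP_zero_of_not_mem {q : F[X]} {f : RatFunc F}
    (h1 : q ∉ normalizedFactors f.num) (h2 : q ∉ normalizedFactors f.denom) :
    ordP q f = 0 := by
  simp [ordP, Multiset.count_eq_zero_of_notMem h1, Multiset.count_eq_zero_of_notMem h2]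

/-- A rational function with zero order everywhere is a nonzero constant. -/
lemma eq_const_of_ordP_eq_zero {f : RatFunc F} (hf : f ≠ 0)
    (h : ∀ q : F[X], NPrime q → ordP q f = 0) :
    ∃ c : F, c ≠ 0 ∧ f = algebraMap F (RatFunc F) c := by
  have hnum : f.num ≠ 0 := RatFunc.num_ne_zero hf
  have hden : f.denom ≠ 0 := f.denom_ne_zero
  have heq : normalizedFactors f.num = normalizedFactors f.denom := by
    ext q
    by_cases hq : q ∈ normalizedFactors f.num ∪ normalizedFactors f.denom
    · have hq' : q ∈ normalizedFactors f.num ∨ q ∈ normalizedFactors f.denom :=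
        Multiset.mem_union.mp hq
      have hq1 : Irreducible q := by
        rcases hq' with h' | h'
        · exact irreducible_of_normalized_factor q h'
        · exact irreducible_of_normalized_factor q h'
      have hq2 : normalize q = q := by
        rcases hq' with h' | h'
        · exact normalize_normalized_factor q h'
        · exact normalize_normalized_factor q h'
      have := h q ⟨hq1, hq2⟩
      simp only [ordP] at this
      omega
    · rw [Multiset.mem_union, not_or] at hq
      rw [Multiset.count_eq_zero_of_notMem hq.1, Multiset.count_eq_zero_of_notMem hq.2]
  have hassoc : Associated f.num f.denom :=
    ((prod_normalizedFactors hnum).symm.trans (heq ▸ prod_normalizedFactors hden))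
  obtain ⟨u, hu⟩ := hassoc
  obtain ⟨c, hc, hcu⟩ : ∃ c : F, c ≠ 0 ∧ (u : F[X]) = C c := by
    obtain ⟨c, hc⟩ := Polynomial.isUnit_iff.mp u.isUnit
    exact ⟨c, hc.1.ne_zero, hc.2.symm⟩
  refine ⟨c⁻¹, inv_ne_zero hc, ?_⟩
  rw [← RatFunc.num_div_denom f, ← hu, hcu, map_mul]
  rw [div_mul_eq_div_div, div_self (RatFunc.algebraMap_ne_zero hnum), one_div,
    RatFunc.algebraMap_C, map_inv₀, RatFunc.algebraMap_eq_C]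

end Ord

section Sigma

variable (σ'' : RatFunc F ≃+* RatFunc F)

lemma count_nf_tau (hα : α ≠ 0) {q p : F[X]} (hq : NPrime q) (hp : p ≠ 0) :
    Multiset.count (ntau σ α β q) (normalizedFactors (tau σ α β p)) =
      Multiset.count q (normalizedFactors p) := by
  set k := Multiset.count q (normalizedFactors p) with hk
  have hdvd : q ^ k ∣ p ∧ ¬ q ^ (k + 1) ∣ p := by
    have hmul : emultiplicity q p = k := by
      rw [emultiplicity_eq_count_normalizedFactors hq.1 hp, hq.2, hk]
    exact emultiplicity_eq_coe.mp hmul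
  have h1 : (tau σ α β q) ^ k ∣ tau σ α β p := by
    rw [← map_pow]; exact _root_.map_dvd _ hdvd.1
  have h2 : ¬ (tau σ α β q) ^ (k + 1) ∣ tau σ α β p := by
    rw [← map_pow, tau_dvd_iff σ α β hα]; exact hdvd.2
  have hassoc : Associated (tau σ α β q) (ntau σ α β q) := associated_normalize _
  have h1' : (ntau σ α β q) ^ k ∣ tau σ α β p :=
    ((hassoc.pow_pow (n := k)).dvd_iff_dvd_left).mp h1
  have h2' : ¬ (ntau σ α β q) ^ (k + 1) ∣ tau σ α β p := fun hcon =>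
    h2 (((hassoc.pow_pow (n := k + 1)).dvd_iff_dvd_left).mpr hcon)
  exact count_normalizedFactors_eq (ntau_nprime σ α β hα hq).1
    (ntau_nprime σ α β hα hq).2 h1' h2'

lemma sigma_algebraMap
    (hC : ∀ c : F, σ'' (algebraMap F (RatFunc F) c) = algebraMap F (RatFunc F) (σ c))
    (hX : σ'' RatFunc.X = algebraMap F (RatFunc F) α * RatFunc.X + algebraMap F (RatFunc F) β)
    (p : F[X]) :
    σ'' (algebraMap F[X] (RatFunc F) p) = algebraMap F[X] (RatFunc F) (tau σ α β p) := by
  have key : (σ''.toRingHom.comp (algebraMap F[X] (RatFunc F))) =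
      (algebraMap F[X] (RatFunc F)).comp (tau σ α β) := by
    apply Polynomial.ringHom_ext
    · intro c
      have := hC c
      simp only [RingHom.comp_apply, RingEquiv.toRingHom_eq_coe, RingEquiv.coe_toRingHom,
        RatFunc.algebraMap_C, tau_C, ← RatFunc.algebraMap_eq_C] at *
      exact this
    · have := hX
      simp only [RingHom.comp_apply, RingEquiv.toRingHom_eq_coe, RingEquiv.coe_toRingHom,
        RatFunc.algebraMap_X, tau_X, map_add, map_mul, RatFunc.algebraMap_C,
        ← RatFunc.algebraMap_eq_C] at *
      rw [this, _root_.map_add, _root_.map_mul, RatFunc.algebraMap_C, RatFunc.algebraMap_C,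
        RatFunc.algebraMap_X, ← RatFunc.algebraMap_eq_C]
  exact RingHom.congr_fun key p

lemma ordP_sigma (hα : α ≠ 0)
    (hC : ∀ c : F, σ'' (algebraMap F (RatFunc F) c) = algebraMap F (RatFunc F) (σ c))
    (hX : σ'' RatFunc.X = algebraMap F (RatFunc F) α * RatFunc.X + algebraMap F (RatFunc F) β)
    {q : F[X]} {f : RatFunc F} (hq : NPrime q) (hf : f ≠ 0) :
    ordP (ntau σ α β q) (σ'' f) = ordP q f := by
  have h : σ'' f = algebraMap F[X] (RatFunc F) (tau σ α β f.num) /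
      algebraMap F[X] (RatFunc F) (tau σ α β f.denom) := by
    conv_lhs => rw [← RatFunc.num_div_denom f]
    rw [map_div₀, sigma_algebraMap σ α β σ'' hC hX, sigma_algebraMap σ α β σ'' hC hX]
  rw [h, ordP_div _ _ _ (tau_ne_zero σ α β hα (RatFunc.num_ne_zero hf))
      (tau_ne_zero σ α β hα f.denom_ne_zero),
    count_nf_tau σ α β hα hq (RatFunc.num_ne_zero hf),
    count_nf_tau σ α β hα hq f.denom_ne_zero]
  rfl

end Sigma

section Orbit

lemma normalize_eq_mul_inv {p : F[X]} (hp : p ≠ 0) :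
    normalize p = p * C (p.leadingCoeff)⁻¹ := by
  rw [normalize_apply, Polynomial.coe_normUnit,
    CommGroupWithZero.coe_normUnit _ (leadingCoeff_ne_zero.mpr hp)]

lemma nprime_monic {q : F[X]} (hq : NPrime q) : q.Monic := by
  have hq0 : q ≠ 0 := hq.1.ne_zero
  have h1 : q * C (q.leadingCoeff)⁻¹ = q * 1 := by
    rw [mul_one, ← normalize_eq_mul_inv hq0, hq.2]
  have h2 : C (q.leadingCoeff)⁻¹ = (1 : F[X]) := mul_left_cancel₀ hq0 h1
  have h3 : (q.leadingCoeff)⁻¹ = 1 := by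
    have := congrArg (fun p => Polynomial.coeff p 0) h2
    simpa using this
  exact inv_eq_one.mp h3

lemma nprime_natDegree_pos {q : F[X]} (hq : NPrime q) : 0 < q.natDegree :=
  natDegree_pos_iff_degree_pos.mpr (degree_pos_of_irreducible hq.1)

lemma tau_of_monic (hα : α ≠ 0) {r : F[X]} (hr : r.Monic) :
    tau σ α β r = C (α ^ r.natDegree) * ntau σ α β r := by
  have hr0 : r ≠ 0 := hr.ne_zero
  have ht0 : tau σ α β r ≠ 0 := tau_ne_zero σ α β hα hr0
  have hlc : (tau σ α β r).leadingCoeff = α ^ r.natDegree := by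
    rw [tau_leadingCoeff σ α β hα hr0, hr.leadingCoeff, map_one, one_mul]
  rw [ntau, normalize_eq_mul_inv ht0, hlc]
  rw [mul_comm (tau σ α β r), ← mul_assoc, ← C_mul,
    mul_inv_cancel₀ (pow_ne_zero _ hα), C_1, one_mul]

lemma nprime_iterate (hα : α ≠ 0) {q : F[X]} (hq : NPrime q) (j : ℕ) :
    NPrime ((ntau σ α β)^[j] q) := by
  induction j with
  | zero => simpa using hq
  | succ n ih => rw [Function.iterate_succ_apply']; exact ntau_nprime σ α β hα ih

lemma ntau_natDegree (hα : α ≠ 0) {q : F[X]} (hq : q ≠ 0) :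
    (ntau σ α β q).natDegree = q.natDegree := by
  have h1 : (ntau σ α β q).natDegree = (tau σ α β q).natDegree :=
    natDegree_eq_of_degree_eq (degree_normalize)
  rw [h1, tau_natDegree σ α β hα]

/-- the orbit polynomial -/
lemma orbit_poly (hα : α ≠ 0) {q : F[X]} (hq : NPrime q) {k : ℕ} (hk : 0 < k)
    (hfix : (ntau σ α β)^[k] q = q) :
    ∃ f : F[X], f.Monic ∧ q ∣ f ∧ 0 < f.natDegree ∧
      tau σ α β f = C (α ^ f.natDegree) * f := by
  set f : F[X] := ∏ i ∈ Finset.range k, (ntau σ α β)^[i] q with hf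
  have hmem : ∀ i ∈ Finset.range k, ((ntau σ α β)^[i] q).Monic := fun i _ =>
    nprime_monic (nprime_iterate σ α β hα hq i)
  have hMonic : f.Monic := monic_prod_of_monic _ _ hmem
  have hne : ∀ i ∈ Finset.range k, ((ntau σ α β)^[i] q) ≠ 0 := fun i hi => (hmem i hi).ne_zero
  have hdvd : q ∣ f := by
    simpa using Finset.dvd_prod_of_mem (fun i => (ntau σ α β)^[i] q) (Finset.mem_range.mpr hk)
  have hpos : 0 < f.natDegree := by
    have hdeg := natDegree_le_of_dvd hdvd hMonic.ne_zero
    exact lt_of_lt_of_le (nprime_natDegree_pos hq) hdeg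
  refine ⟨f, hMonic, hdvd, hpos, ?_⟩
  have hdf : f.natDegree = ∑ i ∈ Finset.range k, ((ntau σ α β)^[i] q).natDegree :=
    natDegree_prod _ _ hne
  have step : tau σ α β f =
      C (α ^ f.natDegree) * ∏ i ∈ Finset.range k, (ntau σ α β)^[i + 1] q := by
    rw [hf, map_prod]
    have : ∀ i ∈ Finset.range k, tau σ α β ((ntau σ α β)^[i] q) =
        C (α ^ ((ntau σ α β)^[i] q).natDegree) * (ntau σ α β)^[i + 1] q := by
      intro i hi
      rw [Function.iterate_succ_apply', ntau]
      exact tau_of_monic σ α β hα (hmem i hi)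
    rw [Finset.prod_congr rfl this, Finset.prod_mul_distrib]
    congr 1
    rw [← map_prod, Finset.prod_pow_eq_pow_sum, ← hdf]
  have cyc : ∏ i ∈ Finset.range k, (ntau σ α β)^[i + 1] q =
      ∏ i ∈ Finset.range k, (ntau σ α β)^[i] q := by
    have h1 := (Finset.prod_range_succ' (fun i => (ntau σ α β)^[i] q) k).symm.trans
      (Finset.prod_range_succ (fun i => (ntau σ α β)^[i] q) k)
    simp only [Function.iterate_zero_apply, hfix] at h1
    exact mul_right_cancel₀ hq.1.ne_zero h1
  rw [step, cyc, ← hf]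

variable (σ'' : RatFunc F ≃+* RatFunc F)

/-- no normalized prime (other than `X` in the Π case) has a finite orbit under `ntau` -/
lemma orbit_ne (hα : α ≠ 0)
    (hC : ∀ c : F, σ'' (algebraMap F (RatFunc F) c) = algebraMap F (RatFunc F) (σ c))
    (hX : σ'' RatFunc.X = algebraMap F (RatFunc F) α * RatFunc.X + algebraMap F (RatFunc F) β)
    (hconst : ∀ f : RatFunc F, σ'' f = f → ∃ c : F, σ c = c ∧ f = algebraMap F (RatFunc F) c)
    (hcase : β = 0 ∨ α = 1)
    {q : F[X]} (hq : NPrime q) (hqX : β = 0 → q ≠ X) {k : ℕ} (hk : 0 < k) :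
    (ntau σ α β)^[k] q ≠ q := by
  intro hfix
  obtain ⟨f, hMonic, hdvd, hpos, htauf⟩ := orbit_poly σ α β hα hq hk hfix
  set D := f.natDegree with hD
  have hf0 : f ≠ 0 := hMonic.ne_zero
  have hsig : σ'' (algebraMap F[X] (RatFunc F) f) =
      algebraMap F (RatFunc F) (α ^ D) * algebraMap F[X] (RatFunc F) f := by
    rw [sigma_algebraMap σ α β σ'' hC hX, htauf, _root_.map_mul, RatFunc.algebraMap_C,
      ← RatFunc.algebraMap_eq_C]
  rcases hcase with hβ | hα1
  · -- Π case : β = 0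
    subst hβ
    have hXq : σ'' (RatFunc.X ^ D) = algebraMap F (RatFunc F) (α ^ D) * RatFunc.X ^ D := by
      rw [_root_.map_pow, hX, _root_.map_zero, add_zero, mul_pow, _root_.map_pow]
    have hfix' : σ'' (algebraMap F[X] (RatFunc F) f / RatFunc.X ^ D) =
        algebraMap F[X] (RatFunc F) f / RatFunc.X ^ D := by
      rw [map_div₀, hsig, hXq, mul_div_mul_left]
      exact RatFunc.algebraMap_ne_zero (by simpa using pow_ne_zero D hα)
    obtain ⟨c, -, hc⟩ := hconst _ hfix'
    have hXD : RatFunc.X ^ D = algebraMap F[X] (RatFunc F) (X ^ D) := by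
      rw [_root_.map_pow, RatFunc.algebraMap_X]
    have hfXD : algebraMap F[X] (RatFunc F) f = algebraMap F[X] (RatFunc F) (C c * X ^ D) := by
      rw [_root_.map_mul, RatFunc.algebraMap_C, ← RatFunc.algebraMap_eq_C, ← hXD, ← hc]
      rw [div_mul_cancel₀]
      rw [hXD]
      exact RatFunc.algebraMap_ne_zero (pow_ne_zero D X_ne_zero)
    have hfeq : f = C c * X ^ D := RatFunc.algebraMap_injective F hfXD
    have hprime : Prime q := UniqueFactorizationMonoid.irreducible_iff_prime.mp hq.1
    have hc0 : c ≠ 0 := by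
      intro h0
      rw [h0, _root_.map_zero, zero_mul] at hfeq
      exact hf0 hfeq
    rcases hprime.2.2 (C c) (X ^ D) (hfeq ▸ hdvd) with hd | hd
    · exact hq.1.1 (isUnit_of_dvd_unit hd (isUnit_C.mpr (isUnit_iff_ne_zero.mpr hc0)))
    · have hdX : q ∣ X := hprime.dvd_of_dvd_pow hd
      have hassoc : Associated q X := hq.1.associated_of_dvd irreducible_X hdX
      have hqX2 : q = X := by
        rw [← hq.2, ← monic_X.normalize_eq_self]
        exact normalize_eq_normalize hassoc.dvd hassoc.symm.dvd
      exact (hqX rfl) hqX2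
  · -- Σ case : α = 1
    subst hα1
    rw [one_pow, map_one, one_mul] at hsig
    obtain ⟨c, -, hc⟩ := hconst _ hsig
    have hfeq : f = C c := by
      apply RatFunc.algebraMap_injective F
      rw [hc, RatFunc.algebraMap_C, RatFunc.algebraMap_eq_C]
    have : f.natDegree = 0 := by rw [hfeq]; exact natDegree_C c
    omega

end Orbit

section Main

variable (σ'' : RatFunc F ≃+* RatFunc F)

lemma ordP_prod {ι : Type*} (q : F[X]) (s : Finset ι) (f : ι → RatFunc F)
    (h : ∀ i ∈ s, f i ≠ 0) :
    ordP q (∏ i ∈ s, f i) = ∑ i ∈ s, ordP q (f i) := by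
  classical
  induction s using Finset.induction with
  | empty => simpa using ordP_one q
  | insert j t hnot ih =>
    rw [Finset.prod_insert hnot, Finset.sum_insert hnot,
      ordP_mul q (h j (Finset.mem_insert_self j t))
        (Finset.prod_ne_zero_iff.mpr fun i hi => h i (Finset.mem_insert_of_mem hi)),
      ih (fun i hi => h i (Finset.mem_insert_of_mem hi))]

lemma iterate_inj (hα : α ≠ 0) (i : ℕ) {r r' : F[X]} (hr : NPrime r) (hr' : NPrime r')
    (h : (ntau σ α β)^[i] r = (ntau σ α β)^[i] r') : r = r' := by
  induction i generalizing r r' with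
  | zero => simpa using h
  | succ n ih =>
    rw [Function.iterate_succ_apply, Function.iterate_succ_apply] at h
    exact ntau_inj σ α β hα hr hr'
      (ih (ntau_nprime σ α β hα hr) (ntau_nprime σ α β hα hr') h)

lemma m_dvd_ordP (hα : α ≠ 0)
    (hC : ∀ c : F, σ'' (algebraMap F (RatFunc F) c) = algebraMap F (RatFunc F) (σ c))
    (hX : σ'' RatFunc.X = algebraMap F (RatFunc F) α * RatFunc.X + algebraMap F (RatFunc F) β)
    (hconst : ∀ f : RatFunc F, σ'' f = f → ∃ c : F, σ c = c ∧ f = algebraMap F (RatFunc F) c)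
    (hcase : β = 0 ∨ α = 1)
    {a g : RatFunc F} (ha : a ≠ 0) (hg : g ≠ 0) {m : ℕ} (hrel : σ'' g = a ^ m * g)
    {q : F[X]} (hq : NPrime q) (hqX : β = 0 → q ≠ X) :
    (m : ℤ) ∣ ordP q g := by
  have key : ∀ r : F[X], NPrime r →
      (m : ℤ) ∣ ordP r g - ordP (ntau σ α β r) g := by
    intro r hr
    have h1 : ordP (ntau σ α β r) (σ'' g) = ordP r g :=
      ordP_sigma σ α β σ'' hα hC hX hr hg
    rw [hrel, ordP_mul _ (pow_ne_zero m ha) hg, ordP_pow _ ha] at h1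
    exact ⟨ordP (ntau σ α β r) a, by linarith⟩
  have chain : ∀ j : ℕ, (m : ℤ) ∣ ordP q g - ordP ((ntau σ α β)^[j] q) g := by
    intro j
    induction j with
    | zero => simp
    | succ i ih =>
      have h2 := key _ (nprime_iterate σ α β hα hq i)
      rw [← Function.iterate_succ_apply' (ntau σ α β) i q] at h2
      have h3 := dvd_add ih h2
      simpa using h3
  -- pigeonhole
  set supp : Finset F[X] :=
    (normalizedFactors g.num).toFinset ∪ (normalizedFactors g.denom).toFinset with hsupp
  have hinj : Function.Injective (fun j : ℕ => (ntau σ α β)^[j] q) := by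
    intro i j hij
    by_contra hne
    wlog hlt : i < j generalizing i j
    · exact this hij.symm (Ne.symm hne) (by omega)
    · have h3 : (ntau σ α β)^[i] ((ntau σ α β)^[j - i] q) = (ntau σ α β)^[i] q := by
        rw [← Function.iterate_add_apply]
        have : i + (j - i) = j := by omega
        rw [this]
        exact hij.symm
      have h4 : (ntau σ α β)^[j - i] q = q :=
        iterate_inj σ α β hα i (nprime_iterate σ α β hα hq _) hq h3
      exact orbit_ne σ α β σ'' hα hC hX hconst hcase hq hqX (by omega : 0 < j - i) h4
  obtain ⟨j, hj⟩ : ∃ j : ℕ, (ntau σ α β)^[j] q ∉ supp := by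
    by_contra hcon
    push_neg at hcon
    have hsub : Set.range (fun j : ℕ => (ntau σ α β)^[j] q) ⊆ ↑supp := by
      rintro x ⟨j, rfl⟩; exact hcon j
    exact Set.infinite_range_of_injective hinj (Set.Finite.subset supp.finite_toSet hsub)
  have hz : ordP ((ntau σ α β)^[j] q) g = 0 := by
    apply ordP_zero_of_not_mem
    · intro hmem; exact hj (Finset.mem_union_left _ (Multiset.mem_toFinset.mpr hmem))
    · intro hmem; exact hj (Finset.mem_union_right _ (Multiset.mem_toFinset.mpr hmem))
  have := chain j
  rw [hz] at this
  simpa using this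

end Main

end Stmt14

open Stmt14 in
/-- In a ΠΣ-field extension `F(t)` of `F`, if `σ(g)/g = a^m` for `a, g ∈ F(t)*` and
`m ≥ 1`, then `g = γ^m · u · t^n` for some `γ ∈ F(t)*`, `u ∈ F*`, `n ∈ ℤ`, with
`n = 0` in the Σ-monomial case. -/
theorem stmt_14 (F : Type*) [Field F] [CharZero F] (σ : F ≃+* F)
    (σ' : RatFunc F ≃+* RatFunc F) (α β : F)
    (hαβ : α = 1 ∨ (α ≠ 0 ∧ β = 0))
    (hC : ∀ c : F, σ' (algebraMap F (RatFunc F) c) = algebraMap F (RatFunc F) (σ c))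
    (hX : σ' RatFunc.X = algebraMap F (RatFunc F) α * RatFunc.X + algebraMap F (RatFunc F) β)
    (hconst : ∀ f : RatFunc F, σ' f = f → ∃ c : F, σ c = c ∧ f = algebraMap F (RatFunc F) c)
    (a g : RatFunc F) (ha : a ≠ 0) (hg : g ≠ 0)
    (m : ℕ) (hm : 0 < m) (hrel : σ' g = a ^ m * g) :
    ∃ (γ : RatFunc F) (u : F) (n : ℤ), γ ≠ 0 ∧ u ≠ 0 ∧
      g = γ ^ m * algebraMap F (RatFunc F) u * RatFunc.X ^ n ∧
      (α = 1 ∧ β ≠ 0 → n = 0) := by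
  classical
  have hα : α ≠ 0 := by
    rcases hαβ with h | h
    · rw [h]; exact one_ne_zero
    · exact h.1
  have hcase : β = 0 ∨ α = 1 := by tauto
  set supp : Finset (Polynomial F) :=
    (UniqueFactorizationMonoid.normalizedFactors g.num).toFinset ∪
      (UniqueFactorizationMonoid.normalizedFactors g.denom).toFinset with hsupp
  have hsupp_np : ∀ q ∈ supp, NPrime q := by
    intro q hqmem
    rw [hsupp, Finset.mem_union, Multiset.mem_toFinset, Multiset.mem_toFinset] at hqmem
    rcases hqmem with h | h
    · exact ⟨UniqueFactorizationMonoid.irreducible_of_normalized_factor q h,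
        UniqueFactorizationMonoid.normalize_normalized_factor q h⟩
    · exact ⟨UniqueFactorizationMonoid.irreducible_of_normalized_factor q h,
        UniqueFactorizationMonoid.normalize_normalized_factor q h⟩
  have hnotsupp : ∀ q, q ∉ supp → ordP q g = 0 := by
    intro q hq
    rw [hsupp, Finset.mem_union, not_or, Multiset.mem_toFinset, Multiset.mem_toFinset] at hq
    exact ordP_zero_of_not_mem hq.1 hq.2
  set S : Finset (Polynomial F) := if β = 0 then supp.erase Polynomial.X else supp with hS
  set n : ℤ := if β = 0 then ordP Polynomial.X g else 0 with hn
  have hSsupp : S ⊆ supp := by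
    rw [hS]; split_ifs
    · exact Finset.erase_subset _ _
    · exact Finset.Subset.refl _
  have hS_np : ∀ q ∈ S, NPrime q := fun q hq => hsupp_np q (hSsupp hq)
  have hdvd : ∀ q ∈ S, (m : ℤ) ∣ ordP q g := by
    intro q hqS
    refine m_dvd_ordP σ α β σ' hα hC hX hconst hcase ha hg hrel (hS_np q hqS) ?_
    intro hβ; rw [hS, if_pos hβ] at hqS; exact Finset.ne_of_mem_erase hqS
  set e : Polynomial F → ℤ := fun q => ordP q g / m with he
  set γ : RatFunc F := ∏ q ∈ S, (algebraMap (Polynomial F) (RatFunc F) q) ^ (e q) with hγ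
  have hfac_ne : ∀ q ∈ S, (algebraMap (Polynomial F) (RatFunc F) q) ^ (e q) ≠ 0 := fun q hqS =>
    zpow_ne_zero _ (RatFunc.algebraMap_ne_zero (hS_np q hqS).1.ne_zero)
  have hγ0 : γ ≠ 0 := Finset.prod_ne_zero_iff.mpr hfac_ne
  have hordγ : ∀ q : Polynomial F, NPrime q → ordP q γ = if q ∈ S then e q else 0 := by
    intro q hq
    rw [hγ, ordP_prod q S _ hfac_ne]
    have hterm : ∀ r ∈ S, ordP q ((algebraMap (Polynomial F) (RatFunc F) r) ^ (e r)) =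
        if q = r then e r else 0 := by
      intro r hrS
      rw [ordP_zpow q (RatFunc.algebraMap_ne_zero (hS_np r hrS).1.ne_zero),
        ordP_irreducible (q := q) r (hS_np r hrS).1, (hS_np r hrS).2]
      split_ifs <;> ring
    rw [Finset.sum_congr rfl hterm, Finset.sum_ite_eq]
  have hordXn : ∀ q : Polynomial F, NPrime q →
      ordP q ((RatFunc.X : RatFunc F) ^ n) = if q = Polynomial.X then n else 0 := by
    intro q hq
    have hXalg : (RatFunc.X : RatFunc F) = algebraMap (Polynomial F) (RatFunc F) Polynomial.X :=
      (RatFunc.algebraMap_X).symm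
    rw [hXalg, ordP_zpow q (RatFunc.algebraMap_ne_zero Polynomial.X_ne_zero),
      ordP_irreducible (q := q) _ Polynomial.irreducible_X, Polynomial.monic_X.normalize_eq_self]
    split_ifs <;> ring
  have hXne : (RatFunc.X : RatFunc F) ≠ 0 := by
    rw [← RatFunc.algebraMap_X]
    exact RatFunc.algebraMap_ne_zero Polynomial.X_ne_zero
  have hord_total : ∀ q : Polynomial F, NPrime q →
      ordP q (γ ^ m * (RatFunc.X : RatFunc F) ^ n) = ordP q g := by
    intro q hq
    have h1 : γ ^ m ≠ 0 := pow_ne_zero _ hγ0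
    have h2 : (RatFunc.X : RatFunc F) ^ n ≠ 0 := zpow_ne_zero _ hXne
    rw [ordP_mul q h1 h2, ordP_pow q hγ0, hordγ q hq, hordXn q hq]
    by_cases hqS : q ∈ S
    · rw [if_pos hqS]
      have hqXne : (if q = Polynomial.X then n else 0) = 0 := by
        split_ifs with hqx
        · by_cases hβ : β = 0
          · exfalso; rw [hS, if_pos hβ] at hqS; exact Finset.ne_of_mem_erase hqS hqx
          · rw [hn, if_neg hβ]
        · rfl
      rw [hqXne, add_zero, mul_comm]
      exact Int.ediv_mul_cancel (hdvd q hqS)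
    · rw [if_neg hqS, mul_zero, zero_add]
      split_ifs with hqx
      · subst hqx
        by_cases hβ : β = 0
        · rw [hn, if_pos hβ]
        · rw [hn, if_neg hβ]
          rw [hS, if_neg hβ] at hqS
          exact (hnotsupp _ hqS).symm
      · by_cases hβ : β = 0
        · rw [hS, if_pos hβ] at hqS
          have hns : q ∉ supp := fun hmem => hqS (Finset.mem_erase.mpr ⟨hqx, hmem⟩)
          exact (hnotsupp _ hns).symm
        · rw [hS, if_neg hβ] at hqS
          exact (hnotsupp _ hqS).symm
  set w : RatFunc F := g / (γ ^ m * (RatFunc.X : RatFunc F) ^ n) with hw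
  have hzw : γ ^ m * (RatFunc.X : RatFunc F) ^ n ≠ 0 :=
    mul_ne_zero (pow_ne_zero _ hγ0) (zpow_ne_zero _ hXne)
  have hw0 : w ≠ 0 := div_ne_zero hg hzw
  have hwords : ∀ q, NPrime q → ordP q w = 0 := by
    intro q hq
    rw [hw, div_eq_mul_inv, ordP_mul q hg (inv_ne_zero hzw), ordP_inv q hzw, hord_total q hq]
    omega
  obtain ⟨c, hc0, hc⟩ := eq_const_of_ordP_eq_zero hw0 hwords
  refine ⟨γ, c, n, hγ0, hc0, ?_, ?_⟩
  · have hgw : g = w * (γ ^ m * RatFunc.X ^ n) := by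
      rw [hw, div_mul_cancel₀ _ hzw]
    rw [hgw, hc]; ring
  · rintro ⟨h1, h2⟩; rw [hn, if_neg h2]
end

section
/- Let (F(t),σ) be a Σ-field extension of a difference field (F,σ) (σ(t) = t + β, β ∈ F, const(F(t),σ) = const(F,σ)). If (F,σ) is radical-stable, then (F(t),σ) is radical-stable. -/
open Polynomial UniqueFactorizationMonoid

namespace Stmt16

variable {F : Type*} [Field F]

noncomputable local instance : DecidableEq F := Classical.decEq F

/-- The ring automorphism of `F[X]` given by `p ↦ (p.map σ).comp (X + C b)`. -/
noncomputable def tauHom (σ : F →+* F) (b : F) : F[X] →+* F[X] :=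
  Polynomial.eval₂RingHom (Polynomial.C.comp σ) (Polynomial.X + Polynomial.C b)

@[simp] lemma tauHom_C (σ : F →+* F) (b : F) (c : F) :
    tauHom σ b (Polynomial.C c) = Polynomial.C (σ c) := by
  simp [tauHom]

@[simp] lemma tauHom_X (σ : F →+* F) (b : F) :
    tauHom σ b Polynomial.X = Polynomial.X + Polynomial.C b := by
  simp [tauHom]

noncomputable def tau (σ : F ≃+* F) (b : F) : F[X] ≃+* F[X] :=
  RingEquiv.ofRingHom (tauHom (σ : F →+* F) b)
    (tauHom (σ.symm : F →+* F) (σ.symm (-b)))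
    (by apply Polynomial.ringHom_ext <;> simp)
    (by apply Polynomial.ringHom_ext <;> simp [map_neg])

@[simp] lemma tau_C (σ : F ≃+* F) (b : F) (c : F) :
    tau σ b (Polynomial.C c) = Polynomial.C (σ c) := tauHom_C _ _ _

@[simp] lemma tau_X (σ : F ≃+* F) (b : F) :
    tau σ b Polynomial.X = Polynomial.X + Polynomial.C b := tauHom_X _ _

lemma tau_eq (σ : F ≃+* F) (b : F) (p : F[X]) :
    tau σ b p = (p.map (σ : F →+* F)).comp (Polynomial.X + Polynomial.C b) := by
  rw [Polynomial.comp, Polynomial.eval₂_map]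
  rfl

lemma tau_natDegree (σ : F ≃+* F) (b : F) (p : F[X]) :
    (tau σ b p).natDegree = p.natDegree := by
  rw [tau_eq, Polynomial.natDegree_comp, Polynomial.natDegree_X_add_C, mul_one,
    Polynomial.natDegree_map]

lemma tau_leadingCoeff (σ : F ≃+* F) (b : F) (p : F[X]) :
    (tau σ b p).leadingCoeff = σ p.leadingCoeff := by
  rw [tau_eq, Polynomial.leadingCoeff_comp (by simp [Polynomial.natDegree_X_add_C])]
  simp [Polynomial.leadingCoeff_map]

lemma tau_monic (σ : F ≃+* F) (b : F) {p : F[X]} (hp : p.Monic) : (tau σ b p).Monic := by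
  have := tau_leadingCoeff σ b p
  rw [Polynomial.Monic.def, this, hp, map_one]

lemma tau_symm_monic (σ : F ≃+* F) (b : F) {p : F[X]} (hp : p.Monic) :
    ((tau σ b).symm p).Monic := by
  have h := tau_leadingCoeff σ b ((tau σ b).symm p)
  rw [RingEquiv.apply_symm_apply] at h
  have : ((tau σ b).symm p).leadingCoeff = σ.symm p.leadingCoeff := by
    rw [h, RingEquiv.symm_apply_apply]
  rw [Polynomial.Monic.def, this, hp, map_one]

lemma tau_irreducible (σ : F ≃+* F) (b : F) {p : F[X]} (hp : Irreducible p) :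
    Irreducible (tau σ b p) := hp.map (tau σ b)

lemma tau_symm_irreducible (σ : F ≃+* F) (b : F) {p : F[X]} (hp : Irreducible p) :
    Irreducible ((tau σ b).symm p) := hp.map (tau σ b).symm



noncomputable def ordP (q p : F[X]) : ℕ :=
  (normalizedFactors p).count q

lemma ordP_mul {p r : F[X]} (q : F[X]) (hp : p ≠ 0) (hr : r ≠ 0) :
    ordP q (p * r) = ordP q p + ordP q r := by
  simp only [ordP, normalizedFactors_mul hp hr, Multiset.count_add]

lemma ordP_self {q : F[X]} (hq : Irreducible q) (hqm : q.Monic) : ordP q q = 1 := by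
  simp [ordP, normalizedFactors_irreducible hq, hqm.normalize_eq_self]

lemma ordP_of_ne {q r : F[X]} (hr : Irreducible r) (hrm : r.Monic) (hne : q ≠ r) :
    ordP q r = 0 := by
  simp [ordP, normalizedFactors_irreducible hr, hrm.normalize_eq_self,
    Multiset.count_singleton, hne]

lemma ordP_one (q : F[X]) : ordP q 1 = 0 := by
  simp [ordP, normalizedFactors_one]

lemma ordP_isUnit {q p : F[X]} (hq : Irreducible q) (hp : IsUnit p) : ordP q p = 0 := by
  rw [ordP, Multiset.count_eq_zero]
  intro hmem
  exact hq.not_isUnit (isUnit_of_dvd_unit (dvd_of_mem_normalizedFactors hmem) hp)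

lemma pow_ordP_dvd {p : F[X]} (q : F[X]) (hp : p ≠ 0) : q ^ ordP q p ∣ p := by
  have h1 : Multiset.replicate (ordP q p) q ≤ normalizedFactors p :=
    Multiset.le_count_iff_replicate_le.mp le_rfl
  have h2 := Multiset.prod_dvd_prod_of_le h1
  rw [Multiset.prod_replicate] at h2
  exact h2.trans (prod_normalizedFactors hp).dvd

lemma le_ordP_of_pow_dvd {q p : F[X]} (hq : Irreducible q) (hqm : q.Monic) (hp : p ≠ 0)
    {k : ℕ} (h : q ^ k ∣ p) : k ≤ ordP q p := by
  rcases Nat.eq_zero_or_pos k with rfl | hk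
  · exact Nat.zero_le _
  have hqk : q ^ k ≠ 0 := pow_ne_zero _ hq.ne_zero
  have hle := (dvd_iff_normalizedFactors_le_normalizedFactors hqk hp).mp h
  have hfac : normalizedFactors (q ^ k) = Multiset.replicate k q := by
    rw [normalizedFactors_pow, normalizedFactors_irreducible hq, hqm.normalize_eq_self,
      Multiset.nsmul_singleton]
  rw [hfac] at hle
  have := Multiset.count_le_of_le q hle
  rwa [Multiset.count_replicate_self] at this

lemma ordP_map (φ : F[X] ≃+* F[X]) {q p : F[X]} (hq : Irreducible q) (hqm : q.Monic)
    (hq' : Irreducible (φ q)) (hqm' : (φ q).Monic) (hp : p ≠ 0) :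
    ordP (φ q) (φ p) = ordP q p := by
  have hp' : φ p ≠ 0 := by
    simp only [ne_eq, EmbeddingLike.map_eq_zero_iff]; exact hp
  apply le_antisymm
  · apply le_ordP_of_pow_dvd hq hqm hp
    have := pow_ordP_dvd (φ q) hp'
    have h2 := map_dvd (φ.symm : F[X] →+* F[X]) this
    simpa using h2
  · apply le_ordP_of_pow_dvd hq' hqm' hp'
    have := pow_ordP_dvd q hp
    simpa [← map_pow] using map_dvd φ this


noncomputable def ordR (q : F[X]) (f : RatFunc F) : ℤ :=
  (ordP q f.num : ℤ) - (ordP q f.denom : ℤ)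

noncomputable def lcr (f : RatFunc F) : F :=
  f.num.leadingCoeff / f.denom.leadingCoeff

lemma mul_denom (f : RatFunc F) :
    f * algebraMap F[X] (RatFunc F) f.denom = algebraMap F[X] (RatFunc F) f.num := by
  have h := RatFunc.num_div_denom f
  rw [div_eq_iff (RatFunc.algebraMap_ne_zero (f.denom_ne_zero))] at h
  exact h.symm

lemma cross {f : RatFunc F} {p r : F[X]}
    (h : f * algebraMap F[X] (RatFunc F) r = algebraMap F[X] (RatFunc F) p) :
    f.num * r = p * f.denom := by
  apply RatFunc.algebraMap_injective F
  rw [map_mul, map_mul, ← mul_denom f]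
  rw [← h]; ring

lemma ordR_eq_of {f : RatFunc F} {p r : F[X]} (q : F[X]) (hf : f ≠ 0) (hp : p ≠ 0)
    (hr : r ≠ 0) (h : f * algebraMap F[X] (RatFunc F) r = algebraMap F[X] (RatFunc F) p) :
    ordR q f = (ordP q p : ℤ) - (ordP q r : ℤ) := by
  have hnum := RatFunc.num_ne_zero hf
  have hden := f.denom_ne_zero
  have hcross := cross h
  have := congrArg (ordP q) hcross
  rw [ordP_mul q hnum hr, ordP_mul q hp hden] at this
  rw [ordR]
  omega

lemma lcr_eq_of {f : RatFunc F} {p r : F[X]} (hf : f ≠ 0) (hp : p ≠ 0)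
    (hr : r ≠ 0) (h : f * algebraMap F[X] (RatFunc F) r = algebraMap F[X] (RatFunc F) p) :
    lcr f = p.leadingCoeff / r.leadingCoeff := by
  have hnum := RatFunc.num_ne_zero hf
  have hden := f.denom_ne_zero
  have hcross := cross h
  have := congrArg Polynomial.leadingCoeff hcross
  rw [Polynomial.leadingCoeff_mul, Polynomial.leadingCoeff_mul] at this
  rw [lcr, div_eq_div_iff (Polynomial.leadingCoeff_ne_zero.mpr hden)
    (Polynomial.leadingCoeff_ne_zero.mpr hr)]
  linear_combination this

lemma lcr_ne_zero {f : RatFunc F} (hf : f ≠ 0) : lcr f ≠ 0 :=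
  div_ne_zero (Polynomial.leadingCoeff_ne_zero.mpr (RatFunc.num_ne_zero hf))
    (Polynomial.leadingCoeff_ne_zero.mpr f.denom_ne_zero)

lemma ordR_mul (q : F[X]) {f g : RatFunc F} (hf : f ≠ 0) (hg : g ≠ 0) :
    ordR q (f * g) = ordR q f + ordR q g := by
  have h : (f * g) * algebraMap F[X] (RatFunc F) (f.denom * g.denom)
      = algebraMap F[X] (RatFunc F) (f.num * g.num) := by
    rw [map_mul, map_mul, show f * g * (algebraMap F[X] (RatFunc F) f.denom *
      algebraMap F[X] (RatFunc F) g.denom) = (f * algebraMap F[X] (RatFunc F) f.denom) *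
      (g * algebraMap F[X] (RatFunc F) g.denom) by ring, mul_denom, mul_denom]
  rw [ordR_eq_of q (mul_ne_zero hf hg) (mul_ne_zero (RatFunc.num_ne_zero hf)
      (RatFunc.num_ne_zero hg)) (mul_ne_zero f.denom_ne_zero g.denom_ne_zero) h,
    ordP_mul q (RatFunc.num_ne_zero hf) (RatFunc.num_ne_zero hg),
    ordP_mul q f.denom_ne_zero g.denom_ne_zero,
    ordR_eq_of q hf (RatFunc.num_ne_zero hf) f.denom_ne_zero (mul_denom f),
    ordR_eq_of q hg (RatFunc.num_ne_zero hg) g.denom_ne_zero (mul_denom g)]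
  push_cast
  ring

lemma ordR_inv (q : F[X]) {f : RatFunc F} (hf : f ≠ 0) : ordR q f⁻¹ = - ordR q f := by
  have h : f⁻¹ * algebraMap F[X] (RatFunc F) f.num = algebraMap F[X] (RatFunc F) f.denom := by
    rw [show f⁻¹ * algebraMap F[X] (RatFunc F) f.num
        = f⁻¹ * (f * algebraMap F[X] (RatFunc F) f.denom) by rw [mul_denom],
      inv_mul_cancel_left₀ hf]
  rw [ordR_eq_of q (inv_ne_zero hf) f.denom_ne_zero (RatFunc.num_ne_zero hf) h,
    ordR_eq_of q hf (RatFunc.num_ne_zero hf) f.denom_ne_zero (mul_denom f)]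
  ring

lemma ordR_algebraMap (q : F[X]) {p : F[X]} (hp : p ≠ 0) :
    ordR q (algebraMap F[X] (RatFunc F) p) = (ordP q p : ℤ) := by
  have h : (algebraMap F[X] (RatFunc F) p) * algebraMap F[X] (RatFunc F) 1
      = algebraMap F[X] (RatFunc F) p := by simp
  rw [ordR_eq_of q (RatFunc.algebraMap_ne_zero hp) hp one_ne_zero h, ordP_one]
  simp

lemma ordR_pow (q : F[X]) {f : RatFunc F} (hf : f ≠ 0) (n : ℕ) :
    ordR q (f ^ n) = n * ordR q f := by
  induction n with
  | zero =>
    simp only [pow_zero, Nat.cast_zero, zero_mul]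
    have h : (1 : RatFunc F) * algebraMap F[X] (RatFunc F) 1 = algebraMap F[X] (RatFunc F) 1 := by
      simp
    rw [ordR_eq_of q one_ne_zero one_ne_zero one_ne_zero h]; ring
  | succ n ih =>
    rw [pow_succ, ordR_mul q (pow_ne_zero n hf) hf, ih]
    push_cast; ring

lemma ordR_zpow (q : F[X]) {f : RatFunc F} (hf : f ≠ 0) (n : ℤ) :
    ordR q (f ^ n) = n * ordR q f := by
  cases n with
  | ofNat n => simpa [zpow_natCast] using ordR_pow q hf n
  | negSucc n =>
    rw [zpow_negSucc, ordR_inv q (pow_ne_zero _ hf), ordR_pow q hf, Int.negSucc_eq]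
    push_cast; ring




lemma monic_of_mem_normalizedFactors {p q : F[X]} (h : q ∈ normalizedFactors p) :
    Irreducible q ∧ q.Monic := by
  have h1 := irreducible_of_normalized_factor q h
  have h2 := normalize_normalized_factor q h
  refine ⟨h1, ?_⟩
  rw [← h2]
  exact Polynomial.monic_normalize h1.ne_zero

/-- support of `g` : the monic irreducible factors of numerator and denominator -/
noncomputable def suppSet (g : RatFunc F) : Finset F[X] :=
  (normalizedFactors g.num).toFinset ∪ (normalizedFactors g.denom).toFinset

lemma mem_suppSet {g : RatFunc F} {q : F[X]} (h : q ∈ suppSet g) :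
    Irreducible q ∧ q.Monic := by
  rw [suppSet, Finset.mem_union, Multiset.mem_toFinset, Multiset.mem_toFinset] at h
  rcases h with h | h <;> exact monic_of_mem_normalizedFactors h

lemma ordR_eq_zero_of_not_mem_suppSet {g : RatFunc F} {q : F[X]} (hq : q ∉ suppSet g) :
    ordR q g = 0 := by
  rw [suppSet, Finset.mem_union, Multiset.mem_toFinset, Multiset.mem_toFinset] at hq
  push_neg at hq
  rw [ordR, ordP, ordP, Multiset.count_eq_zero_of_notMem hq.1,
    Multiset.count_eq_zero_of_notMem hq.2]
  ring

lemma exists_c {f : RatFunc F} (hf : f ≠ 0)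
    (h : ∀ q : F[X], Irreducible q → q.Monic → ordR q f = 0) :
    ∃ c : F, c ≠ 0 ∧ f = algebraMap F (RatFunc F) c := by
  have hnum := RatFunc.num_ne_zero hf
  have hden := f.denom_ne_zero
  have hfac : normalizedFactors f.num = normalizedFactors f.denom := by
    rw [Multiset.ext]
    intro q
    by_cases hmem : q ∈ normalizedFactors f.num ∨ q ∈ normalizedFactors f.denom
    · have hq : Irreducible q ∧ q.Monic := by
        rcases hmem with h' | h' <;> exact monic_of_mem_normalizedFactors h'
      have := h q hq.1 hq.2
      rw [ordR, ordP, ordP] at this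
      omega
    · push_neg at hmem
      rw [Multiset.count_eq_zero_of_notMem hmem.1, Multiset.count_eq_zero_of_notMem hmem.2]
  have hassoc : Associated f.num f.denom :=
    (prod_normalizedFactors hnum).symm.trans (by rw [hfac]; exact prod_normalizedFactors hden)
  obtain ⟨u, hu⟩ := hassoc
  obtain ⟨c, hcu, hcC⟩ := Polynomial.isUnit_iff.mp u.isUnit
  have hc : c ≠ 0 := hcu.ne_zero
  refine ⟨c⁻¹, inv_ne_zero hc, ?_⟩
  have h1 : f * algebraMap F[X] (RatFunc F) f.denom = algebraMap F[X] (RatFunc F) f.num := by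
    have h := RatFunc.num_div_denom f
    rw [div_eq_iff (RatFunc.algebraMap_ne_zero (f.denom_ne_zero))] at h
    exact h.symm
  rw [← hu, ← hcC, map_mul] at h1
  have hCc : algebraMap F[X] (RatFunc F) (Polynomial.C c) ≠ 0 :=
    RatFunc.algebraMap_ne_zero (by simpa using hc)
  have hnum' : algebraMap F[X] (RatFunc F) f.num ≠ 0 := RatFunc.algebraMap_ne_zero hnum
  have h2 : f * algebraMap F[X] (RatFunc F) (Polynomial.C c) = 1 := by
    apply mul_left_cancel₀ hnum'
    rw [mul_one]
    linear_combination h1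
  have : f = (algebraMap F[X] (RatFunc F) (Polynomial.C c))⁻¹ :=
    eq_inv_of_mul_eq_one_left (by linear_combination h2)
  rw [this, RatFunc.algebraMap_C, RatFunc.algebraMap_eq_C, ← map_inv₀]


section Sigma

variable (σ : F ≃+* F) (σ' : RatFunc F ≃+* RatFunc F) (b : F)
variable (hcompat : ∀ p : F[X],
  σ' (algebraMap F[X] (RatFunc F) p) = algebraMap F[X] (RatFunc F) (tau σ b p))

lemma sigma'_algebraMap
    (hC : ∀ c : F, σ' (algebraMap F (RatFunc F) c) = algebraMap F (RatFunc F) (σ c))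
    (hX : σ' RatFunc.X = RatFunc.X + algebraMap F (RatFunc F) b) (p : F[X]) :
    σ' (algebraMap F[X] (RatFunc F) p) = algebraMap F[X] (RatFunc F) (tau σ b p) := by
  have key : (σ' : RatFunc F →+* RatFunc F).comp (algebraMap F[X] (RatFunc F))
      = (algebraMap F[X] (RatFunc F)).comp (tau σ b : F[X] →+* F[X]) := by
    apply Polynomial.ringHom_ext
    · intro c
      simp only [RingHom.comp_apply, RingHom.coe_coe, RatFunc.algebraMap_C, tau_C]
      exact hC c
    · simp only [RingHom.comp_apply, RingHom.coe_coe, RatFunc.algebraMap_X, tau_X, map_add,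
        RatFunc.algebraMap_C]
      exact hX
  exact DFunLike.congr_fun key p

include hcompat in
lemma ordR_sigma' {q : F[X]} (hq : Irreducible q) (hqm : q.Monic) {f : RatFunc F} (hf : f ≠ 0) :
    ordR q (σ' f) = ordR ((tau σ b).symm q) f := by
  have hq2 : Irreducible ((tau σ b).symm q) := tau_symm_irreducible σ b hq
  have hm2 : ((tau σ b).symm q).Monic := tau_symm_monic σ b hqm
  have hnum := RatFunc.num_ne_zero hf
  have hden := f.denom_ne_zero
  have hrep : σ' f * algebraMap F[X] (RatFunc F) (tau σ b f.denom)
      = algebraMap F[X] (RatFunc F) (tau σ b f.num) := by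
    rw [← hcompat, ← hcompat, ← map_mul, mul_denom]
  have hτnum : tau σ b f.num ≠ 0 := by
    simpa using hnum
  have hτden : tau σ b f.denom ≠ 0 := by
    simpa using hden
  have hσf : σ' f ≠ 0 := by simpa using hf
  rw [ordR_eq_of q hσf hτnum hτden hrep]
  have hq' : tau σ b ((tau σ b).symm q) = q := RingEquiv.apply_symm_apply _ _
  have e1 : ordP q (tau σ b f.num) = ordP ((tau σ b).symm q) f.num := by
    conv_lhs => rw [← hq']
    exact ordP_map (tau σ b) hq2 hm2 (by rwa [hq']) (by rwa [hq']) hnum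
  have e2 : ordP q (tau σ b f.denom) = ordP ((tau σ b).symm q) f.denom := by
    conv_lhs => rw [← hq']
    exact ordP_map (tau σ b) hq2 hm2 (by rwa [hq']) (by rwa [hq']) hden
  rw [e1, e2, ordR]

include hcompat in
lemma lcr_sigma' {f : RatFunc F} (hf : f ≠ 0) : lcr (σ' f) = σ (lcr f) := by
  have hnum := RatFunc.num_ne_zero hf
  have hden := f.denom_ne_zero
  have hrep : σ' f * algebraMap F[X] (RatFunc F) (tau σ b f.denom)
      = algebraMap F[X] (RatFunc F) (tau σ b f.num) := by
    rw [← hcompat, ← hcompat, ← map_mul, mul_denom]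
  have hτnum : tau σ b f.num ≠ 0 := by simpa using hnum
  have hτden : tau σ b f.denom ≠ 0 := by simpa using hden
  have hσf : σ' f ≠ 0 := by simpa using hf
  rw [lcr_eq_of hσf hτnum hτden hrep, tau_leadingCoeff, tau_leadingCoeff, lcr, map_div₀]

end Sigma

lemma lcr_C_mul {c : F} (hc : c ≠ 0) {f : RatFunc F} (hf : f ≠ 0) :
    lcr (algebraMap F (RatFunc F) c * f) = c * lcr f := by
  have hnum := RatFunc.num_ne_zero hf
  have hden := f.denom_ne_zero
  have hrep : (algebraMap F (RatFunc F) c * f) * algebraMap F[X] (RatFunc F) f.denom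
      = algebraMap F[X] (RatFunc F) (Polynomial.C c * f.num) := by
    rw [map_mul, mul_assoc, mul_denom]
    rfl
  have hcf : algebraMap F (RatFunc F) c * f ≠ 0 := by
    apply mul_ne_zero _ hf
    simpa using hc
  rw [lcr_eq_of hcf (mul_ne_zero (by simpa using hc) hnum) hden hrep,
    Polynomial.leadingCoeff_mul, Polynomial.leadingCoeff_C, lcr, mul_div_assoc]

lemma ordR_prod {α : Type*} (q : F[X]) (S : Finset α) (ψ : α → RatFunc F)
    (h : ∀ x ∈ S, ψ x ≠ 0) :
    ordR q (∏ x ∈ S, ψ x) = ∑ x ∈ S, ordR q (ψ x) := by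
  classical
  induction S using Finset.induction_on with
  | empty =>
    simp only [Finset.prod_empty, Finset.sum_empty]
    have hrep : (1 : RatFunc F) * algebraMap F[X] (RatFunc F) 1
        = algebraMap F[X] (RatFunc F) 1 := by simp
    rw [ordR_eq_of q one_ne_zero one_ne_zero one_ne_zero hrep]; ring
  | @insert s t hx ih =>
    rw [Finset.prod_insert hx, Finset.sum_insert hx,
      ordR_mul q (h s (Finset.mem_insert_self s t))
        (Finset.prod_ne_zero_iff.mpr fun x hxt => h x (Finset.mem_insert_of_mem hxt)),
      ih fun x hxt => h x (Finset.mem_insert_of_mem hxt)]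

end Stmt16

/-- If `(F,σ)` is radical-stable, then a Σ-field extension `F(t)` with `σ t = t + β`
and unchanged constants is radical-stable. -/
theorem stmt_16 (F : Type*) [Field F] [CharZero F] (σ : F ≃+* F)
    (σ' : RatFunc F ≃+* RatFunc F) (β : F)
    (hC : ∀ c : F, σ' (algebraMap F (RatFunc F) c) = algebraMap F (RatFunc F) (σ c))
    (hX : σ' RatFunc.X = RatFunc.X + algebraMap F (RatFunc F) β)
    (hconst : ∀ f : RatFunc F, σ' f = f → ∃ c : F, σ c = c ∧ f = algebraMap F (RatFunc F) c)
    (hrs : ∀ a : F, a ≠ 0 → ∀ m : ℕ, 0 < m → (∃ g : F, g ≠ 0 ∧ a ^ m * g = σ g) →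
      ∃ ρ : F, σ ρ = ρ ∧ ρ ^ m = 1 ∧ ∃ g' : F, g' ≠ 0 ∧ (a * ρ) * g' = σ g') :
    ∀ a : RatFunc F, a ≠ 0 → ∀ m : ℕ, 0 < m →
      (∃ g : RatFunc F, g ≠ 0 ∧ a ^ m * g = σ' g) →
      ∃ ρ : F, σ ρ = ρ ∧ ρ ^ m = 1 ∧
        ∃ g' : RatFunc F, g' ≠ 0 ∧ (a * algebraMap F (RatFunc F) ρ) * g' = σ' g' := by
  intro a ha m hm hg
  obtain ⟨g, hg0, hag⟩ := hg
  classical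
  set τ : F[X] ≃+* F[X] := Stmt16.tau σ β with hτdef
  have hcompat : ∀ p : F[X],
      σ' (algebraMap F[X] (RatFunc F) p) = algebraMap F[X] (RatFunc F) (τ p) :=
    Stmt16.sigma'_algebraMap σ σ' β hC hX
  have hm' : (m : ℤ) ≠ 0 := by exact_mod_cast hm.ne'
  -- the exponent functions
  set e : F[X] → ℤ := fun q => Stmt16.ordR q g with he
  set fa : F[X] → ℤ := fun q => Stmt16.ordR q a with hfa
  set e' : F[X] → ℤ := fun q => e q / (m : ℤ) with he'
  have hsymm_mi : ∀ q : F[X], Irreducible q → q.Monic →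
      Irreducible (τ.symm q) ∧ (τ.symm q).Monic := fun q hq hqm =>
    ⟨Stmt16.tau_symm_irreducible σ β hq, Stmt16.tau_symm_monic σ β hqm⟩
  have hstar : ∀ q : F[X], Irreducible q → q.Monic →
      e (τ.symm q) = e q + (m : ℤ) * fa q := by
    intro q hq hqm
    have h1 : Stmt16.ordR q (a ^ m * g) = Stmt16.ordR q (σ' g) := by rw [hag]
    rw [Stmt16.ordR_mul q (pow_ne_zero _ ha) hg0, Stmt16.ordR_pow q ha m,
      Stmt16.ordR_sigma' σ σ' β hcompat hq hqm hg0] at h1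
    simp only [he, hfa]
    linarith
  have hkey : ∀ q : F[X], Irreducible q → q.Monic → e' (τ.symm q) = e' q + fa q := by
    intro q hq hqm
    simp only [he']
    rw [hstar q hq hqm, Int.add_mul_ediv_left _ _ hm']
  -- the correcting product g₁
  set S : Finset F[X] := Stmt16.suppSet g with hS
  set g₁ : RatFunc F := ∏ q ∈ S, (algebraMap F[X] (RatFunc F) q) ^ (e' q) with hg₁def
  have hSmi : ∀ q ∈ S, Irreducible q ∧ q.Monic := fun q hq => Stmt16.mem_suppSet hq
  have hfact : ∀ q ∈ S, (algebraMap F[X] (RatFunc F) q) ^ (e' q) ≠ 0 := by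
    intro q hq
    exact zpow_ne_zero _ (RatFunc.algebraMap_ne_zero (hSmi q hq).1.ne_zero)
  have hg₁ : g₁ ≠ 0 := Finset.prod_ne_zero_iff.mpr hfact
  have hσg₁ : σ' g₁ ≠ 0 := by simpa using hg₁
  have horb : ∀ r : F[X], Irreducible r → r.Monic → Stmt16.ordR r g₁ = e' r := by
    intro r hr hrm
    rw [hg₁def, Stmt16.ordR_prod r S _ hfact]
    have hterm : ∀ q ∈ S, Stmt16.ordR r ((algebraMap F[X] (RatFunc F) q) ^ (e' q))
        = if q = r then e' r else 0 := by
      intro q hq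
      rw [Stmt16.ordR_zpow r (RatFunc.algebraMap_ne_zero (hSmi q hq).1.ne_zero),
        Stmt16.ordR_algebraMap r (hSmi q hq).1.ne_zero]
      by_cases hqr : q = r
      · subst hqr
        rw [Stmt16.ordP_self hr hrm]
        simp
      · rw [Stmt16.ordP_of_ne (hSmi q hq).1 (hSmi q hq).2 (fun hc => hqr hc.symm)]
        simp [hqr]
    rw [Finset.sum_congr rfl hterm, Finset.sum_ite_eq' S r (fun _ => e' r)]
    by_cases hrS : r ∈ S
    · simp [hrS]
    · simp only [hrS, if_false]
      have : e r = 0 := Stmt16.ordR_eq_zero_of_not_mem_suppSet hrS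
      simp only [he']
      rw [this]
      simp
  -- the constant part of a
  set b0 : RatFunc F := a * g₁ * (σ' g₁)⁻¹ with hb0def
  have hb0 : b0 ≠ 0 := mul_ne_zero (mul_ne_zero ha hg₁) (inv_ne_zero hσg₁)
  have hb0ord : ∀ q : F[X], Irreducible q → q.Monic → Stmt16.ordR q b0 = 0 := by
    intro q hq hqm
    rw [hb0def, Stmt16.ordR_mul q (mul_ne_zero ha hg₁) (inv_ne_zero hσg₁),
      Stmt16.ordR_mul q ha hg₁, Stmt16.ordR_inv q hσg₁,
      Stmt16.ordR_sigma' σ σ' β hcompat hq hqm hg₁,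
      horb q hq hqm, horb (τ.symm q) (hsymm_mi q hq hqm).1 (hsymm_mi q hq hqm).2]
    have := hkey q hq hqm
    simp only [hfa] at *
    linarith
  obtain ⟨v, hv0, hveq⟩ := Stmt16.exists_c hb0 hb0ord
  -- the element h = g / g₁ ^ m
  have hg₁m : g₁ ^ m ≠ 0 := pow_ne_zero _ hg₁
  set h2 : RatFunc F := g * (g₁ ^ m)⁻¹ with hh2def
  have hh2 : h2 ≠ 0 := mul_ne_zero hg0 (inv_ne_zero hg₁m)
  have heq : (algebraMap F (RatFunc F) v) ^ m * h2 = σ' h2 := by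
    rw [hh2def, map_mul, map_inv₀, map_pow, ← hag, ← hveq, hb0def]
    field_simp
    rw [div_pow, div_mul_cancel₀ _ (pow_ne_zero _ hσg₁)]
    ring
  have hw : v ^ m * Stmt16.lcr h2 = σ (Stmt16.lcr h2) := by
    have h3 := congrArg Stmt16.lcr heq
    rw [Stmt16.lcr_sigma' σ σ' β hcompat hh2, ← map_pow,
      Stmt16.lcr_C_mul (pow_ne_zero m hv0) hh2] at h3
    exact h3
  obtain ⟨ρ, hρσ, hρm, w', hw', hww'⟩ :=
    hrs v hv0 m hm ⟨Stmt16.lcr h2, Stmt16.lcr_ne_zero hh2, hw⟩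
  refine ⟨ρ, hρσ, hρm, algebraMap F (RatFunc F) w' * g₁,
    mul_ne_zero (by simpa using hw') hg₁, ?_⟩
  have haeq : a = algebraMap F (RatFunc F) v * σ' g₁ * g₁⁻¹ := by
    rw [← hveq, hb0def]
    field_simp
  rw [map_mul σ', hC w', ← hww', haeq, map_mul, map_mul]
  field_simp
end

section
/- Let (F,σ) be a difference field, α̂₁,...,α̂_r ∈ F*, and let {(z_{i1},...,z_{ir})}_{1≤i≤u} be a ℤ-basis of the module M((α̂₁,...,α̂_r),F) = {(n₁,...,n_r) ∈ ℤ^r : ∃ g ∈ F*, α̂₁^{n₁}···α̂_r^{n_r} = σ(g)/g}. Let Z = (z_{ij}) ∈ ℤ^{u×r} and let A·Z·B = D be its Smith normal form with A ∈ GL_u(ℤ), B ∈ GL_r(ℤ), D the diagonal matrix with entries d₁ | d₂ | ··· | d_u. Define α_i = α̂₁^{b̃_{i1}}···α̂_r^{b̃_{ir}} where B^{-1} = (b̃_{ij}). Then {(d₁,0,...,0), (0,d₂,0,...,0), ..., (0,...,0,d_u,0,...,0)} is a ℤ-basis of M((α₁,...,α_r),F). -/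
open Matrix Finset

section Aux
variable {F : Type*} [Field F]

/-- subgroup of units β with β = σ(g)/g for some unit g -/
def snfSub (σ : F →* F) : Subgroup Fˣ where
  carrier := {β | ∃ g : Fˣ, β * g = Units.map σ g}
  one_mem' := ⟨1, by simp⟩
  mul_mem' := by
    rintro a b ⟨g, hg⟩ ⟨h, hh⟩
    refine ⟨g * h, ?_⟩
    rw [_root_.map_mul, ← hg, ← hh, mul_mul_mul_comm]
  inv_mem' := by
    rintro a ⟨g, hg⟩
    refine ⟨g⁻¹, ?_⟩
    rw [map_inv, ← hg]; rw [mul_inv]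

variable {r : ℕ}

def upow (x : Fin r → Fˣ) (m : Fin r → ℤ) : Fˣ := ∏ j, x j ^ m j

lemma upow_zero (x : Fin r → Fˣ) : upow x 0 = 1 := by simp [upow]

lemma upow_add (x : Fin r → Fˣ) (m m' : Fin r → ℤ) :
    upow x (m + m') = upow x m * upow x m' := by
  simp [upow, _root_.zpow_add, Finset.prod_mul_distrib]

lemma upow_smul (x : Fin r → Fˣ) (c : ℤ) (m : Fin r → ℤ) :
    upow x (c • m) = (upow x m) ^ c := by
  simp only [upow, ← Finset.prod_zpow]
  congr 1; funext j
  rw [← _root_.zpow_mul]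
  simp [mul_comm]

lemma upow_sum {ι : Type*} (x : Fin r → Fˣ) (s : Finset ι) (f : ι → Fin r → ℤ) :
    upow x (∑ a ∈ s, f a) = ∏ a ∈ s, upow x (f a) := by
  classical
  induction s using Finset.induction_on with
  | empty => simp [upow_zero]
  | insert a s h ih => simp [Finset.sum_insert h, Finset.prod_insert h, upow_add, ih]

lemma upow_val (x : Fin r → Fˣ) (m : Fin r → ℤ) :
    ((upow x m : Fˣ) : F) = ∏ j, (x j : F) ^ m j := by
  rw [upow]
  push_cast
  rfl

end Aux

/-- Smith normal form transformation of a basis of `M((α̂₁,...,α̂_r),F)`: if the rows of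
`Z` form a ℤ-basis of `M((α̂₁,...,α̂_r),F)` and `A·Z·B = D` is the Smith normal form with
diagonal entries `d₁ | ... | d_u`, then with `α_i = ∏_j α̂_j^{(B⁻¹)_{ij}}` the vectors
`d_i·e_i` form a ℤ-basis of `M((α₁,...,α_r),F)`. -/
theorem stmt_19 (F : Type*) [Field F] [CharZero F] (σ : F ≃+* F)
    (r u : ℕ) (αhat : Fin r → F) (hαhat : ∀ i, αhat i ≠ 0)
    (Z : Matrix (Fin u) (Fin r) ℤ)
    (hrows : ∀ i : Fin u, ∃ g : F, g ≠ 0 ∧ (∏ j : Fin r, αhat j ^ (Z i j)) * g = σ g)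
    (hbasis : ∀ n : Fin r → ℤ,
      (∃ g : F, g ≠ 0 ∧ (∏ j : Fin r, αhat j ^ (n j)) * g = σ g) →
      ∃! c : Fin u → ℤ, ∀ j : Fin r, n j = ∑ i : Fin u, c i * Z i j)
    (A Ainv : Matrix (Fin u) (Fin u) ℤ) (hA : A * Ainv = 1 ∧ Ainv * A = 1)
    (B Binv : Matrix (Fin r) (Fin r) ℤ) (hB : B * Binv = 1 ∧ Binv * B = 1)
    (d : Fin u → ℤ) (hd : ∀ i, 0 < d i)
    (hdiv : ∀ i j : Fin u, i ≤ j → d i ∣ d j)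
    (D : Matrix (Fin u) (Fin r) ℤ)
    (hD : ∀ i j, D i j = if (j : ℕ) = (i : ℕ) then d i else 0)
    (hSNF : A * Z * B = D)
    (α : Fin r → F) (hα : ∀ i : Fin r, α i = ∏ j : Fin r, αhat j ^ (Binv i j)) :
    (∀ i : Fin u, ∃ g : F, g ≠ 0 ∧
        (∏ j : Fin r, α j ^ (if (j : ℕ) = (i : ℕ) then d i else 0)) * g = σ g) ∧
      ∀ n : Fin r → ℤ, (∃ g : F, g ≠ 0 ∧ (∏ j : Fin r, α j ^ (n j)) * g = σ g) →
        ∃! c : Fin u → ℤ, ∀ j : Fin r, n j = ∑ i : Fin u,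
          c i * (if (j : ℕ) = (i : ℕ) then d i else 0) := by
  classical
  set σm : F →* F := (σ : F →+* F).toMonoidHom with hσm
  set uh : Fin r → Fˣ := fun j => Units.mk0 (αhat j) (hαhat j) with huh
  -- membership translation
  have hmem : ∀ m : Fin r → ℤ,
      (∃ g : F, g ≠ 0 ∧ (∏ j : Fin r, αhat j ^ (m j)) * g = σ g) ↔
        upow uh m ∈ snfSub σm := by
    intro m
    constructor
    · rintro ⟨g, hg, hgσ⟩
      refine ⟨Units.mk0 g hg, ?_⟩
      ext
      simpa [upow_val, huh, hσm] using hgσ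
    · rintro ⟨g, hg⟩
      refine ⟨(g : F), g.ne_zero, ?_⟩
      have := congrArg (Units.val) hg
      simpa [upow_val, huh, hσm] using this
  -- product over α in terms of upow
  have hL : ∀ w : Fin r → ℤ,
      (∏ j : Fin r, α j ^ (w j)) =
        ((upow uh (fun k => ∑ j : Fin r, w j * Binv j k) : Fˣ) : F) := by
    intro w
    have key : upow uh (fun k => ∑ j : Fin r, w j * Binv j k)
        = ∏ j : Fin r, (upow uh (Binv j)) ^ (w j) := by
      have : (fun k => ∑ j : Fin r, w j * Binv j k)
          = ∑ j : Fin r, (w j) • (Binv j) := by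
        funext k
        simp [Finset.sum_apply]
      rw [this, upow_sum]
      exact Finset.prod_congr rfl fun j _ => upow_smul uh (w j) (Binv j)
    rw [key]
    push_cast
    refine Finset.prod_congr rfl fun j _ => ?_
    rw [upow_val, hα]
    simp [huh]
  -- rows of Z are in the subgroup
  have hZmem : ∀ i : Fin u, upow uh (Z i) ∈ snfSub σm := fun i => (hmem (Z i)).1 (hrows i)
  have hDB : D * Binv = A * Z := by
    rw [← hSNF, Matrix.mul_assoc, hB.1, Matrix.mul_one]
  -- injectivity of vecMul by Z
  have hZinj : ∀ e : Fin u → ℤ, e ᵥ* Z = 0 → e = 0 := by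
    intro e he
    obtain ⟨c₀, hc₀, hc₀u⟩ := hbasis 0 ⟨1, one_ne_zero, by simp⟩
    have h1 : e = c₀ := hc₀u e (by
      intro j
      have := congrFun he j
      simpa [Matrix.vecMul, dotProduct] using this.symm)
    have h2 : (0 : Fin u → ℤ) = c₀ := hc₀u 0 (by simp)
    rw [h1, ← h2]
  constructor
  · -- part 1
    intro i
    have hgoal : (fun j : Fin r => (if (j : ℕ) = (i : ℕ) then d i else 0)) = D i := by
      funext j; rw [hD]
    have hexp : (fun k => ∑ j : Fin r, D i j * Binv j k)
        = fun k => ∑ t : Fin u, A i t * Z t k := by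
      funext k
      have := congrFun (congrFun hDB i) k
      simpa [Matrix.mul_apply] using this
    have hmem2 : upow uh (fun k => ∑ t : Fin u, A i t * Z t k) ∈ snfSub σm := by
      have : (fun k => ∑ t : Fin u, A i t * Z t k)
          = ∑ t : Fin u, (A i t) • (Z t) := by
        funext k; simp [Finset.sum_apply]
      rw [this, upow_sum]
      exact Subgroup.prod_mem _ fun t _ => by
        rw [upow_smul]; exact Subgroup.zpow_mem _ (hZmem t) _
    have := (hmem _).2 hmem2
    obtain ⟨g, hg, hgσ⟩ := this
    refine ⟨g, hg, ?_⟩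
    calc (∏ j : Fin r, α j ^ (if (j : ℕ) = (i : ℕ) then d i else 0)) * g
        = (∏ j : Fin r, α j ^ (D i j)) * g := by
          congr 1
          exact Finset.prod_congr rfl fun j _ => by rw [hD]
      _ = ((upow uh (fun k => ∑ j : Fin r, D i j * Binv j k) : Fˣ) : F) * g := by
          rw [hL]
      _ = σ g := by
          rw [hexp, upow_val]
          simpa [huh] using hgσ
  · -- part 2
    intro n hn
    obtain ⟨g, hg, hgσ⟩ := hn
    set m : Fin r → ℤ := fun k => ∑ j : Fin r, n j * Binv j k with hm
    have hcoe : (∏ j : Fin r, αhat j ^ (m j)) = ∏ j : Fin r, α j ^ (n j) := by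
      rw [hL n, upow_val]
      exact Finset.prod_congr rfl fun j _ => by simp [huh, hm]
    have hmemm : ∃ g : F, g ≠ 0 ∧ (∏ j : Fin r, αhat j ^ (m j)) * g = σ g :=
      ⟨g, hg, by rw [hcoe]; exact hgσ⟩
    obtain ⟨c, hc, hcu⟩ := hbasis m hmemm
    have hmZ : m = c ᵥ* Z := by
      funext k
      rw [hc k]
      simp [Matrix.vecMul, dotProduct]
    have hnB : n = m ᵥ* B := by
      have h1 : m = n ᵥ* Binv := by
        funext k; simp [hm, Matrix.vecMul, dotProduct]
      rw [h1, Matrix.vecMul_vecMul, hB.2, Matrix.vecMul_one]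
    have hnZB : n = c ᵥ* (Z * B) := by
      rw [hnB, hmZ, Matrix.vecMul_vecMul]
    have hDinj : ∀ e : Fin u → ℤ, e ᵥ* D = 0 → e = 0 := by
      intro e he
      have h1 : (e ᵥ* A) ᵥ* Z = 0 := by
        have h2 : e ᵥ* (D * Binv) = 0 := by
          rw [← Matrix.vecMul_vecMul, he, Matrix.zero_vecMul]
        rw [hDB] at h2
        rw [Matrix.vecMul_vecMul]
        exact h2
      have h3 : e ᵥ* A = 0 := hZinj _ h1
      have h4 : (e ᵥ* A) ᵥ* Ainv = e := by
        rw [Matrix.vecMul_vecMul, hA.1, Matrix.vecMul_one]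
      rw [← h4, h3, Matrix.zero_vecMul]
    have h6 : (c ᵥ* Ainv) ᵥ* D = n := by
      rw [Matrix.vecMul_vecMul, ← hSNF, ← Matrix.mul_assoc, ← Matrix.mul_assoc, hA.2,
        Matrix.one_mul]
      exact hnZB.symm
    refine ⟨c ᵥ* Ainv, ?_, ?_⟩
    · intro j
      have h8 : ((c ᵥ* Ainv) ᵥ* D) j = ∑ i : Fin u, (c ᵥ* Ainv) i * D i j := by
        simp [Matrix.vecMul, dotProduct]
      have h9 := congrFun h6 j
      rw [← h9, h8]
      exact Finset.sum_congr rfl fun i _ => by rw [hD]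
    · intro c₁ h₁
      have h5 : c₁ ᵥ* D = n := by
        funext j
        have h8 : (c₁ ᵥ* D) j = ∑ i : Fin u, c₁ i * D i j := by
          simp [Matrix.vecMul, dotProduct]
        rw [h8, Finset.sum_congr rfl fun i _ => by rw [hD]]
        exact (h₁ j).symm
      have h7 : (c₁ - c ᵥ* Ainv) ᵥ* D = 0 := by
        rw [Matrix.sub_vecMul, h5, h6, sub_self]
      exact sub_eq_zero.mp (hDinj _ h7)
end
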